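/- arXiv:1605.07532 — 7 statements merged into one kernel-verified Lean document; each statement's English description precedes it below -/
import Mathlib

section
/- Let G ∈ C¹(𝕋ⁿ × ℝⁿ) satisfy (A1) and let f ∈ C²(𝕋ⁿ × ℝ) satisfy (A3). Then there exists a constant C > 0, independent of ε and η, such that for every ε > 0, every η ∈ (0, n^{−1/2}), and every C² function v : 𝕋ⁿ → ℝ satisfying f(x, ε v(x)) + G(x, Dv(x)) = η² Δv(x) for all x ∈ 𝕋ⁿ, one has ‖Dv‖_{L^∞(𝕋ⁿ)} ≤ C. -/
open Filter Set MeasureTheory Metric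
open scoped Topology RealInnerProductSpace Convolution

noncomputable section

/-- Functions on the torus `𝕋ⁿ` are identified with `ℤⁿ`-periodic functions on `ℝⁿ`. -/
def ZnPeriodic {n : ℕ} (u : EuclideanSpace ℝ (Fin n) → ℝ) : Prop :=
  ∀ (x : EuclideanSpace ℝ (Fin n)) (k : Fin n → ℤ),
    u (x + (EuclideanSpace.equiv (Fin n) ℝ).symm (fun i => (k i : ℝ))) = u x

/-- Viscosity subsolution of `E(x, u(x), Du(x)) = 0` on `ℝⁿ`. -/
def ViscSub {n : ℕ} (E : EuclideanSpace ℝ (Fin n) → ℝ → EuclideanSpace ℝ (Fin n) → ℝ)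
    (u : EuclideanSpace ℝ (Fin n) → ℝ) : Prop :=
  ∀ φ : EuclideanSpace ℝ (Fin n) → ℝ, ContDiff ℝ 1 φ →
    ∀ x₀ : EuclideanSpace ℝ (Fin n), IsLocalMax (u - φ) x₀ →
      E x₀ (u x₀) (gradient φ x₀) ≤ 0

/-- Viscosity supersolution of `E(x, u(x), Du(x)) = 0` on `ℝⁿ`. -/
def ViscSuper {n : ℕ} (E : EuclideanSpace ℝ (Fin n) → ℝ → EuclideanSpace ℝ (Fin n) → ℝ)
    (u : EuclideanSpace ℝ (Fin n) → ℝ) : Prop :=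
  ∀ φ : EuclideanSpace ℝ (Fin n) → ℝ, ContDiff ℝ 1 φ →
    ∀ x₀ : EuclideanSpace ℝ (Fin n), IsLocalMin (u - φ) x₀ →
      0 ≤ E x₀ (u x₀) (gradient φ x₀)

/-- Viscosity solution. -/
def ViscSol {n : ℕ} (E : EuclideanSpace ℝ (Fin n) → ℝ → EuclideanSpace ℝ (Fin n) → ℝ)
    (u : EuclideanSpace ℝ (Fin n) → ℝ) : Prop :=
  ViscSub E u ∧ ViscSuper E u


/-- The Laplacian of `v : ℝⁿ → ℝ`, as the trace of the Hessian in the standard basis. -/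
def lap {n : ℕ} (v : EuclideanSpace ℝ (Fin n) → ℝ) (x : EuclideanSpace ℝ (Fin n)) : ℝ :=
  ∑ i : Fin n, fderiv ℝ (fun y => fderiv ℝ v y (EuclideanSpace.single i 1)) x
    (EuclideanSpace.single i 1)

namespace Stmt3Aux

variable {n : ℕ}

local notation "Eu" => EuclideanSpace ℝ (Fin n)

/-- reduction of a point to the fundamental cell -/
lemma exists_cell_rep (x : Eu) :
    ∃ k : Fin n → ℤ, ‖x + (EuclideanSpace.equiv (Fin n) ℝ).symm (fun i => (k i : ℝ))‖ ≤ Real.sqrt n := by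
  refine ⟨fun i => -⌊x i⌋, ?_⟩
  have hcoord : ∀ i : Fin n,
      (x + (EuclideanSpace.equiv (Fin n) ℝ).symm (fun i => ((-⌊x i⌋ : ℤ) : ℝ))) i = Int.fract (x i) := by
    intro i
    have : (x + (EuclideanSpace.equiv (Fin n) ℝ).symm (fun i => ((-⌊x i⌋ : ℤ) : ℝ))) i
        = x i + ((-⌊x i⌋ : ℤ) : ℝ) := rfl
    rw [this]
    push_cast
    rw [Int.fract]
    ring
  rw [EuclideanSpace.norm_eq]
  have h1 : ∑ i : Fin n,
      ‖(x + (EuclideanSpace.equiv (Fin n) ℝ).symm (fun i => ((-⌊x i⌋ : ℤ) : ℝ))) i‖ ^ 2 ≤ (n : ℝ) := by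
    calc _ ≤ ∑ _i : Fin n, (1:ℝ) := by
            apply Finset.sum_le_sum
            intro i _
            rw [hcoord i]
            have h0 := Int.fract_nonneg (x i)
            have h1 := (Int.fract_lt_one (x i)).le
            have : ‖Int.fract (x i)‖ ≤ 1 := by
              rw [Real.norm_eq_abs, abs_of_nonneg h0]; exact h1
            calc ‖Int.fract (x i)‖ ^ 2 ≤ 1 ^ 2 := by
                    apply pow_le_pow_left₀ (norm_nonneg _) this
              _ = 1 := one_pow 2
      _ = (n : ℝ) := by simp
  calc Real.sqrt (∑ i : Fin n, ‖_‖ ^ 2) ≤ Real.sqrt n := Real.sqrt_le_sqrt h1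
    _ = Real.sqrt n := rfl

/-- A continuous periodic function attains its maximum at a point in the ball of radius √n. -/
lemma exists_global_max (u : Eu → ℝ) (hu : Continuous u) (hper : ZnPeriodic u) :
    ∃ x₀ : Eu, ‖x₀‖ ≤ Real.sqrt n ∧ ∀ x, u x ≤ u x₀ := by
  have hK : IsCompact (closedBall (0:Eu) (Real.sqrt n)) := isCompact_closedBall _ _
  have hne : (closedBall (0:Eu) (Real.sqrt n)).Nonempty :=
    ⟨0, mem_closedBall_self (Real.sqrt_nonneg _)⟩
  obtain ⟨x₀, hx₀K, hmax⟩ := hK.exists_isMaxOn hne hu.continuousOn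
  refine ⟨x₀, by simpa [mem_closedBall, dist_eq_norm] using hx₀K, ?_⟩
  intro x
  obtain ⟨k, hk⟩ := exists_cell_rep x
  have : u (x + (EuclideanSpace.equiv (Fin n) ℝ).symm (fun i => (k i : ℝ))) = u x := hper x k
  rw [← this]
  exact hmax (by simpa [mem_closedBall, dist_eq_norm] using hk)

/-- 1-D second-derivative test at a local maximum. -/
lemma second_deriv_test {g g' : ℝ → ℝ} {a : ℝ} (hg : ∀ t, HasDerivAt g (g' t) t)
    (hg' : HasDerivAt g' a 0) (hmax : IsLocalMax g 0) : a ≤ 0 := by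
  by_contra hcon
  push_neg at hcon
  have h0 : g' 0 = 0 := by
    have h1 := hmax.deriv_eq_zero
    rwa [(hg 0).deriv] at h1
  have hs : Tendsto (fun t => g' t / t) (𝓝[≠] (0:ℝ)) (𝓝 a) := by
    have := hasDerivAt_iff_tendsto_slope.mp hg'
    have heq : (fun t => g' t / t) = (fun t : ℝ => t⁻¹ * g' t) := by
      funext t; rw [div_eq_inv_mul]
    rw [heq]
    simpa [slope_fun_def, h0] using this
  have hpos : ∀ᶠ t in 𝓝[>] (0:ℝ), 0 < g' t := by
    have h2 : ∀ᶠ t in 𝓝[≠] (0:ℝ), 0 < g' t / t := hs.eventually (eventually_gt_nhds hcon)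
    have h3 : 𝓝[>] (0:ℝ) ≤ 𝓝[≠] (0:ℝ) := nhdsWithin_mono 0 (fun t ht => ne_of_gt ht)
    filter_upwards [h3 h2, self_mem_nhdsWithin] with t ht ht'
    have : (0:ℝ) < t := ht'
    by_contra hng
    push_neg at hng
    have : g' t / t ≤ 0 := div_nonpos_of_nonpos_of_nonneg hng this.le
    linarith
  have hle : ∀ᶠ t in 𝓝[>] (0:ℝ), g t ≤ g 0 :=
    nhdsWithin_le_nhds hmax
  obtain ⟨δ, hδmem, hδ⟩ := (hpos.and hle).exists_mem
  obtain ⟨δ', hδ'pos, hsub⟩ := mem_nhdsGT_iff_exists_Ioc_subset.mp hδmem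
  have hmono : StrictMonoOn g (Icc 0 δ') := by
    apply strictMonoOn_of_deriv_pos (convex_Icc 0 δ')
    · exact (fun t _ => (hg t).continuousAt.continuousWithinAt)
    · intro t ht
      rw [interior_Icc] at ht
      rw [(hg t).deriv]
      exact (hδ t (hsub ⟨ht.1, ht.2.le⟩)).1
  have h5 : g 0 < g δ' := hmono (left_mem_Icc.mpr hδ'pos.le) (right_mem_Icc.mpr hδ'pos.le) hδ'pos
  have h6 : g δ' ≤ g 0 := (hδ δ' (hsub ⟨hδ'pos, le_rfl⟩)).2
  linarith


lemma hasDerivAt_line {u : Eu → ℝ} (hu : ∀ y, DifferentiableAt ℝ u y) (x b : Eu) (t : ℝ) :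
    HasDerivAt (fun s : ℝ => u (x + s • b)) (fderiv ℝ u (x + t • b) b) t := by
  have hline : HasDerivAt (fun s : ℝ => x + s • b) b t := by
    simpa using ((hasDerivAt_id t).smul_const b).const_add x
  exact ((hu (x + t • b)).hasFDerivAt.comp_hasDerivAt t hline)

lemma contDiff_fderiv_apply {u : Eu → ℝ} (hu : ContDiff ℝ 2 u) (b : Eu) :
    ContDiff ℝ 1 (fun y => fderiv ℝ u y b) :=
  (ContinuousLinearMap.apply ℝ ℝ b).contDiff.comp (hu.fderiv_right (by norm_num))

lemma fderiv_fderiv_apply {u : Eu → ℝ} {z : Eu} (hd : DifferentiableAt ℝ (fderiv ℝ u) z)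
    (a b : Eu) :
    fderiv ℝ (fun y => fderiv ℝ u y a) z b = (fderiv ℝ (fderiv ℝ u) z b) a := by
  have h := ((ContinuousLinearMap.apply ℝ ℝ a).hasFDerivAt.comp z hd.hasFDerivAt).fderiv
  have he : (fun y => fderiv ℝ u y a) = (ContinuousLinearMap.apply ℝ ℝ a) ∘ (fderiv ℝ u) := rfl
  rw [he, h]
  rfl

lemma isSymm_second {u : Eu → ℝ} (hu : ContDiff ℝ 2 u) (z a b : Eu) :
    fderiv ℝ (fderiv ℝ u) z a b = fderiv ℝ (fderiv ℝ u) z b a :=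
  (hu.contDiffAt.isSymmSndFDerivAt (by rw [minSmoothness_of_isRCLikeNormedField])) a b

/-- local max implies nonpositive laplacian, for C² functions -/
lemma lap_nonpos_at_max {u : Eu → ℝ} (hu : ContDiff ℝ 2 u) {x₀ : Eu} (h : IsLocalMax u x₀) :
    lap u x₀ ≤ 0 := by
  have hdiff : ∀ y, DifferentiableAt ℝ u y := fun y => (hu.differentiable two_ne_zero).differentiableAt
  apply Finset.sum_nonpos
  intro i _
  set b := EuclideanSpace.single i (1:ℝ) with hb
  set U := fun y => fderiv ℝ u y b with hU
  have hUdiff : ∀ y, DifferentiableAt ℝ U y :=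
    fun y => ((contDiff_fderiv_apply hu b).differentiable one_ne_zero).differentiableAt
  have hg : ∀ t : ℝ, HasDerivAt (fun s : ℝ => u (x₀ + s • b)) (fderiv ℝ u (x₀ + t • b) b) t :=
    fun t => hasDerivAt_line hdiff x₀ b t
  have hg' : HasDerivAt (fun s : ℝ => U (x₀ + s • b)) (fderiv ℝ U (x₀ + (0:ℝ) • b) b) 0 :=
    hasDerivAt_line hUdiff x₀ b (0:ℝ)
  have hmax : IsLocalMax (fun s : ℝ => u (x₀ + s • b)) 0 := by
    have hcont : Tendsto (fun s : ℝ => x₀ + s • b) (𝓝 0) (𝓝 x₀) := by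
      have : Continuous (fun s : ℝ => x₀ + s • b) := by continuity
      have h2 := this.tendsto 0
      simpa using h2
    have := hcont.eventually h
    simpa [IsLocalMax, IsMaxFilter] using this
  have key := second_deriv_test (g := fun s : ℝ => u (x₀ + s • b))
    (g' := fun t : ℝ => fderiv ℝ u (x₀ + t • b) b) (fun t => hg t) (by simpa [hU] using hg') hmax
  simpa using key

lemma lap_neg (u : Eu → ℝ) (x : Eu) : lap (fun y => -(u y)) x = - lap u x := by
  unfold lap
  rw [← Finset.sum_neg_distrib]
  apply Finset.sum_congr rfl
  intro i _
  have h1 : (fun y => fderiv ℝ (fun z => -(u z)) y (EuclideanSpace.single i 1))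
      = fun y => -((fun z => fderiv ℝ u z (EuclideanSpace.single i 1)) y) := by
    funext y
    rw [fderiv_fun_neg]
    rfl
  rw [h1, fderiv_fun_neg]
  rfl

lemma lap_nonneg_at_min {u : Eu → ℝ} (hu : ContDiff ℝ 2 u) {x₀ : Eu} (h : IsLocalMin u x₀) :
    0 ≤ lap u x₀ := by
  have := lap_nonpos_at_max (u := fun y => -(u y)) (hu.neg) (h.neg)
  rw [lap_neg u x₀] at this
  linarith

lemma inner_gradient (u : Eu → ℝ) (x b : Eu) : ⟪gradient u x, b⟫ = fderiv ℝ u x b := by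
  rw [gradient]
  exact InnerProductSpace.toDual_symm_apply

lemma gradient_eq_zero_of_max {u : Eu → ℝ} {x : Eu} (h : IsLocalMax u x) :
    gradient u x = 0 := by
  rw [gradient, h.fderiv_eq_zero]
  simp

lemma gradient_eq_zero_of_min {u : Eu → ℝ} {x : Eu} (h : IsLocalMin u x) :
    gradient u x = 0 := by
  rw [gradient, h.fderiv_eq_zero]
  simp

/-- norm sq of gradient as sum of squares of directional derivatives -/
lemma norm_gradient_sq (u : Eu → ℝ) (x : Eu) :
    ‖gradient u x‖ ^ 2 = ∑ i : Fin n,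
      (fderiv ℝ u x (EuclideanSpace.single i 1)) * (fderiv ℝ u x (EuclideanSpace.single i 1)) := by
  have h1 : ∀ i : Fin n, fderiv ℝ u x (EuclideanSpace.single i 1) = (gradient u x) i := by
    intro i
    rw [← inner_gradient]
    rw [EuclideanSpace.inner_single_right]; simp
  have h2 : ‖gradient u x‖ ^ 2 = ∑ i : Fin n, ‖(gradient u x) i‖ ^ 2 := by
    rw [EuclideanSpace.norm_eq]
    rw [Real.sq_sqrt]
    positivity
  rw [h2]
  apply Finset.sum_congr rfl
  intro i _
  rw [h1 i, Real.norm_eq_abs, sq, abs_mul_abs_self]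

/-- inner product in coordinates -/
lemma inner_coords (ξ ζ : Eu) :
    ⟪ξ, ζ⟫ = ∑ i : Fin n, (ξ i) * (ζ i) := by
  simp [PiLp.inner_apply, mul_comm]
  

lemma contDiff_fderiv_apply' {u : Eu → ℝ} (hu : ContDiff ℝ 3 u) (b : Eu) :
    ContDiff ℝ 2 (fun y => fderiv ℝ u y b) :=
  (ContinuousLinearMap.apply ℝ ℝ b).contDiff.comp (hu.fderiv_right (by norm_num))


/-- Bernstein identity for C³ functions. -/
lemma bernstein_identity {u : Eu → ℝ} (hu : ContDiff ℝ 3 u) (x : Eu) :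
    lap (fun z => ∑ i : Fin n,
        fderiv ℝ u z (EuclideanSpace.single i 1) * fderiv ℝ u z (EuclideanSpace.single i 1)) x
      = 2 * (∑ i : Fin n, ∑ j : Fin n,
          fderiv ℝ (fun z => fderiv ℝ u z (EuclideanSpace.single i 1)) x (EuclideanSpace.single j 1) *
          fderiv ℝ (fun z => fderiv ℝ u z (EuclideanSpace.single i 1)) x (EuclideanSpace.single j 1))
        + 2 * ∑ i : Fin n, fderiv ℝ u x (EuclideanSpace.single i 1) *
            fderiv ℝ (lap u) x (EuclideanSpace.single i 1) := by
  have hu2 : ContDiff ℝ 2 u := hu.of_le (by norm_num)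
  set e : Fin n → Eu := fun i => EuclideanSpace.single i 1 with he
  set Du : Fin n → Eu → ℝ := fun i z => fderiv ℝ u z (e i) with hDu
  set D2u : Fin n → Fin n → Eu → ℝ := fun i j z => fderiv ℝ (Du i) z (e j) with hD2u
  have hDuC2 : ∀ i, ContDiff ℝ 2 (Du i) := fun i => contDiff_fderiv_apply' hu (e i)
  have hDuC1 : ∀ i, ContDiff ℝ 1 (Du i) := fun i => (hDuC2 i).of_le (by norm_num)
  have hD2uC1 : ∀ i j, ContDiff ℝ 1 (D2u i j) := fun i j => contDiff_fderiv_apply (hDuC2 i) (e j)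
  have hDud : ∀ i z, DifferentiableAt ℝ (Du i) z :=
    fun i z => ((hDuC1 i).differentiable one_ne_zero).differentiableAt
  have hD2ud : ∀ i j z, DifferentiableAt ℝ (D2u i j) z :=
    fun i j z => ((hD2uC1 i j).differentiable one_ne_zero).differentiableAt
  -- Step A : first derivative of w
  have stepA : ∀ j : Fin n, (fun z => fderiv ℝ
      (fun z' => ∑ i : Fin n, Du i z' * Du i z') z (e j))
      = fun z => ∑ i : Fin n, 2 * (Du i z * D2u i j z) := by
    intro j
    funext z
    have h1 : fderiv ℝ (fun z' => ∑ i : Fin n, Du i z' * Du i z') z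
        = ∑ i : Fin n, fderiv ℝ (fun z' => Du i z' * Du i z') z := by
      apply fderiv_fun_sum
      intro i _
      exact (hDud i z).mul (hDud i z)
    rw [h1, ContinuousLinearMap.sum_apply]
    apply Finset.sum_congr rfl
    intro i _
    rw [fderiv_fun_mul (hDud i z) (hDud i z)]
    simp only [ContinuousLinearMap.add_apply, ContinuousLinearMap.smul_apply]
    have : fderiv ℝ (Du i) z (e j) = D2u i j z := rfl
    rw [this]
    simp only [smul_eq_mul]
    ring
  -- Step C : third derivative commutation
  have stepC : ∀ i : Fin n, ∑ j : Fin n, fderiv ℝ (D2u i j) x (e j)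
      = fderiv ℝ (lap u) x (e i) := by
    intro i
    have hswap : ∀ i' j', D2u i' j' = D2u j' i' := by
      intro i' j'
      funext z
      rw [hD2u]
      simp only
      rw [fderiv_fderiv_apply (by
          exact ((hu2.fderiv_right (by norm_num)).differentiable one_ne_zero).differentiableAt) _ _]
      rw [isSymm_second hu2 z (e j') (e i')]
      rw [← fderiv_fderiv_apply (by
          exact ((hu2.fderiv_right (by norm_num)).differentiable one_ne_zero).differentiableAt) _ _]
  -- now the swap for the outer derivative on Du j
    have houter : ∀ j : Fin n, fderiv ℝ (D2u i j) x (e j) = fderiv ℝ (D2u j j) x (e i) := by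
      intro j
      have h1 : D2u i j = fun z => fderiv ℝ (Du j) z (e i) := by
        rw [hswap i j]
      rw [h1]
      have hfd : DifferentiableAt ℝ (fderiv ℝ (Du j)) x :=
        (((hDuC2 j).fderiv_right (m := 1) (by norm_num)).differentiable one_ne_zero).differentiableAt
      rw [fderiv_fderiv_apply hfd (e i) (e j)]
      rw [isSymm_second (hDuC2 j) x (e j) (e i)]
      rw [← fderiv_fderiv_apply hfd (e j) (e i)]
    rw [show (∑ j : Fin n, fderiv ℝ (D2u i j) x (e j))
        = ∑ j : Fin n, fderiv ℝ (D2u j j) x (e i) from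
      Finset.sum_congr rfl (fun j _ => houter j)]
    have hlap : lap u = fun z => ∑ j : Fin n, D2u j j z := by
      funext z
      rfl
    rw [hlap]
    rw [fderiv_fun_sum (fun j _ => hD2ud j j x)]
    rw [ContinuousLinearMap.sum_apply]
  -- Step B : assemble
  have hlapw : lap (fun z => ∑ i : Fin n, Du i z * Du i z) x
      = ∑ j : Fin n, fderiv ℝ (fun z => ∑ i : Fin n, 2 * (Du i z * D2u i j z)) x (e j) := by
    unfold lap
    apply Finset.sum_congr rfl
    intro j _
    congr 1
    exact congrArg (fun g => fderiv ℝ g x) (stepA j)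
  rw [hlapw]
  have hterm : ∀ j : Fin n, fderiv ℝ (fun z => ∑ i : Fin n, 2 * (Du i z * D2u i j z)) x (e j)
      = ∑ i : Fin n, (2 * (D2u i j x * D2u i j x) + 2 * (Du i x * fderiv ℝ (D2u i j) x (e j))) := by
    intro j
    rw [fderiv_fun_sum (A := fun i z => 2 * (Du i z * D2u i j z)) (fun i _ => ((hDud i x).mul (hD2ud i j x)).const_mul 2)]
    rw [ContinuousLinearMap.sum_apply]
    apply Finset.sum_congr rfl
    intro i _
    rw [fderiv_const_mul (a := fun z => Du i z * D2u i j z) ((hDud i x).mul (hD2ud i j x)) 2]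
    rw [ContinuousLinearMap.smul_apply]
    rw [fderiv_fun_mul (hDud i x) (hD2ud i j x)]
    simp only [ContinuousLinearMap.add_apply, ContinuousLinearMap.smul_apply, smul_eq_mul]
    have h3 : fderiv ℝ (Du i) x (e j) = D2u i j x := rfl
    rw [h3]
    ring
  rw [Finset.sum_congr rfl (fun j _ => hterm j)]
  rw [Finset.sum_comm]
  have htail : ∀ i : Fin n, (∑ j : Fin n,
      (2 * (D2u i j x * D2u i j x) + 2 * (Du i x * fderiv ℝ (D2u i j) x (e j))))
      = 2 * (∑ j : Fin n, D2u i j x * D2u i j x)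
        + 2 * (Du i x * fderiv ℝ (lap u) x (e i)) := by
    intro i
    rw [Finset.sum_add_distrib]
    congr 1
    · rw [Finset.mul_sum]
    · rw [← stepC i, Finset.mul_sum, Finset.mul_sum]
  rw [Finset.sum_congr rfl (fun i _ => htail i), Finset.sum_add_distrib]
  congr 1
  · rw [Finset.mul_sum]
  · rw [Finset.mul_sum]


variable (φ : ContDiffBump (0 : EuclideanSpace ℝ (Fin n)))



/-- scalar convolution with normalized bump -/
def cv (g : EuclideanSpace ℝ (Fin n) → ℝ) : EuclideanSpace ℝ (Fin n) → ℝ :=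
  (φ.normed volume) ⋆[ContinuousLinearMap.lsmul ℝ ℝ, volume] g

/-- vector convolution with normalized bump -/
def cvE (g : EuclideanSpace ℝ (Fin n) → EuclideanSpace ℝ (Fin n)) :
    EuclideanSpace ℝ (Fin n) → EuclideanSpace ℝ (Fin n) :=
  (φ.normed volume) ⋆[ContinuousLinearMap.lsmul ℝ ℝ, volume] g

lemma cv_apply (g : Eu → ℝ) (x : Eu) :
    cv φ g x = ∫ t, φ.normed volume t • g (x - t) := by rfl

lemma cvE_apply (g : Eu → Eu) (x : Eu) :
    cvE φ g x = ∫ t, φ.normed volume t • g (x - t) := by rfl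

lemma bump_smul_support {F : Type*} [NormedAddCommGroup F] [NormedSpace ℝ F]
    (g : Eu → F) (x : Eu) :
    HasCompactSupport (fun t => φ.normed volume t • g (x - t)) := by
  apply HasCompactSupport.intro ((φ.hasCompactSupport_normed (μ := volume)).isCompact)
  intro t ht
  have : φ.normed volume t = 0 := by
    by_contra hne
    exact ht (subset_tsupport _ hne)
  simp [this]

lemma integrable_bump_smul {F : Type*} [NormedAddCommGroup F] [NormedSpace ℝ F]
    {g : Eu → F} (hg : Continuous g) (x : Eu) :
    Integrable (fun t => φ.normed volume t • g (x - t)) volume := by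
  apply Continuous.integrable_of_hasCompactSupport
  · exact φ.continuous_normed.smul (hg.comp (continuous_const.sub continuous_id))
  · exact bump_smul_support φ g x

lemma cv_smooth (g : Eu → ℝ) (hg : Continuous g) (k : ℕ∞) : ContDiff ℝ k (cv φ g) :=
  HasCompactSupport.contDiff_convolution_left _ (φ.hasCompactSupport_normed (μ := volume))
    φ.contDiff_normed (hg.locallyIntegrable)

lemma cv_fderiv {g : Eu → ℝ} (hg1 : ContDiff ℝ 1 g) (hgc : HasCompactSupport g) (b : Eu) (x : Eu) :
    fderiv ℝ (cv φ g) x b = cv φ (fun y => fderiv ℝ g y b) x := by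
  have h1 := (hgc.hasFDerivAt_convolution_right (f := φ.normed volume) (μ := volume) (ContinuousLinearMap.lsmul ℝ ℝ)
    (φ.continuous_normed.locallyIntegrable) hg1 x).fderiv
  rw [cv, h1]
  have h2 : Integrable (fun t => ((ContinuousLinearMap.lsmul ℝ ℝ).precompR
      (EuclideanSpace ℝ (Fin n)))
      (φ.normed volume t) (fderiv ℝ g (x - t))) volume := by
    apply Continuous.integrable_of_hasCompactSupport
    · apply Continuous.clm_apply
      · exact (ContinuousLinearMap.continuous _).comp φ.continuous_normed
      · exact (hg1.continuous_fderiv one_ne_zero).comp (continuous_const.sub continuous_id)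
    · apply HasCompactSupport.intro ((φ.hasCompactSupport_normed (μ := volume)).isCompact)
      intro t ht
      have : φ.normed volume t = 0 := by
        by_contra hne
        exact ht (subset_tsupport _ hne)
      simp [this]
  rw [convolution_def, ContinuousLinearMap.integral_apply h2]
  rw [cv_apply]
  apply integral_congr_ae
  filter_upwards with t
  simp [ContinuousLinearMap.precompR_apply]




lemma cv_congr_local {g₁ g₂ : Eu → ℝ} {x : Eu} (h : ∀ y ∈ ball x φ.rOut, g₁ y = g₂ y) :
    cv φ g₁ x = cv φ g₂ x := by
  rw [cv_apply, cv_apply]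
  apply integral_congr_ae
  filter_upwards with t
  rcases eq_or_ne (φ.normed volume t) 0 with h0 | h0
  · simp [h0]
  · have ht : t ∈ ball (0:Eu) φ.rOut := by
      rw [← φ.support_normed_eq (μ := volume)]
      exact h0
    have : x - t ∈ ball x φ.rOut := by
      simp only [mem_ball] at ht ⊢
      simpa [dist_eq_norm] using ht
    rw [h (x - t) this]

lemma cv_periodic {g : Eu → ℝ} {c : Eu} (hper : ∀ y, g (y + c) = g y) (x : Eu) :
    cv φ g (x + c) = cv φ g x := by
  rw [cv_apply, cv_apply]
  apply integral_congr_ae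
  filter_upwards with t
  have : x + c - t = (x - t) + c := by abel
  rw [this, hper]

lemma cv_fderiv_inner {u : Eu → ℝ} (hu1 : ContDiff ℝ 1 u) (huc : HasCompactSupport u)
    (x b : Eu) :
    fderiv ℝ (cv φ u) x b = ⟪cvE φ (fun y => gradient u y) x, b⟫ := by
  rw [cv_fderiv φ hu1 huc b x, cv_apply, cvE_apply]
  have h1 : ∀ t : Eu, φ.normed volume t • fderiv ℝ u (x - t) b
      = ⟪b, φ.normed volume t • gradient u (x - t)⟫ := by
    intro t
    rw [real_inner_smul_right, real_inner_comm]
    have : ⟪gradient u (x - t), b⟫ = fderiv ℝ u (x - t) b := by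
      rw [gradient]; exact InnerProductSpace.toDual_symm_apply
    rw [this, smul_eq_mul]
  rw [show (fun t => φ.normed volume t • fderiv ℝ u (x - t) b)
      = fun t => ⟪b, φ.normed volume t • gradient u (x - t)⟫ from funext h1]
  rw [integral_inner]
  · rw [real_inner_comm]
  · apply integrable_bump_smul φ _ x
    exact (InnerProductSpace.toDual ℝ _).symm.continuous.comp (hu1.continuous_fderiv one_ne_zero)

lemma cv_gradient {u : Eu → ℝ} (hu1 : ContDiff ℝ 1 u) (huc : HasCompactSupport u) (x : Eu) :
    gradient (cv φ u) x = cvE φ (fun y => gradient u y) x := by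
  apply ext_inner_right ℝ
  intro b
  have h1 : ⟪gradient (cv φ u) x, b⟫ = fderiv ℝ (cv φ u) x b := by
    rw [gradient]; exact InnerProductSpace.toDual_symm_apply
  rw [h1, cv_fderiv_inner φ hu1 huc x b]

lemma cvE_congr_local {g₁ g₂ : Eu → Eu} {x : Eu} (h : ∀ y ∈ ball x φ.rOut, g₁ y = g₂ y) :
    cvE φ g₁ x = cvE φ g₂ x := by
  rw [cvE_apply, cvE_apply]
  apply integral_congr_ae
  filter_upwards with t
  rcases eq_or_ne (φ.normed volume t) 0 with h0 | h0
  · simp [h0]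
  · have ht : t ∈ ball (0:Eu) φ.rOut := by
      rw [← φ.support_normed_eq (μ := volume)]
      exact h0
    have : x - t ∈ ball x φ.rOut := by
      simp only [mem_ball] at ht ⊢
      simpa [dist_eq_norm] using ht
    rw [h (x - t) this]

lemma cv_sum {ι : Type*} (s : Finset ι) (g : ι → Eu → ℝ) (hg : ∀ i, Continuous (g i)) (x : Eu) :
    cv φ (fun y => ∑ i ∈ s, g i y) x = ∑ i ∈ s, cv φ (g i) x := by
  simp only [cv_apply]
  rw [← integral_finset_sum]
  · apply integral_congr_ae
    filter_upwards with t
    exact Finset.smul_sum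
  · intro i _
    exact integrable_bump_smul φ (hg i) x
  



lemma cv_tendsto {F : Type*} [NormedAddCommGroup F] [NormedSpace ℝ F] [CompleteSpace F]
    {φs : ℕ → ContDiffBump (0 : EuclideanSpace ℝ (Fin n))}
    (hφ : Tendsto (fun j => (φs j).rOut) atTop (𝓝 0))
    {g : Eu → F} (hg : Continuous g) {k : ℕ → Eu} {x₀ : Eu} (hk : Tendsto k atTop (𝓝 x₀)) :
    Tendsto (fun j => (((φs j).normed volume) ⋆[ContinuousLinearMap.lsmul ℝ ℝ, volume] g) (k j))
      atTop (𝓝 (g x₀)) := by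
  apply ContDiffBump.convolution_tendsto_right hφ
  · exact Eventually.of_forall fun _ => hg.aestronglyMeasurable
  · exact (hg.tendsto x₀).comp tendsto_snd
  · exact hk

lemma cv_tendsto' {φs : ℕ → ContDiffBump (0 : EuclideanSpace ℝ (Fin n))}
    (hφ : Tendsto (fun j => (φs j).rOut) atTop (𝓝 0))
    {g : Eu → ℝ} (hg : Continuous g) {k : ℕ → Eu} {x₀ : Eu} (hk : Tendsto k atTop (𝓝 x₀)) :
    Tendsto (fun j => cv (φs j) g (k j)) atTop (𝓝 (g x₀)) :=
  cv_tendsto hφ hg hk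

lemma cvE_tendsto {φs : ℕ → ContDiffBump (0 : EuclideanSpace ℝ (Fin n))}
    (hφ : Tendsto (fun j => (φs j).rOut) atTop (𝓝 0))
    {g : Eu → Eu} (hg : Continuous g) {k : ℕ → Eu} {x₀ : Eu} (hk : Tendsto k atTop (𝓝 x₀)) :
    Tendsto (fun j => cvE (φs j) g (k j)) atTop (𝓝 (g x₀)) :=
  cv_tendsto hφ hg hk



lemma fderiv_periodic {u : Eu → ℝ} (hdiff : ∀ y, DifferentiableAt ℝ u y) {c : Eu}
    (hc : ∀ y, u (y + c) = u y) (x : Eu) : fderiv ℝ u (x + c) = fderiv ℝ u x := by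
  have h1 : HasFDerivAt (fun y => u (y + c)) (fderiv ℝ u (x + c)) x := by
    have h2 := (hdiff (x + c)).hasFDerivAt.comp x ((hasFDerivAt_id x).add_const c)
    exact h2
  have h3 : (fun y => u (y + c)) = u := funext fun y => hc y
  rw [h3] at h1
  exact h1.fderiv.symm

lemma gradient_periodic {u : Eu → ℝ} (hdiff : ∀ y, DifferentiableAt ℝ u y) {c : Eu}
    (hc : ∀ y, u (y + c) = u y) (x : Eu) : gradient u (x + c) = gradient u x := by
  rw [gradient, gradient, fderiv_periodic hdiff hc x]

lemma fderiv_comp_pair {V : Type*} [NormedAddCommGroup V] [NormedSpace ℝ V]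
    {Φ : Eu × V → ℝ} (hΦ : ContDiff ℝ 1 Φ) {a : Eu → V} {x : Eu}
    (ha : DifferentiableAt ℝ a x) (p : Eu) :
    fderiv ℝ (fun y => Φ (y, a y)) x p
      = fderiv ℝ Φ (x, a x) (p, fderiv ℝ a x p) := by
  have h1 : HasFDerivAt (fun y => Φ (y, a y))
      ((fderiv ℝ Φ (x, a x)).comp ((ContinuousLinearMap.id ℝ _).prod (fderiv ℝ a x))) x :=
    ((hΦ.differentiable one_ne_zero) (x, a x)).hasFDerivAt.comp x
      ((hasFDerivAt_id x).prodMk ha.hasFDerivAt)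
  rw [h1.fderiv]
  rfl

lemma fderiv_pair_split {V : Type*} [NormedAddCommGroup V] [NormedSpace ℝ V]
    (L : (Eu × V) →L[ℝ] ℝ) (p : Eu) (q : V) :
    L (p, q) = L (p, 0) + L (0, q) := by
  rw [← map_add]
  congr 1
  simp

lemma fderiv_fst_slice {V : Type*} [NormedAddCommGroup V] [NormedSpace ℝ V]
    {Φ : Eu × V → ℝ} (hΦ : ContDiff ℝ 1 Φ) (x : Eu) (c : V) (p : Eu) :
    fderiv ℝ (fun y => Φ (y, c)) x p = fderiv ℝ Φ (x, c) (p, 0) := by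
  have h1 : HasFDerivAt (fun y => Φ (y, c))
      ((fderiv ℝ Φ (x, c)).comp ((ContinuousLinearMap.id ℝ _).prod 0)) x :=
    ((hΦ.differentiable one_ne_zero) (x, c)).hasFDerivAt.comp x
      ((hasFDerivAt_id x).prodMk (hasFDerivAt_const c x))
  rw [h1.fderiv]
  rfl

lemma fderiv_snd_slice {Φ : Eu × ℝ → ℝ} (hΦ : ContDiff ℝ 1 Φ) (x : Eu) (c : ℝ) (s : ℝ) :
    fderiv ℝ Φ (x, c) (0, s) = s * deriv (fun t => Φ (x, t)) c := by
  have h1 : HasDerivAt (fun t : ℝ => Φ (x, t)) (fderiv ℝ Φ (x, c) (0, 1)) c := by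
    have hcurve : HasDerivAt (fun t : ℝ => ((x : Eu), t)) (0, 1) c :=
      (hasDerivAt_const c x).prodMk (hasDerivAt_id c)
    exact ((hΦ.differentiable one_ne_zero) (x, c)).hasFDerivAt.comp_hasDerivAt c hcurve
  rw [h1.deriv]
  have : ((0 : Eu), s) = s • ((0 : Eu), (1:ℝ)) := by simp
  rw [this, ContinuousLinearMap.map_smul]
  simp [mul_comm]

lemma hcs_apply {g : Eu → Eu →L[ℝ] ℝ} (hg : HasCompactSupport g) (b : Eu) :
    HasCompactSupport (fun y => g y b) := by
  apply HasCompactSupport.intro hg.isCompact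
  intro y hy
  have : g y = 0 := by
    by_contra hne
    exact hy (subset_tsupport _ hne)
  simp [this]

lemma gradient_coord (u : Eu → ℝ) (x : Eu) (i : Fin n) :
    (gradient u x) i = fderiv ℝ u x (EuclideanSpace.single i 1) := by
  have h : ⟪gradient u x, EuclideanSpace.single i 1⟫ = fderiv ℝ u x (EuclideanSpace.single i 1) := by
    rw [gradient]; exact InnerProductSpace.toDual_symm_apply
  rw [← h]
  rw [EuclideanSpace.inner_single_right]; simp



lemma cv_const_mul (c : ℝ) {g : Eu → ℝ} (hg : Continuous g) (x : Eu) :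
    cv φ (fun y => c * g y) x = c * cv φ g x := by
  rw [cv_apply, cv_apply, ← integral_const_mul]
  apply integral_congr_ae
  filter_upwards with t
  simp only [smul_eq_mul]
  ring

/-- The main per-mollification construction. -/
lemma perj {η : ℝ} (hη : 0 < η) {Rc : ℝ}
    {vt : Eu → ℝ} (hvt2 : ContDiff ℝ 2 vt) (hvtc : HasCompactSupport vt)
    {v : Eu → ℝ} (hv : Continuous v) (hvper : ZnPeriodic v)
    (hveq : ∀ y ∈ ball (0:Eu) (Rc+9), vt y = v y)
    {Ht : Eu → ℝ} (hHt1 : ContDiff ℝ 1 Ht) (hHtc : HasCompactSupport Ht)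
    (hHtlap : ∀ y ∈ ball (0:Eu) (Rc+3), Ht y = η^2 * lap vt y)
    (hRcn : Real.sqrt n ≤ Rc)
    (φ : ContDiffBump (0:EuclideanSpace ℝ (Fin n))) (hφ1 : φ.rOut ≤ 1)
    (hn1 : 1 ≤ n) (hnη : (n:ℝ) * η^2 ≤ 1) :
    ∃ xj : Eu, ‖xj‖ ≤ Real.sqrt n ∧
      (cv φ Ht xj)^2
        + ⟪cvE φ (fun y => gradient vt y) xj, cvE φ (fun y => gradient Ht y) xj⟫ ≤ 0 ∧
      ∀ y ∈ ball (0:Eu) (Rc+2),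
        ‖cvE φ (fun y => gradient vt y) y‖^2 ≤ ‖cvE φ (fun y => gradient vt y) xj‖^2 := by
  have hRc0 : (0:ℝ) ≤ Rc := le_trans (Real.sqrt_nonneg _) hRcn
  have hvtcont : Continuous vt := hvt2.continuous
  have hvt1 : ContDiff ℝ 1 vt := hvt2.of_le (by norm_num)
  set e : Fin n → Eu := fun i => EuclideanSpace.single i 1 with he
  set F : Eu → ℝ := cv φ vt with hF
  have hF3 : ContDiff ℝ 3 F := cv_smooth φ vt hvtcont 3
  have hF2 : ContDiff ℝ 2 F := hF3.of_le (by norm_num)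
  -- first derivatives
  set gi : Fin n → Eu → ℝ := fun i y => fderiv ℝ vt y (e i) with hgi
  have hgi1 : ∀ i, ContDiff ℝ 1 (gi i) := fun i => contDiff_fderiv_apply hvt2 (e i)
  have hgic : ∀ i, HasCompactSupport (gi i) := fun i => hcs_apply (hvtc.fderiv ℝ) (e i)
  have hDFfun : ∀ i, (fun x => fderiv ℝ F x (e i)) = cv φ (gi i) := by
    intro i
    funext x
    exact cv_fderiv φ hvt1 hvtc (e i) x
  -- second derivatives
  set g2 : Fin n → Fin n → Eu → ℝ := fun i k y => fderiv ℝ (gi i) y (e k) with hg2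
  have hg2cont : ∀ i k, Continuous (g2 i k) := by
    intro i k
    exact (((hgi1 i).continuous_fderiv one_ne_zero).clm_apply continuous_const)
  have hD2F : ∀ i k x, fderiv ℝ (fun y => fderiv ℝ F y (e i)) x (e k) = cv φ (g2 i k) x := by
    intro i k x
    rw [hDFfun i]
    exact cv_fderiv φ (hgi1 i) (hgic i) (e k) x
  -- laplacian representation
  have hlapFeq : ∀ x, lap F x = cv φ (fun y => lap vt y) x := by
    intro x
    have h1 : lap F x = ∑ i : Fin n, cv φ (g2 i i) x := by
      unfold lap
      exact Finset.sum_congr rfl (fun i _ => hD2F i i x)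
    rw [h1, ← cv_sum φ Finset.univ (fun i => g2 i i) (fun i => hg2cont i i) x]
    rfl
  -- local identification with Ht
  have hlapF_loc : ∀ x ∈ ball (0:Eu) (Rc+2), η^2 * lap F x = cv φ Ht x := by
    intro x hx
    rw [hlapFeq x, ← cv_const_mul φ (η^2) (by
      -- continuity of lap vt
      apply continuous_finset_sum
      intro i _
      exact (((hgi1 i).continuous_fderiv one_ne_zero).clm_apply continuous_const)) x]
    apply cv_congr_local
    intro y hy
    have hyball : y ∈ ball (0:Eu) (Rc+3) := by
      rw [mem_ball] at hx hy ⊢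
      have : dist y 0 ≤ dist y x + dist x 0 := dist_triangle _ _ _
      have h2 : dist y x < φ.rOut := hy
      calc dist y 0 ≤ dist y x + dist x 0 := this
        _ < φ.rOut + (Rc + 2) := by linarith [hx]
        _ ≤ 1 + (Rc + 2) := by linarith [hφ1]
        _ = Rc + 3 := by ring
    exact (hHtlap y hyball).symm
  -- C¹ of lap F
  have hlapC1 : ContDiff ℝ 1 (lap F) := by
    have : (lap F) = fun x => ∑ i : Fin n,
        fderiv ℝ (fun y => fderiv ℝ F y (e i)) x (e i) := rfl
    rw [this]
    apply ContDiff.sum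
    intro i _
    exact contDiff_fderiv_apply (contDiff_fderiv_apply' hF3 (e i)) (e i)
  -- max point of the periodic companion
  set P : Eu → ℝ := cv φ v with hP
  have hPsm : ContDiff ℝ 2 P := cv_smooth φ v hv 2
  have hPF : ∀ x ∈ ball (0:Eu) (Rc+8), P x = F x := by
    intro x hx
    apply cv_congr_local
    intro y hy
    rw [mem_ball] at hx hy
    have : y ∈ ball (0:Eu) (Rc+9) := by
      rw [mem_ball]
      calc dist y 0 ≤ dist y x + dist x 0 := dist_triangle _ _ _
        _ < φ.rOut + (Rc+8) := by linarith
        _ ≤ Rc + 9 := by linarith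
    exact (hveq y this).symm
  have hgradPcont : Continuous (fun x => gradient P x) := by
    have : (fun x => gradient P x)
        = (fun L => (InnerProductSpace.toDual ℝ _).symm L) ∘ (fderiv ℝ P) := rfl
    rw [this]
    exact ((InnerProductSpace.toDual ℝ _).symm.continuous).comp
      (hPsm.continuous_fderiv (by norm_num))
  set W : Eu → ℝ := fun x => ‖gradient P x‖^2 with hW
  have hWcont : Continuous W := (hgradPcont.norm).pow 2
  have hWper : ZnPeriodic W := by
    intro x k
    have hPper : ∀ y, P (y + (EuclideanSpace.equiv (Fin n) ℝ).symm (fun i => (k i : ℝ))) = P y :=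
      fun y => cv_periodic φ (fun z => hvper z k) y
    have := gradient_periodic (u := P)
      (fun y => (hPsm.differentiable (by norm_num)) y) hPper x
    simp only [hW, this]
  obtain ⟨xj, hxjRc, hxjmax⟩ := exists_global_max W hWcont hWper
  -- identification of gradients near the cell
  have hgradPF : ∀ y ∈ ball (0:Eu) (Rc+8), gradient P y = gradient F y := by
    intro y hy
    have hev : P =ᶠ[𝓝 y] F :=
      Filter.eventuallyEq_of_mem (isOpen_ball.mem_nhds hy) hPF
    rw [gradient, gradient, hev.fderiv_eq]
  have hxjball : ∀ r : ℝ, 2 ≤ r → xj ∈ ball (0:Eu) (Rc + r) := by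
    intro r hr
    rw [mem_ball, dist_eq_norm, sub_zero]
    calc ‖xj‖ ≤ Real.sqrt n := hxjRc
      _ ≤ Rc := hRcn
      _ < Rc + r := by linarith
  set pj : Eu := cvE φ (fun y => gradient vt y) xj with hpjdef
  have hgradF : ∀ x, gradient F x = cvE φ (fun y => gradient vt y) x :=
    fun x => cv_gradient φ hvt1 hvtc x
  -- the mollified Bernstein inequality at xj
  set wF : Eu → ℝ := fun z => ∑ i : Fin n,
      fderiv ℝ F z (e i) * fderiv ℝ F z (e i) with hwF
  have hwrel : ∀ y, wF y = ‖gradient F y‖^2 := fun y => (norm_gradient_sq F y).symm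
  have hmaxloc : IsLocalMax wF xj := by
    have hball : ∀ᶠ y in 𝓝 xj, y ∈ ball (0:Eu) (Rc+8) :=
      isOpen_ball.mem_nhds (hxjball 8 (by norm_num))
    filter_upwards [hball] with y hy
    have h1 : wF y = W y := by
      rw [hwrel y]
      simp only [hW, hgradPF y hy]
    have h2 : wF xj = W xj := by
      rw [hwrel xj]
      simp only [hW, hgradPF xj (hxjball 8 (by norm_num))]
    rw [h1, h2]
    exact hxjmax y
  have hw2 : ContDiff ℝ 2 wF := by
    apply ContDiff.sum
    intro i _
    exact (contDiff_fderiv_apply' hF3 (e i)).mul (contDiff_fderiv_apply' hF3 (e i))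
  have hlapw := lap_nonpos_at_max hw2 hmaxloc
  have hbern := bernstein_identity hF3 xj
  set S2 : ℝ := ∑ i : Fin n, ∑ k : Fin n,
      fderiv ℝ (fun z => fderiv ℝ F z (e i)) xj (e k) *
      fderiv ℝ (fun z => fderiv ℝ F z (e i)) xj (e k) with hS2
  set S1 : ℝ := ∑ i : Fin n, fderiv ℝ F xj (e i) * fderiv ℝ (lap F) xj (e i) with hS1
  have hsum : S2 + S1 ≤ 0 := by
    have : lap wF xj = 2 * S2 + 2 * S1 := hbern
    linarith [hlapw, this]
  have hS2nonneg : 0 ≤ S2 := by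
    apply Finset.sum_nonneg
    intro i _
    apply Finset.sum_nonneg
    intro k _
    exact mul_self_nonneg _
  -- Cauchy-Schwarz for the laplacian
  have hCS : (lap F xj)^2 ≤ (n:ℝ) * S2 := by
    have h1 : lap F xj = ∑ i : Fin n,
        fderiv ℝ (fun z => fderiv ℝ F z (e i)) xj (e i) := rfl
    have h2 := sq_sum_le_card_mul_sum_sq
      (s := (Finset.univ : Finset (Fin n)))
      (f := fun i => fderiv ℝ (fun z => fderiv ℝ F z (e i)) xj (e i))
    rw [h1]
    calc (∑ i : Fin n, fderiv ℝ (fun z => fderiv ℝ F z (e i)) xj (e i))^2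
        ≤ (Finset.univ.card : ℝ) * ∑ i : Fin n,
            (fderiv ℝ (fun z => fderiv ℝ F z (e i)) xj (e i))^2 := by
          exact_mod_cast h2
      _ ≤ (n:ℝ) * S2 := by
          apply mul_le_mul
          · simp
          · apply Finset.sum_le_sum
            intro i _
            rw [sq]
            have : fderiv ℝ (fun z => fderiv ℝ F z (e i)) xj (e i) *
                fderiv ℝ (fun z => fderiv ℝ F z (e i)) xj (e i)
                ≤ ∑ k : Fin n, fderiv ℝ (fun z => fderiv ℝ F z (e i)) xj (e k) *
                  fderiv ℝ (fun z => fderiv ℝ F z (e i)) xj (e k) := by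
              apply Finset.single_le_sum (f := fun k =>
                fderiv ℝ (fun z => fderiv ℝ F z (e i)) xj (e k) *
                fderiv ℝ (fun z => fderiv ℝ F z (e i)) xj (e k))
                (fun k _ => mul_self_nonneg _) (Finset.mem_univ i)
            exact this
          · apply Finset.sum_nonneg
            intro i _
            exact sq_nonneg _
          · positivity
  -- identify S1 with an inner product
  have hS1inner : S1 = ⟪gradient F xj, gradient (lap F) xj⟫ := by
    rw [inner_coords]
    apply Finset.sum_congr rfl
    intro i _
    rw [gradient_coord, gradient_coord]
  -- identify η² gradient (lap F) xj with the convolution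
  set qj : Eu := cvE φ (fun y => gradient Ht y) xj with hqjdef
  have hgradHtcont : Continuous (fun y => gradient Ht y) := by
    have : (fun y => gradient Ht y)
        = (fun L => (InnerProductSpace.toDual ℝ _).symm L) ∘ (fderiv ℝ Ht) := rfl
    rw [this]
    exact ((InnerProductSpace.toDual ℝ _).symm.continuous).comp
      (hHt1.continuous_fderiv one_ne_zero)
  have hdlapF : ∀ b : Eu, η^2 * fderiv ℝ (lap F) xj b = ⟪qj, b⟫ := by
    intro b
    have hev : (fun x => η^2 * lap F x) =ᶠ[𝓝 xj] cv φ Ht := by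
      apply Filter.eventuallyEq_of_mem (isOpen_ball.mem_nhds (hxjball 2 le_rfl))
      intro y hy
      exact hlapF_loc y hy
    have h1 : fderiv ℝ (fun x => η^2 * lap F x) xj = fderiv ℝ (cv φ Ht) xj := hev.fderiv_eq
    have h2 : fderiv ℝ (fun x => η^2 * lap F x) xj
        = η^2 • fderiv ℝ (lap F) xj := by
      exact fderiv_const_mul ((hlapC1.differentiable one_ne_zero) xj) (η^2)
    have h3 := cv_fderiv_inner φ hHt1 hHtc xj b
    rw [← h1, h2] at h3
    rw [← h3]
    rfl
  have hQeq : η^2 • gradient (lap F) xj = qj := by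
    apply ext_inner_right ℝ
    intro b
    rw [real_inner_smul_left]
    have : ⟪gradient (lap F) xj, b⟫ = fderiv ℝ (lap F) xj b := by
      rw [gradient]; exact InnerProductSpace.toDual_symm_apply
    rw [this, hdlapF b]
  -- the final inequality at xj
  refine ⟨xj, hxjRc, ?_, ?_⟩
  · have hAeq : cv φ Ht xj = η^2 * lap F xj :=
      (hlapF_loc xj (hxjball 2 le_rfl)).symm
    have hinner : ⟪pj, qj⟫ = η^2 * S1 := by
      rw [← hQeq, hpjdef, ← hgradF xj, real_inner_smul_right, hS1inner]
    rw [hAeq, hinner]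
    have h4 : (η^2 * lap F xj)^2 ≤ ((n:ℝ) * η^2) * (η^2 * (-S1)) := by
      have h5 : (η^2 * lap F xj)^2 = (η^2)^2 * (lap F xj)^2 := by ring
      rw [h5]
      have h6 : (lap F xj)^2 ≤ (n:ℝ) * (-S1) := by
        have : S2 ≤ -S1 := by linarith
        calc (lap F xj)^2 ≤ (n:ℝ) * S2 := hCS
          _ ≤ (n:ℝ) * (-S1) := by
              apply mul_le_mul_of_nonneg_left this (by positivity)
      calc (η^2)^2 * (lap F xj)^2 ≤ (η^2)^2 * ((n:ℝ) * (-S1)) := by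
            apply mul_le_mul_of_nonneg_left h6 (by positivity)
        _ = ((n:ℝ) * η^2) * (η^2 * (-S1)) := by ring
    have hS1le : η^2 * (-S1) ≥ 0 := by
      by_contra hcon
      push_neg at hcon
      have h7 : ((n:ℝ) * η^2) * (η^2 * (-S1)) < 0 := by
        apply mul_neg_of_pos_of_neg
        · have : (0:ℝ) < n := by exact_mod_cast hn1
          positivity
        · exact hcon
      nlinarith [sq_nonneg (η^2 * lap F xj)]
    calc (η^2 * lap F xj)^2 + η^2 * S1
        ≤ ((n:ℝ) * η^2) * (η^2 * (-S1)) + η^2 * S1 := by linarith [h4]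
      _ ≤ 1 * (η^2 * (-S1)) + η^2 * S1 := by
          apply add_le_add_left
          apply mul_le_mul_of_nonneg_right hnη hS1le
      _ = 0 := by ring
  · intro y hy
    have hy8 : y ∈ ball (0:Eu) (Rc+8) := by
      rw [mem_ball] at hy ⊢
      linarith [hy]
    have h1 : cvE φ (fun y => gradient vt y) y = gradient P y := by
      rw [hgradPF y hy8, hgradF y]
    have h2 : pj = gradient P xj := by
      rw [hpjdef, hgradPF xj (hxjball 8 (by norm_num)), hgradF xj]
    rw [h1, ← hpjdef, h2]
    exact hxjmax y


end Stmt3Aux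

set_option maxHeartbeats 2000000 in
open Stmt3Aux in
theorem stmt3 {n : ℕ}
    (G : EuclideanSpace ℝ (Fin n) → EuclideanSpace ℝ (Fin n) → ℝ)
    (f : EuclideanSpace ℝ (Fin n) → ℝ → ℝ)
    -- G ∈ C¹(𝕋ⁿ × ℝⁿ)
    (hGsmooth : ContDiff ℝ 1 (fun q : EuclideanSpace ℝ (Fin n) × EuclideanSpace ℝ (Fin n) => G q.1 q.2))
    (hGper : ∀ (x p : EuclideanSpace ℝ (Fin n)) (k : Fin n → ℤ),
      G (x + (EuclideanSpace.equiv (Fin n) ℝ).symm (fun i => (k i : ℝ))) p = G x p)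
    -- f ∈ C²(𝕋ⁿ × ℝ)
    (hfsmooth : ContDiff ℝ 2 (fun q : EuclideanSpace ℝ (Fin n) × ℝ => f q.1 q.2))
    (hfper : ∀ (x : EuclideanSpace ℝ (Fin n)) (r : ℝ) (k : Fin n → ℤ),
      f (x + (EuclideanSpace.equiv (Fin n) ℝ).symm (fun i => (k i : ℝ))) r = f x r)
    -- (A1)
    (hA1 : ∀ C : ℝ, ∃ R : ℝ, ∀ (x p : EuclideanSpace ℝ (Fin n)), R ≤ ‖p‖ →
      C ≤ (G x p) ^ 2 / (2 * ‖p‖) - ‖fderiv ℝ (fun y => G y p) x‖)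
    -- (A3)
    (hA3pos : ∀ (x : EuclideanSpace ℝ (Fin n)) (r : ℝ), 0 < deriv (f x) r)
    (hA3M : ∃ M : ℝ, 0 < M ∧ ∀ x : EuclideanSpace ℝ (Fin n),
      f x (-M) ≤ -G x 0 ∧ -G x 0 ≤ f x M) :
    ∃ C : ℝ, 0 < C ∧ ∀ (ε η : ℝ), 0 < ε → 0 < η → η < (n : ℝ) ^ (-(1 : ℝ) / 2) →
      ∀ v : EuclideanSpace ℝ (Fin n) → ℝ, ContDiff ℝ 2 v → ZnPeriodic v →
        (∀ x, f x (ε * v x) + G x (gradient v x) = η ^ 2 * lap v x) →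
        ∀ x, ‖gradient v x‖ ≤ C := by
  classical
  obtain ⟨M, hM, hA3M⟩ := hA3M
  by_cases hn0 : n = 0
  · refine ⟨1, one_pos, ?_⟩
    intro ε η hε hη hηlt
    exfalso
    rw [hn0] at hηlt
    have : ((0:ℕ) : ℝ) ^ (-(1:ℝ)/2) = 0 := by
      rw [Nat.cast_zero, Real.zero_rpow (by norm_num)]
    rw [this] at hηlt
    linarith
  have hn1 : 1 ≤ n := Nat.one_le_iff_ne_zero.mpr hn0
  have hnpos : (0:ℝ) < (n:ℝ) := by exact_mod_cast Nat.pos_of_ne_zero hn0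
  -- constants
  set Rc : ℝ := Real.sqrt n with hRc
  have hRc0 : 0 ≤ Rc := Real.sqrt_nonneg _
  set Kset : Set (EuclideanSpace ℝ (Fin n) × ℝ) :=
    (Metric.closedBall (0:EuclideanSpace ℝ (Fin n)) (Rc+1)) ×ˢ (Set.Icc (-M) M) with hKset
  have hKc : IsCompact Kset := (isCompact_closedBall _ _).prod isCompact_Icc
  obtain ⟨K₀, hK₀⟩ := hKc.exists_bound_of_continuousOn (hfsmooth.continuous.continuousOn)
  obtain ⟨K₁, hK₁⟩ := hKc.exists_bound_of_continuousOn
    ((hfsmooth.continuous_fderiv (by norm_num)).continuousOn)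
  obtain ⟨R, hR⟩ := hA1 (K₀^2 + K₁ + 1)
  refine ⟨max R 1 + 1, by positivity, ?_⟩
  intro ε η hε hη hηlt v hv hvper hPDE
  have hvcont : Continuous v := hv.continuous
  -- the smallness of η
  have hnη : (n:ℝ) * η^2 ≤ 1 := by
    have h1 : ((n:ℝ) ^ (-(1:ℝ)/2))^2 = (n:ℝ)⁻¹ := by
      rw [← Real.rpow_natCast ((n:ℝ) ^ (-(1:ℝ)/2)) 2, ← Real.rpow_mul hnpos.le]
      norm_num
      rw [Real.rpow_neg_one]
    have h2 : η^2 < (n:ℝ)⁻¹ := by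
      have h3 := pow_lt_pow_left₀ hηlt hη.le (n := 2) (by norm_num)
      rwa [h1] at h3
    have h4 : (n:ℝ) * η^2 < (n:ℝ) * (n:ℝ)⁻¹ := by
      exact mul_lt_mul_of_pos_left h2 hnpos
    rw [mul_inv_cancel₀ (ne_of_gt hnpos)] at h4
    exact h4.le
  -- Step 1 : L∞ bound on ε v
  have hMb : ∀ y, -M ≤ ε * v y ∧ ε * v y ≤ M := by
    have hup : ∀ y, ε * v y ≤ M := by
      obtain ⟨x₀, _, hmax⟩ := exists_global_max v hvcont hvper
      have hloc : IsLocalMax v x₀ := Filter.Eventually.of_forall hmax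
      have hgrad0 : gradient v x₀ = 0 := gradient_eq_zero_of_max hloc
      have hlap0 : lap v x₀ ≤ 0 := lap_nonpos_at_max hv hloc
      have heq := hPDE x₀
      rw [hgrad0] at heq
      have h5 : f x₀ (ε * v x₀) ≤ f x₀ M := by
        have h6 : η^2 * lap v x₀ ≤ 0 := mul_nonpos_of_nonneg_of_nonpos (sq_nonneg η) hlap0
        have h7 := (hA3M x₀).2
        linarith
      have hm : StrictMono (f x₀) := strictMono_of_deriv_pos (hA3pos x₀)
      have h8 : ε * v x₀ ≤ M := hm.le_iff_le.mp h5
      intro y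
      have h9 : v y ≤ v x₀ := hmax y
      nlinarith
    have hdown : ∀ y, -M ≤ ε * v y := by
      obtain ⟨x₀, _, hmax⟩ := exists_global_max (fun y => -(v y))
        (hvcont.neg) (fun x k => by show -(v _) = -(v x); rw [hvper x k])
      have hloc : IsLocalMin v x₀ := by
        have : IsLocalMax (fun y => -(v y)) x₀ := Filter.Eventually.of_forall hmax
        have h2 := this.neg
        simpa using h2
      have hgrad0 : gradient v x₀ = 0 := gradient_eq_zero_of_min hloc
      have hlap0 : 0 ≤ lap v x₀ := lap_nonneg_at_min hv hloc
      have heq := hPDE x₀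
      rw [hgrad0] at heq
      have h5 : f x₀ (-M) ≤ f x₀ (ε * v x₀) := by
        have h6 : 0 ≤ η^2 * lap v x₀ := mul_nonneg (sq_nonneg η) hlap0
        have h7 := (hA3M x₀).1
        linarith
      have hm : StrictMono (f x₀) := strictMono_of_deriv_pos (hA3pos x₀)
      have h8 : -M ≤ ε * v x₀ := hm.le_iff_le.mp h5
      intro y
      have h9 : v x₀ ≤ v y := by
        have := hmax y
        simpa using this
      nlinarith
    exact fun y => ⟨hdown y, hup y⟩
  -- cutoff for v
  set Ψ : ContDiffBump (0 : EuclideanSpace ℝ (Fin n)) :=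
    ⟨Rc+9, Rc+10, by linarith, by linarith⟩ with hΨdef
  set vt : EuclideanSpace ℝ (Fin n) → ℝ := fun y => Ψ y * v y with hvtdef
  have hvt2 : ContDiff ℝ 2 vt := Ψ.contDiff.mul hv
  have hvtc : HasCompactSupport vt := Ψ.hasCompactSupport.mul_right
  have hveq : ∀ y ∈ Metric.ball (0:EuclideanSpace ℝ (Fin n)) (Rc+9), vt y = v y := by
    intro y hy
    have h1 : Ψ y = 1 := Ψ.one_of_mem_closedBall (Metric.ball_subset_closedBall hy)
    simp only [hvtdef, h1, one_mul]
  have hfdeq : ∀ y ∈ Metric.ball (0:EuclideanSpace ℝ (Fin n)) (Rc+9),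
      fderiv ℝ vt y = fderiv ℝ v y := by
    intro y hy
    exact (Filter.eventuallyEq_of_mem (isOpen_ball.mem_nhds hy) hveq).fderiv_eq
  have hgradeq : ∀ y ∈ Metric.ball (0:EuclideanSpace ℝ (Fin n)) (Rc+9),
      gradient vt y = gradient v y := by
    intro y hy
    rw [gradient, gradient, hfdeq y hy]
  have hlapeq : ∀ y ∈ Metric.ball (0:EuclideanSpace ℝ (Fin n)) (Rc+9), lap vt y = lap v y := by
    intro y hy
    unfold lap
    apply Finset.sum_congr rfl
    intro i _
    have hev : (fun z => fderiv ℝ vt z (EuclideanSpace.single i 1))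
        =ᶠ[𝓝 y] (fun z => fderiv ℝ v z (EuclideanSpace.single i 1)) := by
      apply Filter.eventuallyEq_of_mem (isOpen_ball.mem_nhds hy)
      intro z hz
      show fderiv ℝ vt z (EuclideanSpace.single i 1) = fderiv ℝ v z (EuclideanSpace.single i 1)
      rw [hfdeq z hz]
    rw [hev.fderiv_eq]
  have hgradvtC1 : ContDiff ℝ 1 (fun y => gradient vt y) := by
    have heq2 : (fun y => gradient vt y)
        = (fun L => (InnerProductSpace.toDual ℝ _).symm L) ∘ (fderiv ℝ vt) := rfl
    rw [heq2]
    exact (InnerProductSpace.toDual ℝ _).symm.contDiff.comp (hvt2.fderiv_right (by norm_num))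
  set H : EuclideanSpace ℝ (Fin n) → ℝ :=
    fun y => f y (ε * vt y) + G y (gradient vt y) with hHdef
  have hfa : ContDiff ℝ 1 (fun y => f y (ε * vt y)) :=
    (hfsmooth.of_le (by norm_num)).comp
      (contDiff_id.prodMk (contDiff_const.mul (hvt2.of_le (by norm_num))))
  have hGa : ContDiff ℝ 1 (fun y => G y (gradient vt y)) :=
    hGsmooth.comp (contDiff_id.prodMk hgradvtC1)
  have hH1 : ContDiff ℝ 1 H := hfa.add hGa
  have hHeq : ∀ y ∈ Metric.ball (0:EuclideanSpace ℝ (Fin n)) (Rc+9),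
      H y = η^2 * lap vt y := by
    intro y hy
    simp only [hHdef]
    rw [hveq y hy, hgradeq y hy, hlapeq y hy]
    exact hPDE y
  set Ψ₂ : ContDiffBump (0 : EuclideanSpace ℝ (Fin n)) :=
    ⟨Rc+6, Rc+7, by linarith, by linarith⟩ with hΨ₂def
  set Ht : EuclideanSpace ℝ (Fin n) → ℝ := fun y => Ψ₂ y * H y with hHtdef
  have hHt1 : ContDiff ℝ 1 Ht := Ψ₂.contDiff.mul hH1
  have hHtc : HasCompactSupport Ht := Ψ₂.hasCompactSupport.mul_right
  have hHteqH : ∀ y ∈ Metric.ball (0:EuclideanSpace ℝ (Fin n)) (Rc+6), Ht y = H y := by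
    intro y hy
    have h1 : Ψ₂ y = 1 := Ψ₂.one_of_mem_closedBall (Metric.ball_subset_closedBall hy)
    simp only [hHtdef, h1, one_mul]
  have hHtlap : ∀ y ∈ Metric.ball (0:EuclideanSpace ℝ (Fin n)) (Rc+3),
      Ht y = η^2 * lap vt y := by
    intro y hy
    have hy6 : y ∈ Metric.ball (0:EuclideanSpace ℝ (Fin n)) (Rc+6) := by
      rw [Metric.mem_ball] at hy ⊢; linarith
    have hy9 : y ∈ Metric.ball (0:EuclideanSpace ℝ (Fin n)) (Rc+9) := by
      rw [Metric.mem_ball] at hy ⊢; linarith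
    rw [hHteqH y hy6, hHeq y hy9]
  -- mollifier sequence
  set φs : ℕ → ContDiffBump (0 : EuclideanSpace ℝ (Fin n)) := fun j =>
    ⟨1/(2*((j:ℝ)+1)), 1/((j:ℝ)+1), by positivity, by
      rw [div_lt_div_iff₀ (by positivity) (by positivity)]
      nlinarith [Nat.cast_nonneg (α := ℝ) j]⟩ with hφsdef
  have hφ1 : ∀ j, (φs j).rOut ≤ 1 := by
    intro j
    show 1/((j:ℝ)+1) ≤ 1
    rw [div_le_one (by positivity)]
    linarith [Nat.cast_nonneg (α := ℝ) j]
  have hrtend : Filter.Tendsto (fun j => (φs j).rOut) Filter.atTop (𝓝 0) := by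
    have heq3 : (fun j : ℕ => (φs j).rOut) = fun j : ℕ => 1/((j:ℝ)+1) := rfl
    rw [heq3]
    exact tendsto_one_div_add_atTop_nhds_zero_nat
  have hkey := fun j : ℕ =>
    perj hη hvt2 hvtc hvcont hvper hveq hHt1 hHtc hHtlap le_rfl (φs j) (hφ1 j) hn1 hnη
  choose xseq hxn hxA hxB using hkey
  have hmem : ∀ j, xseq j ∈ Metric.closedBall (0:EuclideanSpace ℝ (Fin n)) Rc := by
    intro j; rw [Metric.mem_closedBall, dist_eq_norm, sub_zero]; exact hxn j
  obtain ⟨xb, hxbmem, σ, hσmono, hσtend⟩ :=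
    (isCompact_closedBall (0:EuclideanSpace ℝ (Fin n)) Rc).tendsto_subseq hmem
  have hxbRc : ‖xb‖ ≤ Rc := by
    rw [Metric.mem_closedBall, dist_eq_norm, sub_zero] at hxbmem; exact hxbmem
  set gvt : EuclideanSpace ℝ (Fin n) → EuclideanSpace ℝ (Fin n) :=
    fun y => gradient vt y with hgvtdef
  set gHt : EuclideanSpace ℝ (Fin n) → EuclideanSpace ℝ (Fin n) :=
    fun y => gradient Ht y with hgHtdef
  have hgvtcont : Continuous gvt := hgradvtC1.continuous
  have hgHtcont : Continuous gHt := by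
    have heq4 : gHt = (fun L => (InnerProductSpace.toDual ℝ _).symm L) ∘ (fderiv ℝ Ht) := rfl
    rw [heq4]
    exact (InnerProductSpace.toDual ℝ _).symm.continuous.comp (hHt1.continuous_fderiv one_ne_zero)
  have hrtendσ : Filter.Tendsto (fun j => (φs (σ j)).rOut) Filter.atTop (𝓝 0) :=
    hrtend.comp hσmono.tendsto_atTop
  have hpt : Filter.Tendsto (fun j => cvE (φs (σ j)) gvt (xseq (σ j)))
      Filter.atTop (𝓝 (gvt xb)) := cvE_tendsto hrtendσ hgvtcont hσtend
  have hAt : Filter.Tendsto (fun j => cv (φs (σ j)) Ht (xseq (σ j)))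
      Filter.atTop (𝓝 (Ht xb)) := cv_tendsto' hrtendσ hHt1.continuous hσtend
  have hqt : Filter.Tendsto (fun j => cvE (φs (σ j)) gHt (xseq (σ j)))
      Filter.atTop (𝓝 (gHt xb)) := cvE_tendsto hrtendσ hgHtcont hσtend
  have hfinal1 : (Ht xb)^2 + ⟪gvt xb, gHt xb⟫ ≤ 0 := by
    apply le_of_tendsto ((hAt.pow 2).add (hpt.inner hqt))
    apply Filter.Eventually.of_forall
    intro j
    exact hxA (σ j)
  have hfinal2 : ∀ y ∈ Metric.ball (0:EuclideanSpace ℝ (Fin n)) (Rc+2),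
      ‖gvt y‖^2 ≤ ‖gvt xb‖^2 := by
    intro y hy
    apply le_of_tendsto_of_tendsto'
      (((cvE_tendsto hrtendσ hgvtcont tendsto_const_nhds).norm).pow 2)
      ((hpt.norm).pow 2)
    intro j
    exact hxB (σ j) y hy
  set p : EuclideanSpace ℝ (Fin n) := gvt xb with hpdef
  set m : ℝ := ‖p‖ with hmdef
  have hxb9 : xb ∈ Metric.ball (0:EuclideanSpace ℝ (Fin n)) (Rc+9) := by
    rw [Metric.mem_ball, dist_eq_norm, sub_zero]; linarith
  have hxb6 : xb ∈ Metric.ball (0:EuclideanSpace ℝ (Fin n)) (Rc+6) := by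
    rw [Metric.mem_ball, dist_eq_norm, sub_zero]; linarith
  have hpv : p = gradient v xb := by
    rw [hpdef]
    exact hgradeq xb hxb9
  have hWglob : ∀ y, ‖gradient v y‖ ≤ m := by
    intro y
    obtain ⟨k, hk⟩ := exists_cell_rep y
    set c : EuclideanSpace ℝ (Fin n) :=
      (EuclideanSpace.equiv (Fin n) ℝ).symm (fun i => (k i:ℝ)) with hcdef
    have hper' : ∀ z, v (z + c) = v z := fun z => hvper z k
    have h1 : gradient v (y + c) = gradient v y :=
      gradient_periodic (fun z => (hv.differentiable (by norm_num)) z) hper' y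
    have hyc : ‖y + c‖ ≤ Rc := hk
    have h2 : y + c ∈ Metric.ball (0:EuclideanSpace ℝ (Fin n)) (Rc+2) := by
      rw [Metric.mem_ball, dist_eq_norm, sub_zero]; linarith
    have h3 : y + c ∈ Metric.ball (0:EuclideanSpace ℝ (Fin n)) (Rc+9) := by
      rw [Metric.mem_ball, dist_eq_norm, sub_zero]; linarith
    have h4 := hfinal2 (y + c) h2
    have h5 : gvt (y + c) = gradient v (y + c) := hgradeq _ h3
    have h6 : ‖gradient v y‖^2 ≤ m^2 := by
      rw [← h1, ← h5]
      exact h4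
    nlinarith [norm_nonneg (gradient v y), norm_nonneg p]
  by_cases hm : m ≤ max R 1
  · intro x
    calc ‖gradient v x‖ ≤ m := hWglob x
      _ ≤ max R 1 := hm
      _ ≤ max R 1 + 1 := by linarith
  · exfalso
    push_neg at hm
    have hm1 : (1:ℝ) ≤ m := le_of_lt (lt_of_le_of_lt (le_max_right R 1) hm)
    have hmR : R ≤ m := le_of_lt (lt_of_le_of_lt (le_max_left R 1) hm)
    have hm0 : (0:ℝ) < m := by linarith
    -- Hessian times p vanishes at xb
    have hdiffgv : ∀ y, DifferentiableAt ℝ gvt y := fun y => (hgradvtC1.differentiable one_ne_zero) y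
    have hWmax : IsLocalMax (fun y => ⟪gvt y, gvt y⟫) xb := by
      have hball : ∀ᶠ y in 𝓝 xb, y ∈ Metric.ball (0:EuclideanSpace ℝ (Fin n)) (Rc+2) :=
        isOpen_ball.mem_nhds (by rw [Metric.mem_ball, dist_eq_norm, sub_zero]; linarith)
      filter_upwards [hball] with y hy
      have h1 : ⟪gvt y, gvt y⟫ = ‖gvt y‖^2 := real_inner_self_eq_norm_sq _
      have h2 : ⟪gvt xb, gvt xb⟫ = ‖gvt xb‖^2 := real_inner_self_eq_norm_sq _
      simp only [h1, h2]
      exact hfinal2 y hy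
    have hD0 : ∀ ξ, ⟪p, fderiv ℝ gvt xb ξ⟫ = 0 := by
      intro ξ
      have hfd : HasFDerivAt (fun y => ⟪gvt y, gvt y⟫)
          ((fderivInnerCLM ℝ (gvt xb, gvt xb)).comp
            ((fderiv ℝ gvt xb).prod (fderiv ℝ gvt xb))) xb :=
        (hdiffgv xb).hasFDerivAt.inner ℝ (hdiffgv xb).hasFDerivAt
      have h0 := hWmax.fderiv_eq_zero
      rw [hfd.fderiv] at h0
      have h1 := ContinuousLinearMap.ext_iff.mp h0 ξ
      simp only [ContinuousLinearMap.comp_apply, ContinuousLinearMap.prod_apply,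
        fderivInnerCLM_apply, ContinuousLinearMap.zero_apply] at h1
      have h2 : ⟪(fderiv ℝ gvt xb) ξ, gvt xb⟫ = ⟪gvt xb, (fderiv ℝ gvt xb) ξ⟫ :=
        real_inner_comm _ _
      rw [hpdef]
      linarith
    have hsymm : ∀ a b : EuclideanSpace ℝ (Fin n),
        ⟪b, fderiv ℝ gvt xb a⟫ = fderiv ℝ (fderiv ℝ vt) xb a b := by
      intro a b
      have hfun : (fun y => ⟪b, gvt y⟫) = (fun y => fderiv ℝ vt y b) := by
        funext y
        rw [real_inner_comm]
        exact inner_gradient vt y b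
      have hL : HasFDerivAt (fun y => ⟪b, gvt y⟫)
          ((innerSL ℝ b).comp (fderiv ℝ gvt xb)) xb :=
        (innerSL ℝ b).hasFDerivAt.comp xb (hdiffgv xb).hasFDerivAt
      have h1 : fderiv ℝ (fun y => ⟪b, gvt y⟫) xb a = ⟪b, fderiv ℝ gvt xb a⟫ := by
        rw [hL.fderiv]; rfl
      rw [← h1, hfun]
      exact fderiv_fderiv_apply
        (((hvt2.fderiv_right (by norm_num)).differentiable one_ne_zero) xb) b a
    have hHess : fderiv ℝ gvt xb p = 0 := by
      have h1 : ⟪fderiv ℝ gvt xb p, fderiv ℝ gvt xb p⟫ = 0 := by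
        have h2 : ⟪fderiv ℝ gvt xb p, fderiv ℝ gvt xb p⟫
            = fderiv ℝ (fderiv ℝ vt) xb p (fderiv ℝ gvt xb p) := hsymm p (fderiv ℝ gvt xb p)
        have h3 : fderiv ℝ (fderiv ℝ vt) xb p (fderiv ℝ gvt xb p)
            = fderiv ℝ (fderiv ℝ vt) xb (fderiv ℝ gvt xb p) p :=
          isSymm_second hvt2 xb p (fderiv ℝ gvt xb p)
        have h4 : fderiv ℝ (fderiv ℝ vt) xb (fderiv ℝ gvt xb p) p
            = ⟪p, fderiv ℝ gvt xb (fderiv ℝ gvt xb p)⟫ := (hsymm (fderiv ℝ gvt xb p) p).symm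
        have h5 := hD0 (fderiv ℝ gvt xb p)
        rw [h2, h3, h4, h5]
      exact inner_self_eq_zero.mp h1
    -- expansion of the inner product term
    have hBft : ⟪p, gHt xb⟫ = fderiv ℝ Ht xb p := by
      rw [real_inner_comm]
      exact inner_gradient Ht xb p
    have hHtH : fderiv ℝ Ht xb = fderiv ℝ H xb :=
      (Filter.eventuallyEq_of_mem (isOpen_ball.mem_nhds hxb6) hHteqH).fderiv_eq
    have hsplit : fderiv ℝ H xb p = fderiv ℝ (fun y => f y (ε * vt y)) xb p
        + fderiv ℝ (fun y => G y (gradient vt y)) xb p := by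
      have h1 : fderiv ℝ H xb = fderiv ℝ (fun y => f y (ε * vt y)) xb
          + fderiv ℝ (fun y => G y (gradient vt y)) xb := by
        rw [hHdef]
        exact fderiv_add ((hfa.differentiable one_ne_zero) xb) ((hGa.differentiable one_ne_zero) xb)
      rw [h1]
      rfl
    have hvtdiff : DifferentiableAt ℝ (fun y => ε * vt y) xb :=
      ((hvt2.differentiable (by norm_num)) xb).const_mul ε
    have hT1 : fderiv ℝ (fun y => f y (ε * vt y)) xb p
        = fderiv ℝ (fun q : EuclideanSpace ℝ (Fin n) × ℝ => f q.1 q.2) (xb, ε * vt xb)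
            (p, fderiv ℝ (fun y => ε * vt y) xb p) :=
      fderiv_comp_pair (hfsmooth.of_le (by norm_num)) hvtdiff p
    have hvs : fderiv ℝ (fun y => ε * vt y) xb p = ε * ⟪p, p⟫ := by
      rw [fderiv_const_mul ((hvt2.differentiable (by norm_num)) xb) ε]
      simp only [ContinuousLinearMap.smul_apply, smul_eq_mul]
      congr 1
      rw [hfdeq xb hxb9, ← inner_gradient v xb p, ← hpv]
    set Lf := fderiv ℝ (fun q : EuclideanSpace ℝ (Fin n) × ℝ => f q.1 q.2) (xb, ε * vt xb)
      with hLfdef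
    have hT1split : Lf (p, ε * ⟪p, p⟫) = Lf (p, 0) + Lf (0, ε * ⟪p,p⟫) :=
      fderiv_pair_split Lf p _
    have hmemK : (xb, ε * vt xb) ∈ Kset := by
      constructor
      · rw [Metric.mem_closedBall, dist_eq_norm, sub_zero]
        simp only
        linarith
      · have h1 : vt xb = v xb := hveq xb hxb9
        simp only [h1]
        exact ⟨(hMb xb).1, (hMb xb).2⟩
    have hT1a : -(K₁ * m) ≤ Lf (p, 0) := by
      have h1 : ‖Lf (p, 0)‖ ≤ ‖Lf‖ * ‖((p : EuclideanSpace ℝ (Fin n)), (0:ℝ))‖ :=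
        Lf.le_opNorm _
      have h2 : ‖((p : EuclideanSpace ℝ (Fin n)), (0:ℝ))‖ = m := by
        rw [Prod.norm_def]
        simp [hmdef]
      have h3 : ‖Lf‖ ≤ K₁ := hK₁ _ hmemK
      rw [h2] at h1
      have h4 : |Lf (p, 0)| ≤ K₁ * m := by
        rw [← Real.norm_eq_abs]
        calc ‖Lf (p,0)‖ ≤ ‖Lf‖ * m := h1
          _ ≤ K₁ * m := mul_le_mul_of_nonneg_right h3 (by linarith)
      linarith [neg_abs_le (Lf (p,0))]
    have hT1b : 0 ≤ Lf (0, ε * ⟪p,p⟫) := by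
      have h1 : Lf (0, ε * ⟪p,p⟫) = (ε * ⟪p,p⟫) * deriv (f xb) (ε * vt xb) :=
        fderiv_snd_slice (hfsmooth.of_le (by norm_num)) xb (ε * vt xb) (ε * ⟪p,p⟫)
      rw [h1]
      apply mul_nonneg (mul_nonneg hε.le real_inner_self_nonneg) (hA3pos xb _).le
    have hT2 : fderiv ℝ (fun y => G y (gradient vt y)) xb p
        = fderiv ℝ (fun q : EuclideanSpace ℝ (Fin n) × EuclideanSpace ℝ (Fin n) => G q.1 q.2)
            (xb, gvt xb) (p, 0) := by
      have h1 := fderiv_comp_pair hGsmooth (hdiffgv xb) p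
      rw [h1, hHess]
    set Λ := ‖fderiv ℝ (fun y => G y p) xb‖ with hΛdef
    have hT2b : -(Λ * m) ≤ fderiv ℝ
        (fun q : EuclideanSpace ℝ (Fin n) × EuclideanSpace ℝ (Fin n) => G q.1 q.2)
        (xb, gvt xb) (p, 0) := by
      have hgs : fderiv ℝ
          (fun q : EuclideanSpace ℝ (Fin n) × EuclideanSpace ℝ (Fin n) => G q.1 q.2)
          (xb, gvt xb) (p, 0) = fderiv ℝ (fun y => G y p) xb p := by
        exact (fderiv_fst_slice hGsmooth xb (gvt xb) p).symm
      rw [hgs]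
      have h1 : |fderiv ℝ (fun y => G y p) xb p| ≤ Λ * m := by
        rw [← Real.norm_eq_abs]
        exact (fderiv ℝ (fun y => G y p) xb).le_opNorm p
      linarith [neg_abs_le (fderiv ℝ (fun y => G y p) xb p)]
    have hB : -((K₁ + Λ) * m) ≤ ⟪p, gHt xb⟫ := by
      rw [hBft, hHtH, hsplit, hT1, hvs, hT1split, hT2]
      have := hT1a
      have := hT1b
      have := hT2b
      nlinarith
    have hA2 : (Ht xb)^2 ≤ (K₁ + Λ) * m := by
      have h1 : ⟪gvt xb, gHt xb⟫ = ⟪p, gHt xb⟫ := rfl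
      rw [h1] at hfinal1
      linarith
    have hHxb : Ht xb = f xb (ε * v xb) + G xb p := by
      rw [hHteqH xb hxb6]
      simp only [hHdef]
      rw [hveq xb hxb9]
    have hfmem : (xb, ε * v xb) ∈ Kset := by
      constructor
      · rw [Metric.mem_closedBall, dist_eq_norm, sub_zero]
        simp only
        linarith
      · exact ⟨(hMb xb).1, (hMb xb).2⟩
    have hfb : |f xb (ε * v xb)| ≤ K₀ := by
      have := hK₀ (xb, ε * v xb) hfmem
      simpa [Real.norm_eq_abs] using this
    have hf2 : (f xb (ε * v xb))^2 ≤ K₀^2 := by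
      nlinarith [abs_nonneg (f xb (ε * v xb)), sq_abs (f xb (ε * v xb))]
    have hGeq : G xb p = Ht xb - f xb (ε * v xb) := by linarith
    have hGb : (G xb p)^2 ≤ 2*K₀^2 + 2*((K₁+Λ)*m) := by
      rw [hGeq]
      nlinarith [hA2, hf2, sq_nonneg (Ht xb + f xb (ε * v xb))]
    have hA1r := hR xb p hmR
    have h2m : (0:ℝ) < 2*m := by linarith
    have hdiv : (G xb p)^2/(2*m) ≤ K₀^2/m + K₁ + Λ := by
      have h1 : (G xb p)^2/(2*m) ≤ (2*K₀^2 + 2*((K₁+Λ)*m))/(2*m) :=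
        (div_le_div_iff_of_pos_right h2m).mpr hGb
      have h2 : (2*K₀^2 + 2*((K₁+Λ)*m))/(2*m) = K₀^2/m + K₁ + Λ := by
        field_simp
        ring
      linarith
    have hK0m : K₀^2/m ≤ K₀^2 := div_le_self (sq_nonneg _) hm1
    linarith
end
end

section
/- Let G ∈ C¹(𝕋ⁿ × ℝⁿ) and let f ∈ C²(𝕋ⁿ × ℝ) satisfy (A3) with constant M > 0. Then for every ε > 0, every η > 0, and every C² function v : 𝕋ⁿ → ℝ satisfying f(x, ε v(x)) + G(x, Dv(x)) = η² Δv(x) for all x ∈ 𝕋ⁿ, one has −M/ε ≤ v(x) ≤ M/ε for all x ∈ 𝕋ⁿ. -/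
open Filter Set
open scoped Topology

noncomputable section

/-- deriv of a C² function as evaluation of fderiv. -/
private lemma deriv_eq_fderiv_one (g : ℝ → ℝ) : deriv g = fun y => fderiv ℝ g y 1 :=
  funext fun _ => rfl

private lemma secondDeriv_nonpos_of_isLocalMax {g : ℝ → ℝ} (hg : ContDiff ℝ 2 g)
    (h : IsLocalMax g 0) : deriv (deriv g) 0 ≤ 0 := by
  by_contra hlt
  push_neg at hlt
  have hg1 : ContDiff ℝ 1 (deriv g) := by
    rw [deriv_eq_fderiv_one]
    exact (ContinuousLinearMap.apply ℝ ℝ (1:ℝ)).contDiff.comp (hg.fderiv_right (by norm_num))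
  have hg2 : Continuous (deriv (deriv g)) := by
    rw [deriv_eq_fderiv_one (deriv g)]
    exact ((ContinuousLinearMap.apply ℝ ℝ (1:ℝ)).contDiff.comp
      (hg1.fderiv_right (by norm_num)) : ContDiff ℝ 0 _).continuous
  have hev : ∀ᶠ t in 𝓝 (0:ℝ), 0 < deriv (deriv g) t :=
    hg2.continuousAt (lt_mem_nhds hlt)
  obtain ⟨δ, hδ, hδpos⟩ := Metric.eventually_nhds_iff.mp hev
  -- deriv g is strictly monotone on Icc (-δ/2) (δ/2)
  have hsm : StrictMonoOn (deriv g) (Icc (-(δ/2)) (δ/2)) := by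
    apply strictMonoOn_of_deriv_pos (convex_Icc _ _) hg1.continuous.continuousOn
    intro t ht
    rw [interior_Icc] at ht
    apply hδpos
    rw [Real.dist_eq, sub_zero, abs_lt]
    constructor <;> [linarith [ht.1]; linarith [ht.2]]
  have hd0 : deriv g 0 = 0 := h.deriv_eq_zero
  -- deriv g is positive on Ioo 0 (δ/2)
  have hpos : ∀ t ∈ Ioo (0:ℝ) (δ/2), 0 < deriv g t := by
    intro t ht
    have h1 : (0:ℝ) ∈ Icc (-(δ/2)) (δ/2) := ⟨by linarith, by linarith⟩
    have h2 : t ∈ Icc (-(δ/2)) (δ/2) := ⟨by linarith [ht.1], ht.2.le⟩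
    have := hsm h1 h2 ht.1
    rwa [hd0] at this
  -- g strictly monotone on Icc 0 (δ/2)
  have hgm : StrictMonoOn g (Icc (0:ℝ) (δ/2)) := by
    apply strictMonoOn_of_deriv_pos (convex_Icc _ _) hg.continuous.continuousOn
    intro t ht
    rw [interior_Icc] at ht
    exact hpos t ht
  obtain ⟨ε, hε, hmax⟩ := Metric.eventually_nhds_iff.mp h
  set t := min (ε/2) (δ/4) with hT
  have ht0 : 0 < t := lt_min (by linarith) (by linarith)
  have htδ : t ≤ δ/4 := min_le_right _ _
  have h1 : (0:ℝ) ∈ Icc (0:ℝ) (δ/2) := ⟨le_rfl, by linarith⟩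
  have h2 : t ∈ Icc (0:ℝ) (δ/2) := ⟨ht0.le, by linarith⟩
  have hlt2 : g 0 < g t := hgm h1 h2 ht0
  have hle : g t ≤ g 0 := by
    apply hmax
    rw [Real.dist_eq, sub_zero, abs_of_pos ht0]
    have : t ≤ ε/2 := min_le_left _ _
    linarith
  linarith

private lemma dirSecond_nonpos {n : ℕ} {v : EuclideanSpace ℝ (Fin n) → ℝ} (hv : ContDiff ℝ 2 v)
    {x : EuclideanSpace ℝ (Fin n)} (h : IsLocalMax v x) (e : EuclideanSpace ℝ (Fin n)) :
    fderiv ℝ (fun y => fderiv ℝ v y e) x e ≤ 0 := by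
  set L : ℝ → EuclideanSpace ℝ (Fin n) := fun t => x + t • e with hLdef
  have hL : ContDiff ℝ 2 L := contDiff_const.add (contDiff_id.smul contDiff_const)
  have hg : ContDiff ℝ 2 (fun t => v (L t)) := hv.comp hL
  have hL0 : L 0 = x := by simp [hLdef]
  have hmax : IsLocalMax (fun t => v (L t)) 0 := by
    have h' : IsMaxFilter v (𝓝 (L 0)) (L 0) := hL0 ▸ h
    exact h'.comp_tendsto (hL.continuous.continuousAt)
  have hLt : ∀ t : ℝ, HasDerivAt L e t := by
    intro t
    simpa [hLdef] using ((hasDerivAt_id t).smul_const e).const_add x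
  have hderiv : deriv (fun t => v (L t)) = fun t => fderiv ℝ v (L t) e := by
    funext t
    have hd : HasDerivAt (fun t => v (L t)) (fderiv ℝ v (L t) e) t := by
      have := ((hv.differentiable (by norm_num)).differentiableAt.hasFDerivAt).comp_hasDerivAt t (hLt t)
      exact this
    exact hd.deriv
  have hh : ContDiff ℝ 1 (fun y => fderiv ℝ v y e) :=
    (ContinuousLinearMap.apply ℝ ℝ e).contDiff.comp (hv.fderiv_right (by norm_num))
  have h2 : deriv (deriv (fun t => v (L t))) 0 = fderiv ℝ (fun y => fderiv ℝ v y e) x e := by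
    rw [hderiv]
    have hdh : HasFDerivAt (fun y => fderiv ℝ v y e)
        (fderiv ℝ (fun y => fderiv ℝ v y e) x) (L 0) := by
      rw [hL0]
      exact ((hh.differentiable (by norm_num)).differentiableAt).hasFDerivAt
    have hd : HasDerivAt (fun t => fderiv ℝ v (L t) e)
        (fderiv ℝ (fun y => fderiv ℝ v y e) x e) 0 := by
      have := hdh.comp_hasDerivAt 0 (hLt 0)
      exact this
    exact hd.deriv
  rw [← h2]
  exact secondDeriv_nonpos_of_isLocalMax hg hmax

private lemma lap_nonpos_of_max {n : ℕ} {v : EuclideanSpace ℝ (Fin n) → ℝ} (hv : ContDiff ℝ 2 v)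
    {x : EuclideanSpace ℝ (Fin n)} (h : IsLocalMax v x) : lap v x ≤ 0 :=
  Finset.sum_nonpos fun i _ => dirSecond_nonpos hv h _

private lemma lap_neg' {n : ℕ} (v : EuclideanSpace ℝ (Fin n) → ℝ) (x : EuclideanSpace ℝ (Fin n)) :
    lap (fun y => -v y) x = -lap v x := by
  have key : ∀ e : EuclideanSpace ℝ (Fin n),
      fderiv ℝ (fun y => fderiv ℝ (fun z => -v z) y e) x e
        = -fderiv ℝ (fun y => fderiv ℝ v y e) x e := by
    intro e
    have h1 : (fun y => fderiv ℝ (fun z => -v z) y e) = fun y => -(fderiv ℝ v y e) := by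
      funext y; rw [fderiv_fun_neg]; simp
    rw [h1, fderiv_fun_neg]; simp
  simp only [lap, key, Finset.sum_neg_distrib]

private lemma lap_nonneg_of_min {n : ℕ} {v : EuclideanSpace ℝ (Fin n) → ℝ} (hv : ContDiff ℝ 2 v)
    {x : EuclideanSpace ℝ (Fin n)} (h : IsLocalMin v x) : 0 ≤ lap v x := by
  have := lap_nonpos_of_max (v := fun y => -v y) (hv.neg) (h.neg)
  rw [lap_neg'] at this
  linarith

private lemma exists_global_max {n : ℕ} {v : EuclideanSpace ℝ (Fin n) → ℝ}
    (hc : Continuous v) (hp : ZnPeriodic v) :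
    ∃ x₀, ∀ x, v x ≤ v x₀ := by
  set K : Set (EuclideanSpace ℝ (Fin n)) :=
    (EuclideanSpace.equiv (Fin n) ℝ).symm '' (Icc (0 : Fin n → ℝ) 1) with hK
  have hKc : IsCompact K := isCompact_Icc.image (EuclideanSpace.equiv (Fin n) ℝ).symm.continuous
  have hKne : K.Nonempty := ⟨_, ⟨0, ⟨le_rfl, zero_le_one⟩, rfl⟩⟩
  obtain ⟨x₀, -, hmax⟩ := hKc.exists_isMaxOn hKne hc.continuousOn
  refine ⟨x₀, fun x => ?_⟩
  set k : Fin n → ℤ := fun i => -⌊x i⌋ with hk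
  have hmem : x + (EuclideanSpace.equiv (Fin n) ℝ).symm (fun i => (k i : ℝ)) ∈ K := by
    refine ⟨EuclideanSpace.equiv (Fin n) ℝ (x + (EuclideanSpace.equiv (Fin n) ℝ).symm
      (fun i => (k i : ℝ))), ?_, (EuclideanSpace.equiv (Fin n) ℝ).symm_apply_apply _⟩
    constructor <;> intro i
    · show (0:ℝ) ≤ x i + ((k i : ℤ) : ℝ)
      simp only [hk, Int.cast_neg]
      have := Int.fract_nonneg (x i)
      simp only [Int.fract] at this
      linarith
    · show x i + ((k i : ℤ) : ℝ) ≤ 1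
      simp only [hk, Int.cast_neg]
      have := Int.fract_lt_one (x i)
      simp only [Int.fract] at this
      linarith
  calc v x = v (x + (EuclideanSpace.equiv (Fin n) ℝ).symm (fun i => (k i : ℝ))) := (hp x k).symm
    _ ≤ v x₀ := hmax hmem

theorem stmt4 {n : ℕ}
    (G : EuclideanSpace ℝ (Fin n) → EuclideanSpace ℝ (Fin n) → ℝ)
    (f : EuclideanSpace ℝ (Fin n) → ℝ → ℝ)
    -- G ∈ C¹(𝕋ⁿ × ℝⁿ)
    (hGsmooth : ContDiff ℝ 1 (fun q : EuclideanSpace ℝ (Fin n) × EuclideanSpace ℝ (Fin n) => G q.1 q.2))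
    (hGper : ∀ (x p : EuclideanSpace ℝ (Fin n)) (k : Fin n → ℤ),
      G (x + (EuclideanSpace.equiv (Fin n) ℝ).symm (fun i => (k i : ℝ))) p = G x p)
    -- f ∈ C²(𝕋ⁿ × ℝ)
    (hfsmooth : ContDiff ℝ 2 (fun q : EuclideanSpace ℝ (Fin n) × ℝ => f q.1 q.2))
    (hfper : ∀ (x : EuclideanSpace ℝ (Fin n)) (r : ℝ) (k : Fin n → ℤ),
      f (x + (EuclideanSpace.equiv (Fin n) ℝ).symm (fun i => (k i : ℝ))) r = f x r)
    -- (A3) with constant M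
    (hA3pos : ∀ (x : EuclideanSpace ℝ (Fin n)) (r : ℝ), 0 < deriv (f x) r)
    (M : ℝ) (hM : 0 < M)
    (hA3M : ∀ x : EuclideanSpace ℝ (Fin n), f x (-M) ≤ -G x 0 ∧ -G x 0 ≤ f x M) :
    ∀ (ε η : ℝ), 0 < ε → 0 < η →
      ∀ v : EuclideanSpace ℝ (Fin n) → ℝ, ContDiff ℝ 2 v → ZnPeriodic v →
        (∀ x, f x (ε * v x) + G x (gradient v x) = η ^ 2 * lap v x) →
        ∀ x, -M / ε ≤ v x ∧ v x ≤ M / ε := by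
  intro ε η hε hη v hv hper heq x
  have hsm : ∀ x, StrictMono (f x) := fun x => strictMono_of_deriv_pos (hA3pos x)
  have hcont : Continuous v := hv.continuous
  -- global max
  obtain ⟨x₀, hmax⟩ := exists_global_max hcont hper
  -- global min (max of -v)
  obtain ⟨x₁, hmax'⟩ := exists_global_max (v := fun y => -v y) hcont.neg
    (fun y k => by simp only [neg_inj]; exact hper y k)
  have hmin : ∀ y, v x₁ ≤ v y := fun y => by have := hmax' y; simpa using this
  -- at the max point
  have hlocmax : IsLocalMax v x₀ := Filter.Eventually.of_forall hmax
  have hgrad0 : gradient v x₀ = 0 := by rw [gradient, hlocmax.fderiv_eq_zero]; simp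
  have hlap0 : lap v x₀ ≤ 0 := lap_nonpos_of_max hv hlocmax
  have hub : v x₀ ≤ M / ε := by
    have h1 : f x₀ (ε * v x₀) + G x₀ 0 ≤ 0 := by
      have := heq x₀
      rw [hgrad0] at this
      nlinarith [sq_nonneg η]
    have h2 : f x₀ (ε * v x₀) ≤ f x₀ M := le_trans (by linarith) (hA3M x₀).2
    have h3 : ε * v x₀ ≤ M := ((hsm x₀).le_iff_le).mp h2
    rw [le_div_iff₀ hε]
    linarith
  -- at the min point
  have hlocmin : IsLocalMin v x₁ := Filter.Eventually.of_forall hmin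
  have hgrad1 : gradient v x₁ = 0 := by rw [gradient, hlocmin.fderiv_eq_zero]; simp
  have hlap1 : 0 ≤ lap v x₁ := lap_nonneg_of_min hv hlocmin
  have hlb : -M / ε ≤ v x₁ := by
    have h1 : 0 ≤ f x₁ (ε * v x₁) + G x₁ 0 := by
      have := heq x₁
      rw [hgrad1] at this
      nlinarith [sq_nonneg η]
    have h2 : f x₁ (-M) ≤ f x₁ (ε * v x₁) := le_trans (hA3M x₁).1 (by linarith)
    have h3 : -M ≤ ε * v x₁ := ((hsm x₁).le_iff_le).mp h2
    rw [div_le_iff₀ hε]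
    linarith
  exact ⟨le_trans hlb (hmin x), le_trans (hmax x) hub⟩
end
end

section
/- Fix P ∈ ℝ with |P| < 1 and let V : ℝ → ℝ be continuous, 1-periodic, with min V = 0 and max V < 1. Let H̄(P) ∈ ℝ be a constant such that the equation (|P + u'(x)|² − 1)² − V(x) = H̄(P) on 𝕋 admits a continuous 1-periodic viscosity solution, and suppose H̄(P) > 0. For each ε > 0 let u^ε be the continuous 1-periodic viscosity solution of ε u^ε(x) + (|P + (u^ε)'(x)|² − 1)² − V(x) = 0 on 𝕋. Then there exists ε₀ > 0 such that for every ε ∈ (0, ε₀) the function x ↦ u^ε(x) + P x is 1-Lipschitz on ℝ (equivalently, |P + (u^ε)'| ≤ 1 in the viscosity sense). -/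
open Filter Set
open scoped Topology

noncomputable section

/-- Viscosity subsolution of `E(x, u(x), u'(x)) = 0` on `ℝ`. -/
def ViscSub1 (E : ℝ → ℝ → ℝ → ℝ) (u : ℝ → ℝ) : Prop :=
  ∀ φ : ℝ → ℝ, ContDiff ℝ 1 φ → ∀ x₀ : ℝ, IsLocalMax (u - φ) x₀ →
    E x₀ (u x₀) (deriv φ x₀) ≤ 0

/-- Viscosity supersolution of `E(x, u(x), u'(x)) = 0` on `ℝ`. -/
def ViscSuper1 (E : ℝ → ℝ → ℝ → ℝ) (u : ℝ → ℝ) : Prop :=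
  ∀ φ : ℝ → ℝ, ContDiff ℝ 1 φ → ∀ x₀ : ℝ, IsLocalMin (u - φ) x₀ →
    0 ≤ E x₀ (u x₀) (deriv φ x₀)

/-- Viscosity solution of `E(x, u(x), u'(x)) = 0` on `ℝ`. -/
def ViscSol1 (E : ℝ → ℝ → ℝ → ℝ) (u : ℝ → ℝ) : Prop :=
  ViscSub1 E u ∧ ViscSuper1 E u

/-! ### Auxiliary lemmas -/

/-- Integer shift invariance of a 1-periodic function. -/
lemma periodic_shift {f : ℝ → ℝ} (hf : Function.Periodic f 1) (n : ℤ) (x : ℝ) :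
    f (x - n) = f x := by
  simpa using hf.sub_int_mul_eq (x := x) n

lemma periodic_fract {f : ℝ → ℝ} (hf : Function.Periodic f 1) (x : ℝ) :
    f (Int.fract x) = f x := by
  have : Int.fract x = x - (⌊x⌋ : ℤ) := rfl
  rw [this, periodic_shift hf]

/-- A continuous 1-periodic function is bounded. -/
lemma periodic_bound {f : ℝ → ℝ} (hc : Continuous f) (hf : Function.Periodic f 1) :
    ∃ M : ℝ, 0 ≤ M ∧ ∀ x, |f x| ≤ M := by
  obtain ⟨m, hm, hmax⟩ := isCompact_Icc.exists_isMaxOn (⟨0, by norm_num⟩ : (Icc (0:ℝ) 1).Nonempty)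
    ((continuous_abs.comp hc).continuousOn)
  refine ⟨|f m|, abs_nonneg _, fun x => ?_⟩
  have h1 : Int.fract x ∈ Icc (0:ℝ) 1 := ⟨Int.fract_nonneg x, (Int.fract_lt_one x).le⟩
  have := hmax h1
  simpa [periodic_fract hf] using this

/-- A continuous 1-periodic function is uniformly continuous (ε-δ form). -/
lemma periodic_unifcont {f : ℝ → ℝ} (hc : Continuous f) (hf : Function.Periodic f 1)
    {η : ℝ} (hη : 0 < η) :
    ∃ δ : ℝ, 0 < δ ∧ ∀ a b : ℝ, |a - b| ≤ δ → |f a - f b| ≤ η := by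
  have hucon : UniformContinuousOn f (Icc (-1 : ℝ) 2) :=
    isCompact_Icc.uniformContinuousOn_of_continuous hc.continuousOn
  rw [Metric.uniformContinuousOn_iff_le] at hucon
  obtain ⟨δ, hδ, hδ'⟩ := hucon η hη
  refine ⟨min δ (1/2), by positivity, fun a b hab => ?_⟩
  have hab2 : |a - b| ≤ δ := le_trans hab (min_le_left _ _)
  have hab3 : |a - b| ≤ 1/2 := le_trans hab (min_le_right _ _)
  set n : ℤ := ⌊a⌋ with hn
  have ha' : a - n ∈ Icc (-1 : ℝ) 2 := by
    constructor
    · have := Int.fract_nonneg a; change (0:ℝ) ≤ a - ⌊a⌋ at this; linarith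
    · have := Int.fract_lt_one a; change a - (⌊a⌋:ℝ) < 1 at this; linarith
  have hb' : b - n ∈ Icc (-1 : ℝ) 2 := by
    have h1 : (0:ℝ) ≤ a - n := Int.fract_nonneg a
    have h2 : a - (n:ℝ) < 1 := Int.fract_lt_one a
    have h3 : -(1/2 : ℝ) ≤ b - a := by
      have := abs_le.1 hab3; linarith [this.2]
    have h4 : b - a ≤ 1/2 := by
      have := abs_le.1 hab3; linarith [this.1]
    constructor <;> [nlinarith; nlinarith]
  have hdist : dist (a - (n:ℝ)) (b - n) ≤ δ := by
    rw [Real.dist_eq]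
    have : a - (n:ℝ) - (b - n) = a - b := by ring
    rw [this]; exact hab2
  have := hδ' _ ha' _ hb' hdist
  rw [Real.dist_eq] at this
  rwa [periodic_shift hf, periodic_shift hf] at this

/-- A continuous function with no local minima, drifting down over periods, is antitone. -/
lemma no_min_antitone {g : ℝ → ℝ} (hc : Continuous g)
    (hmin : ∀ t, ¬ IsLocalMin g t) (hdrift : ∀ t, g (t + 1) < g t) : Antitone g := by
  intro x y hxy
  by_contra hcon
  push_neg at hcon
  obtain ⟨t₀, ht₀, hmin₀⟩ := isCompact_Icc.exists_isMinOn
    (⟨x, by constructor <;> linarith⟩ : (Icc (x - 1) y).Nonempty) hc.continuousOn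
  rcases eq_or_lt_of_le ht₀.1 with h1 | h1
  · -- t₀ = x - 1
    have hx1 : g x < g (x - 1) := by
      have := hdrift (x - 1); simpa using this
    have hh : g t₀ ≤ g x := hmin₀ (⟨by linarith, hxy⟩ : x ∈ Icc (x - 1) y)
    rw [← h1] at hh
    linarith
  · rcases eq_or_lt_of_le ht₀.2 with h2 | h2
    · -- t₀ = y
      have : g t₀ ≤ g x := hmin₀ (⟨by linarith, hxy⟩ : x ∈ Icc (x - 1) y)
      rw [h2] at this
      linarith
    · exact hmin t₀ (hmin₀.isLocalMin (Icc_mem_nhds h1 h2))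

/-- A continuous function with no local minima, drifting up over periods, is monotone. -/
lemma no_min_monotone {g : ℝ → ℝ} (hc : Continuous g)
    (hmin : ∀ t, ¬ IsLocalMin g t) (hdrift : ∀ t, g t < g (t + 1)) : Monotone g := by
  intro x y hxy
  by_contra hcon
  push_neg at hcon
  obtain ⟨t₀, ht₀, hmin₀⟩ := isCompact_Icc.exists_isMinOn
    (⟨x, by constructor <;> linarith⟩ : (Icc x (y + 1)).Nonempty) hc.continuousOn
  rcases eq_or_lt_of_le ht₀.1 with h1 | h1
  · -- t₀ = x
    have : g t₀ ≤ g y := hmin₀ (⟨hxy, by linarith⟩ : y ∈ Icc x (y + 1))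
    rw [← h1] at this
    linarith
  · rcases eq_or_lt_of_le ht₀.2 with h2 | h2
    · -- t₀ = y + 1
      have hy1 : g y < g (y + 1) := hdrift y
      have : g t₀ ≤ g y := hmin₀ (⟨hxy, by linarith⟩ : y ∈ Icc x (y + 1))
      rw [h2] at this
      linarith
    · exact hmin t₀ (hmin₀.isLocalMin (Icc_mem_nhds h1 h2))

/-- Key slope lemma (upper): if the supersolution inequality fails at slope `q > 0`
for a 1-periodic supersolution, then `u y - u x ≤ q (y - x)` for `x ≤ y`. -/
lemma visc_slope_upper (E : ℝ → ℝ → ℝ → ℝ) (u : ℝ → ℝ) (hc : Continuous u)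
    (hper : Function.Periodic u 1) (hsuper : ViscSuper1 E u) (q : ℝ) (hqpos : 0 < q)
    (hq : ∀ t, E t (u t) q < 0) :
    ∀ x y : ℝ, x ≤ y → u y - u x ≤ q * (y - x) := by
  have key : Antitone (fun t => u t - q * t) := by
    apply no_min_antitone (by continuity)
    · intro t ht
      have hφ : ContDiff ℝ 1 (fun s : ℝ => q * s) := contDiff_const.mul contDiff_id
      have heq : u - (fun s : ℝ => q * s) = fun t => u t - q * t := rfl
      have hderiv : deriv (fun s : ℝ => q * s) t = q := by
        have : HasDerivAt (fun s : ℝ => q * s) (q * 1) t := (hasDerivAt_id t).const_mul q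
        simpa using this.deriv
      have := hsuper (fun s : ℝ => q * s) hφ t (by rw [heq]; exact ht)
      rw [hderiv] at this
      exact absurd this (not_le.2 (hq t))
    · intro t
      have : u (t + 1) = u t := hper t
      simp only [this]
      nlinarith
  intro x y hxy
  have := key hxy
  simp only at this
  nlinarith

/-- Key slope lemma (lower): if the supersolution inequality fails at slope `q < 0`
for a 1-periodic supersolution, then `q (y - x) ≤ u y - u x` for `x ≤ y`. -/
lemma visc_slope_lower (E : ℝ → ℝ → ℝ → ℝ) (u : ℝ → ℝ) (hc : Continuous u)
    (hper : Function.Periodic u 1) (hsuper : ViscSuper1 E u) (q : ℝ) (hqneg : q < 0)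
    (hq : ∀ t, E t (u t) q < 0) :
    ∀ x y : ℝ, x ≤ y → q * (y - x) ≤ u y - u x := by
  have key : Monotone (fun t => u t - q * t) := by
    apply no_min_monotone (by continuity)
    · intro t ht
      have hφ : ContDiff ℝ 1 (fun s : ℝ => q * s) := contDiff_const.mul contDiff_id
      have heq : u - (fun s : ℝ => q * s) = fun t => u t - q * t := rfl
      have hderiv : deriv (fun s : ℝ => q * s) t = q := by
        have : HasDerivAt (fun s : ℝ => q * s) (q * 1) t := (hasDerivAt_id t).const_mul q
        simpa using this.deriv
      have := hsuper (fun s : ℝ => q * s) hφ t (by rw [heq]; exact ht)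
      rw [hderiv] at this
      exact absurd this (not_le.2 (hq t))
    · intro t
      have : u (t + 1) = u t := hper t
      simp only [this]
      nlinarith
  intro x y hxy
  have := key hxy
  simp only at this
  nlinarith

set_option maxHeartbeats 1000000 in
/-- Comparison (doubling of variables) bound: `ε uε ≤ -(3/4) Hbar + 2 ε Mw`. -/
lemma key_bound (P Hbar : ℝ) (hHpos : 0 < Hbar)
    (V : ℝ → ℝ) (hVcont : Continuous V) (hVper : Function.Periodic V 1)
    (w : ℝ → ℝ) (hwc : Continuous w) (hwper : Function.Periodic w 1)
    (hwsuper : ViscSuper1 (fun x _ p => ((P + p) ^ 2 - 1) ^ 2 - V x - Hbar) w)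
    (hwlip : ∀ a b : ℝ, |w a - w b| ≤ 2 * |a - b|)
    (Mw : ℝ) (hMw : ∀ x, |w x| ≤ Mw)
    (ε : ℝ) (hε : 0 < ε)
    (uu : ℝ → ℝ) (huc : Continuous uu) (huper : Function.Periodic uu 1)
    (husub : ViscSub1 (fun x r p => ε * r + ((P + p) ^ 2 - 1) ^ 2 - V x) uu) :
    ∀ x, ε * uu x ≤ -(3/4) * Hbar + ε * (2 * Mw) := by
  obtain ⟨δ, hδpos, hδ⟩ := periodic_unifcont hVcont hVper (show (0:ℝ) < Hbar/4 by linarith)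
  obtain ⟨Mu, hMu0, hMu⟩ := periodic_bound huc huper
  have hMw0 : 0 ≤ Mw := le_trans (abs_nonneg _) (hMw 0)
  set α : ℝ := 4 / δ with hα_def
  have hα : 0 < α := by positivity
  set B : ℝ := Mu + Mw with hB_def
  have hB0 : 0 ≤ B := by positivity
  obtain ⟨R, hR0, hR2⟩ : ∃ R : ℝ, 0 ≤ R ∧ R ^ 2 = 4 * (B + 1) / α := by
    refine ⟨Real.sqrt (4 * (B + 1) / α), Real.sqrt_nonneg _, ?_⟩
    rw [Real.sq_sqrt]; positivity
  set Φ : ℝ → ℝ → ℝ := fun x y => uu x - w y - α / 2 * (x - y) ^ 2 with hΦ_def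
  set K : Set (ℝ × ℝ) := Icc (0:ℝ) 1 ×ˢ Icc (-R) (R + 1) with hK_def
  have hKc : IsCompact K := isCompact_Icc.prod isCompact_Icc
  have h00K : ((0:ℝ), (0:ℝ)) ∈ K := by
    simp only [hK_def, Set.mem_prod, Set.mem_Icc]
    norm_num
    constructor <;> linarith
  have hKne : K.Nonempty := ⟨(0, 0), h00K⟩
  have hΦc : Continuous (fun p : ℝ × ℝ => Φ p.1 p.2) := by
    apply Continuous.sub
    apply Continuous.sub (huc.comp continuous_fst) (hwc.comp continuous_snd)
    continuity
  obtain ⟨⟨xh, yh⟩, hxy_mem, hxy_max⟩ := hKc.exists_isMaxOn hKne hΦc.continuousOn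
  -- global maximality
  have hglob : ∀ x y : ℝ, Φ x y ≤ Φ xh yh := by
    intro x y
    have h00 : Φ 0 0 ≤ Φ xh yh := hxy_max h00K
    by_cases hcase : Φ x y ≤ Φ 0 0
    · linarith
    push_neg at hcase
    -- then |x - y| ≤ R
    have hbd : α / 2 * (x - y) ^ 2 < 2 * (B + 1) := by
      have h1 : Φ 0 0 = uu 0 - w 0 - 0 := by simp [hΦ_def]
      have h2 : -Mu - Mw ≤ uu 0 - w 0 := by
        have := abs_le.1 (hMu 0); have := abs_le.1 (hMw 0); linarith [(abs_le.1 (hMu 0)).1, (abs_le.1 (hMw 0)).2]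
      have h3 : uu x - w y ≤ Mu + Mw := by
        linarith [(abs_le.1 (hMu x)).2, (abs_le.1 (hMw y)).1]
      have h4 : Φ x y = uu x - w y - α / 2 * (x - y) ^ 2 := rfl
      rw [h4] at hcase; rw [h1] at hcase
      nlinarith
    have hxyR : |x - y| ≤ R := by
      have h5 : (x - y) ^ 2 ≤ R ^ 2 := by
        rw [hR2, le_div_iff₀ hα]; nlinarith
      rw [abs_le]
      exact abs_le_of_sq_le_sq' h5 hR0
    set n : ℤ := ⌊x⌋ with hn
    have hfr1 : (0:ℝ) ≤ x - n := Int.fract_nonneg x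
    have hfr2 : x - (n:ℝ) < 1 := Int.fract_lt_one x
    have hmem : ((x - n : ℝ), (y - n : ℝ)) ∈ K := by
      simp only [hK_def, Set.mem_prod, Set.mem_Icc]
      refine ⟨⟨hfr1, hfr2.le⟩, ?_, ?_⟩
      · linarith [(abs_le.1 hxyR).2]
      · linarith [(abs_le.1 hxyR).1]
    have heq : Φ (x - n) (y - n) = Φ x y := by
      simp only [hΦ_def]
      rw [periodic_shift huper, periodic_shift hwper]
      ring_nf
    calc Φ x y = Φ (x - n) (y - n) := heq.symm
      _ ≤ Φ xh yh := hxy_max hmem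
  -- penalty estimate
  have hpen : α / 2 * (xh - yh) ^ 2 ≤ w xh - w yh := by
    have h1 := hglob xh xh
    have h2 : Φ xh xh = uu xh - w xh := by simp [hΦ_def]
    have h3 : Φ xh yh = uu xh - w yh - α / 2 * (xh - yh) ^ 2 := rfl
    rw [h2, h3] at h1; linarith
  have hdsmall : |xh - yh| ≤ δ := by
    have h1 : α / 2 * |xh - yh| ^ 2 ≤ 2 * |xh - yh| := by
      rw [sq_abs]
      exact le_trans hpen (le_trans (le_abs_self _) (hwlip xh yh))
    by_cases hz : |xh - yh| = 0
    · rw [hz]; linarith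
    · have hzpos : 0 < |xh - yh| := lt_of_le_of_ne (abs_nonneg _) (Ne.symm hz)
      have h2 : α / 2 * |xh - yh| ≤ 2 := by
        by_contra hcc
        push_neg at hcc
        nlinarith
      have h7 := mul_le_mul_of_nonneg_right h2 hδpos.le
      have h8 : α / 2 * |xh - yh| * δ = 2 * |xh - yh| := by
        rw [hα_def]; field_simp; ring
      rw [h8] at h7
      linarith
  have hVclose : |V xh - V yh| ≤ Hbar / 4 := hδ _ _ hdsmall
  -- viscosity tests
  set p₀ : ℝ := α * (xh - yh) with hp₀
  have htest1 : ε * uu xh + ((P + p₀) ^ 2 - 1) ^ 2 - V xh ≤ 0 := by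
    set φ₁ : ℝ → ℝ := fun s => α / 2 * (s - yh) ^ 2 with hφ₁
    have hφ₁c : ContDiff ℝ 1 φ₁ :=
      contDiff_const.mul ((contDiff_id.sub contDiff_const).pow 2)
    have hmax₁ : IsLocalMax (uu - φ₁) xh := by
      apply Filter.Eventually.of_forall
      intro s
      have := hglob s yh
      have h1 : (uu - φ₁) s = Φ s yh + w yh := by
        simp only [Pi.sub_apply, hφ₁, hΦ_def]; ring
      have h2 : (uu - φ₁) xh = Φ xh yh + w yh := by
        simp only [Pi.sub_apply, hφ₁, hΦ_def]; ring
      rw [h1, h2]; linarith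
    have hd₁ : deriv φ₁ xh = p₀ := by
      have h : HasDerivAt φ₁ (α / 2 * (2 * (xh - yh) ^ 1 * 1)) xh :=
        (((hasDerivAt_id xh).sub_const yh).pow 2).const_mul (α / 2)
      rw [h.deriv, hp₀]; ring
    have := husub φ₁ hφ₁c xh hmax₁
    rw [hd₁] at this
    exact this
  have htest2 : 0 ≤ ((P + p₀) ^ 2 - 1) ^ 2 - V yh - Hbar := by
    set φ₂ : ℝ → ℝ := fun s => -(α / 2 * (xh - s) ^ 2) with hφ₂
    have hφ₂c : ContDiff ℝ 1 φ₂ :=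
      (contDiff_const.mul ((contDiff_const.sub contDiff_id).pow 2)).neg
    have hmin₂ : IsLocalMin (w - φ₂) yh := by
      apply Filter.Eventually.of_forall
      intro s
      have := hglob xh s
      have h1 : (w - φ₂) s = uu xh - Φ xh s := by
        simp only [Pi.sub_apply, hφ₂, hΦ_def]; ring
      have h2 : (w - φ₂) yh = uu xh - Φ xh yh := by
        simp only [Pi.sub_apply, hφ₂, hΦ_def]; ring
      rw [h1, h2]; linarith
    have hd₂ : deriv φ₂ yh = p₀ := by
      have h : HasDerivAt (fun s : ℝ => xh - s) (-1 : ℝ) yh := by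
        simpa using (hasDerivAt_id yh).const_sub xh
      have h2 : HasDerivAt φ₂ (-(α / 2 * (2 * (xh - yh) ^ 1 * (-1)))) yh :=
        ((h.pow 2).const_mul (α / 2)).neg
      rw [h2.deriv, hp₀]; ring
    have := hwsuper φ₂ hφ₂c yh hmin₂
    rw [hd₂] at this
    exact this
  have hkey : ε * uu xh ≤ -(3/4) * Hbar := by
    have h1 : ε * uu xh ≤ V xh - V yh - Hbar := by linarith
    have h2 := (abs_le.1 hVclose).2
    linarith
  -- conclude
  intro x
  have h1 : Φ x x ≤ Φ xh yh := hglob x x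
  have h2 : Φ x x = uu x - w x := by simp [hΦ_def]
  have h3 : Φ xh yh ≤ uu xh - w yh := by
    have hpos : 0 ≤ α / 2 * (xh - yh) ^ 2 := by positivity
    have h4 : Φ xh yh = uu xh - w yh - α / 2 * (xh - yh) ^ 2 := rfl
    rw [h4]
    linarith
  have h5 : uu x ≤ uu xh + 2 * Mw := by
    have := (abs_le.1 (hMw x)).2
    have := (abs_le.1 (hMw yh)).1
    rw [h2] at h1
    linarith
  nlinarith [mul_le_mul_of_nonneg_left h5 hε.le]

theorem stmt6 (P : ℝ) (hP : |P| < 1)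
    (V : ℝ → ℝ) (hVcont : Continuous V) (hVper : Function.Periodic V 1)
    (hVmin : sInf (Set.range V) = 0) (hVmax : sSup (Set.range V) < 1)
    (Hbar : ℝ) (hHpos : 0 < Hbar)
    (hHbar : ∃ w : ℝ → ℝ, Continuous w ∧ Function.Periodic w 1 ∧
      ViscSol1 (fun x _ p => ((P + p) ^ 2 - 1) ^ 2 - V x - Hbar) w)
    (u : ℝ → ℝ → ℝ)
    (hu : ∀ ε : ℝ, 0 < ε → Continuous (u ε) ∧ Function.Periodic (u ε) 1 ∧
      ViscSol1 (fun x r p => ε * r + ((P + p) ^ 2 - 1) ^ 2 - V x) (u ε)) :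
    ∃ ε₀ : ℝ, 0 < ε₀ ∧ ∀ ε : ℝ, 0 < ε → ε < ε₀ →
      LipschitzWith 1 (fun x : ℝ => u ε x + P * x) := by
  obtain ⟨hP1, hP2⟩ := abs_lt.1 hP
  obtain ⟨w, hwc, hwper, hwsub, hwsuper⟩ := hHbar
  -- V is nonnegative
  have hV0 : ∀ x, 0 ≤ V x := by
    intro x
    have hbdd : BddBelow (Set.range V) := by
      obtain ⟨M, _, hM⟩ := periodic_bound hVcont hVper
      exact ⟨-M, fun y ⟨z, hz⟩ => by rw [← hz]; linarith [(abs_le.1 (hM z)).1]⟩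
    have := csInf_le hbdd (Set.mem_range_self x)
    rwa [hVmin] at this
  -- w is 2-Lipschitz (from the slope lemmas, since V + Hbar > 0)
  have hw_upper := visc_slope_upper _ w hwc hwper hwsuper (1 - P) (by linarith)
    (fun t => by
      have : ((P + (1 - P)) ^ 2 - 1) ^ 2 = 0 := by norm_num
      simp only [this]
      linarith [hV0 t])
  have hw_lower := visc_slope_lower _ w hwc hwper hwsuper (-1 - P) (by linarith)
    (fun t => by
      have : ((P + (-1 - P)) ^ 2 - 1) ^ 2 = 0 := by norm_num
      simp only [this]
      linarith [hV0 t])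
  have hwlip : ∀ a b : ℝ, |w a - w b| ≤ 2 * |a - b| := by
    intro a b
    rcases le_total a b with hab | hab
    · rw [abs_le]
      have h1 := hw_upper a b hab
      have h2 := hw_lower a b hab
      have hab' : |a - b| = b - a := by rw [abs_sub_comm]; exact abs_of_nonneg (by linarith)
      rw [hab']
      constructor <;> nlinarith
    · rw [abs_le]
      have h1 := hw_upper b a hab
      have h2 := hw_lower b a hab
      have hab' : |a - b| = a - b := abs_of_nonneg (by linarith)
      rw [hab']
      constructor <;> nlinarith
  obtain ⟨Mw, hMw0, hMw⟩ := periodic_bound hwc hwper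
  refine ⟨Hbar / (8 * (Mw + 1)), by positivity, fun ε hε hε₀ => ?_⟩
  obtain ⟨huc, huper, husub, husuper⟩ := hu ε hε
  -- ε u ε < V pointwise
  have hbound := key_bound P Hbar hHpos V hVcont hVper w hwc hwper hwsuper hwlip Mw hMw
    ε hε (u ε) huc huper husub
  have hεu : ∀ x, ε * u ε x < V x := by
    intro x
    have h1 := hbound x
    have h2 : ε * (2 * Mw) < Hbar / 4 := by
      have h3 : ε * (2 * Mw) ≤ ε * (2 * (Mw + 1)) := by nlinarith
      have h4 : ε * (2 * (Mw + 1)) < (Hbar / (8 * (Mw + 1))) * (2 * (Mw + 1)) := by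
        apply mul_lt_mul_of_pos_right hε₀
        positivity
      have h5 : (Hbar / (8 * (Mw + 1))) * (2 * (Mw + 1)) = Hbar / 4 := by
        field_simp; ring
      linarith
    have := hV0 x
    linarith
  -- slope bounds for u ε
  have hu_upper := visc_slope_upper _ (u ε) huc huper husuper (1 - P) (by linarith)
    (fun t => by
      have : ((P + (1 - P)) ^ 2 - 1) ^ 2 = 0 := by norm_num
      simp only [this]
      linarith [hεu t])
  have hu_lower := visc_slope_lower _ (u ε) huc huper husuper (-1 - P) (by linarith)
    (fun t => by
      have : ((P + (-1 - P)) ^ 2 - 1) ^ 2 = 0 := by norm_num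
      simp only [this]
      linarith [hεu t])
  rw [lipschitzWith_iff_dist_le_mul]
  intro x y
  rw [Real.dist_eq, Real.dist_eq, NNReal.coe_one, one_mul]
  rcases le_total x y with hxy | hxy
  · have h1 := hu_upper x y hxy
    have h2 := hu_lower x y hxy
    have hab : |x - y| = y - x := by rw [abs_sub_comm]; exact abs_of_nonneg (by linarith)
    rw [hab, abs_le]
    constructor <;> nlinarith
  · have h1 := hu_upper y x hxy
    have h2 := hu_lower y x hxy
    have hab : |x - y| = x - y := abs_of_nonneg (by linarith)
    rw [hab, abs_le]
    constructor <;> nlinarith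
end
end

section
/- Fix P ∈ ℝ with |P| > 1 and let V : ℝ → ℝ be continuous, 1-periodic, with min V = 0 and max V < 1. Let H̄(P) ∈ ℝ be a constant such that the equation (|P + u'(x)|² − 1)² − V(x) = H̄(P) on 𝕋 admits a continuous 1-periodic viscosity solution, and suppose H̄(P) > 0. For each ε > 0 let u^ε be the continuous 1-periodic viscosity solution of ε u^ε(x) + (|P + (u^ε)'(x)|² − 1)² − V(x) = 0 on 𝕋. Then there exists ε₀ > 0 such that for every ε ∈ (0, ε₀): if P > 1, the function x ↦ u^ε(x) + (P − 1)x is nondecreasing on ℝ (i.e., P + (u^ε)' ≥ 1 in the viscosity sense), and if P < −1, the function x ↦ u^ε(x) + (P + 1)x is nonincreasing on ℝ (i.e., P + (u^ε)' ≤ −1 in the viscosity sense). -/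
open Filter Set
open scoped Topology

noncomputable section

/-- periodic continuous real function is bounded -/
lemma periodic_bounds {f : ℝ → ℝ} (hc : Continuous f) (hp : Function.Periodic f 1) :
    ∃ lo hi : ℝ, ∀ t : ℝ, lo ≤ f t ∧ f t ≤ hi := by
  obtain ⟨x₁, -, h₁⟩ := isCompact_Icc.exists_isMinOn (s := Icc (0:ℝ) 1) ⟨0, by norm_num⟩
    hc.continuousOn
  obtain ⟨x₂, -, h₂⟩ := isCompact_Icc.exists_isMaxOn (s := Icc (0:ℝ) 1) ⟨0, by norm_num⟩
    hc.continuousOn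
  refine ⟨f x₁, f x₂, fun t => ?_⟩
  have hmem : t - (⌊t⌋ : ℝ) ∈ Icc (0:ℝ) 1 :=
    ⟨by linarith [Int.floor_le t], by linarith [Int.lt_floor_add_one t]⟩
  have hft : f (t - (⌊t⌋ : ℝ)) = f t := by
    simpa using hp.sub_int_mul_eq (x := t) ⌊t⌋
  exact ⟨hft ▸ h₁ hmem, hft ▸ h₂ hmem⟩

/-- continuous function, coercive at +∞, with no local minimum, is monotone -/
lemma mono_aux {g : ℝ → ℝ} (hc : Continuous g)
    (hcoer : ∀ C : ℝ, ∃ B : ℝ, ∀ t : ℝ, B ≤ t → C ≤ g t)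
    (hnomin : ∀ t₀ : ℝ, ¬ IsLocalMin g t₀) : Monotone g := by
  intro a b hab
  rcases eq_or_lt_of_le hab with rfl | hab
  · exact le_rfl
  by_contra hgt
  push_neg at hgt
  obtain ⟨B0, hB0⟩ := hcoer (g a)
  set B := max b B0 with hB
  have hminex := (isCompact_Icc (a := a) (b := B)).exists_isMinOn
    ⟨a, ⟨le_rfl, le_trans hab.le (le_max_left _ _)⟩⟩ hc.continuousOn
  obtain ⟨t₀, ht₀mem, ht₀min⟩ := hminex
  have hminon : ∀ t ∈ Icc a B, g t₀ ≤ g t := fun t ht => ht₀min ht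
  have h1 : g t₀ ≤ g b := hminon b ⟨hab.le, le_max_left _ _⟩
  have hta : a < t₀ := by
    rcases eq_or_lt_of_le ht₀mem.1 with h | h
    · exfalso; rw [h] at hgt; linarith
    · exact h
  have htB : t₀ < B := by
    rcases eq_or_lt_of_le ht₀mem.2 with h | h
    · exfalso
      have : g a ≤ g B := hB0 B (le_max_right _ _)
      rw [h] at h1; linarith
    · exact h
  refine hnomin t₀ ?_
  have hmem : Ioo a B ∈ 𝓝 t₀ := Ioo_mem_nhds hta htB
  filter_upwards [hmem] with t ht
  exact hminon t ⟨ht.1.le, ht.2.le⟩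

set_option maxHeartbeats 2000000 in
theorem stmt7 (P : ℝ) (hP : 1 < |P|)
    (V : ℝ → ℝ) (hVcont : Continuous V) (hVper : Function.Periodic V 1)
    (hVmin : sInf (Set.range V) = 0) (hVmax : sSup (Set.range V) < 1)
    (Hbar : ℝ) (hHpos : 0 < Hbar)
    (hHbar : ∃ w : ℝ → ℝ, Continuous w ∧ Function.Periodic w 1 ∧
      ViscSol1 (fun x _ p => ((P + p) ^ 2 - 1) ^ 2 - V x - Hbar) w)
    (u : ℝ → ℝ → ℝ)
    (hu : ∀ ε : ℝ, 0 < ε → Continuous (u ε) ∧ Function.Periodic (u ε) 1 ∧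
      ViscSol1 (fun x r p => ε * r + ((P + p) ^ 2 - 1) ^ 2 - V x) (u ε)) :
    ∃ ε₀ : ℝ, 0 < ε₀ ∧ ∀ ε : ℝ, 0 < ε → ε < ε₀ →
      (1 < P → Monotone (fun x : ℝ => u ε x + (P - 1) * x)) ∧
      (P < -1 → Antitone (fun x : ℝ => u ε x + (P + 1) * x)) := by
  classical
  obtain ⟨w, hwc, hwp, hwsub, hwsup⟩ := hHbar
  obtain ⟨mw, Mw, hwB⟩ := periodic_bounds hwc hwp
  -- V is nonnegative
  have hVbdd : BddBelow (Set.range V) := by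
    obtain ⟨lo, hi, h⟩ := periodic_bounds hVcont hVper
    exact ⟨lo, by rintro y ⟨x, rfl⟩; exact (h x).1⟩
  have hV0 : ∀ x : ℝ, 0 ≤ V x := fun x => hVmin ▸ csInf_le hVbdd ⟨x, rfl⟩
  set osc := Mw - mw with hosc_def
  clear_value osc
  have hosc0 : 0 ≤ osc := by
    have h := hwB 0
    simp only [hosc_def]; linarith [h.1, h.2]
  -- uniform continuity of V
  obtain ⟨r, hr0, hrV⟩ : ∃ r : ℝ, 0 < r ∧ ∀ a b : ℝ, |a - b| ≤ r → V a - V b ≤ Hbar / 4 := by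
    have huc : UniformContinuousOn V (Icc (-1:ℝ) 2) :=
      isCompact_Icc.uniformContinuousOn_of_continuous hVcont.continuousOn
    rw [Metric.uniformContinuousOn_iff_le] at huc
    obtain ⟨d, hd0, hd⟩ := huc (Hbar/4) (by positivity)
    refine ⟨min d (1/2), by positivity, fun a b hab => ?_⟩
    have hab2 : |a - b| ≤ 1/2 := le_trans hab (min_le_right _ _)
    have habd : |a - b| ≤ d := le_trans hab (min_le_left _ _)
    obtain ⟨hab2a, hab2b⟩ := abs_le.mp hab2
    have h1 : (0:ℝ) ≤ a - ⌊a⌋ := by linarith [Int.floor_le a]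
    have h2 : a - (⌊a⌋:ℝ) < 1 := by linarith [Int.lt_floor_add_one a]
    have hmema : a - (⌊a⌋:ℝ) ∈ Icc (-1:ℝ) 2 := ⟨by linarith, by linarith⟩
    have hmemb : b - (⌊a⌋:ℝ) ∈ Icc (-1:ℝ) 2 := ⟨by linarith, by linarith⟩
    have hdist : dist (a - (⌊a⌋:ℝ)) (b - (⌊a⌋:ℝ)) ≤ d := by
      rw [Real.dist_eq]
      have : a - (⌊a⌋:ℝ) - (b - (⌊a⌋:ℝ)) = a - b := by ring
      rw [this]; exact habd
    have hVab := hd _ hmema _ hmemb hdist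
    rw [Real.dist_eq] at hVab
    have hVa : V (a - (⌊a⌋:ℝ)) = V a := by simpa using hVper.sub_int_mul_eq (x := a) ⌊a⌋
    have hVb : V (b - (⌊a⌋:ℝ)) = V b := by simpa using hVper.sub_int_mul_eq (x := b) ⌊a⌋
    rw [hVa, hVb] at hVab
    linarith [(abs_le.mp hVab).2]
  set α : ℝ := osc / r^2 + 1 with hα_def
  clear_value α
  have hα0 : 0 < α := by rw [hα_def]; positivity
  have hosclt : osc / α < r^2 := by
    rw [div_lt_iff₀ hα0]
    have he : r^2 * α = osc + r^2 := by
      rw [hα_def]; field_simp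
    nlinarith [sq_nonneg r, hr0]
  refine ⟨Hbar / (4 * (osc + 1)), by positivity, fun ε hε hεs => ?_⟩
  obtain ⟨uc, up, usub, usup⟩ := hu ε hε
  obtain ⟨mu, Mu, huB⟩ := periodic_bounds uc up
  -- STEP A : ε · uᵋ ≤ -Hbar/2 everywhere
  have keyA : ∀ x : ℝ, ε * u ε x ≤ -(Hbar/2) := by
    set Φ : ℝ → ℝ → ℝ := fun x y => u ε x - w y - α * (x - y)^2 with hΦ
    clear_value Φ
    set R : ℝ := Real.sqrt ((Mu - mw - (u ε 0 - w 0) + 1)/α) with hR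
    clear_value R
    have hnum : 0 < Mu - mw - (u ε 0 - w 0) + 1 := by
      have h1 := (huB 0).2; have h2 := (hwB 0).1; linarith
    have hR0 : 0 < R := by
      rw [hR]; exact Real.sqrt_pos.mpr (by positivity)
    have hRsq : α * R^2 = Mu - mw - (u ε 0 - w 0) + 1 := by
      rw [hR, Real.sq_sqrt (le_of_lt (by positivity))]
      field_simp
    have htail : ∀ x y : ℝ, R ≤ |x - y| → Φ x y < Φ 0 0 := by
      intro x y hxy
      have h1 : R^2 ≤ (x-y)^2 := by nlinarith [abs_nonneg (x-y), sq_abs (x-y)]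
      have h2 := (huB x).2
      have h3 := (hwB y).1
      have h4 : α * R^2 ≤ α * (x-y)^2 := by nlinarith
      simp only [hΦ]
      nlinarith
    -- maximize over a compact set
    have hKc : IsCompact (Icc (0:ℝ) 1 ×ˢ Icc (-R) (1+R)) :=
      (isCompact_Icc).prod (isCompact_Icc)
    have hΦc : Continuous (fun z : ℝ × ℝ => Φ z.1 z.2) := by
      simp only [hΦ]
      exact ((uc.comp continuous_fst).sub (hwc.comp continuous_snd)).sub
        (continuous_const.mul ((continuous_fst.sub continuous_snd).pow 2))
    have hmem00 : ((0:ℝ), (0:ℝ)) ∈ Icc (0:ℝ) 1 ×ˢ Icc (-R) (1+R) := by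
      refine ⟨⟨le_rfl, zero_le_one⟩, ⟨show -R ≤ (0:ℝ) by linarith, show (0:ℝ) ≤ 1 + R by linarith⟩⟩
    obtain ⟨z₀, hz₀K, hz₀max⟩ := hKc.exists_isMaxOn ⟨((0:ℝ),(0:ℝ)), hmem00⟩ hΦc.continuousOn
    set x₀ := z₀.1 with hx₀_def
    set y₀ := z₀.2 with hy₀_def
    have hKmax : ∀ q ∈ Icc (0:ℝ) 1 ×ˢ Icc (-R) (1+R), Φ q.1 q.2 ≤ Φ x₀ y₀ := fun q hq => hz₀max hq
    clear_value x₀ y₀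
    have hper : ∀ (x y : ℝ) (n : ℤ), Φ (x - n) (y - n) = Φ x y := by
      intro x y n
      simp only [hΦ]
      have h1 : u ε (x - n) = u ε x := by simpa using up.sub_int_mul_eq (x := x) n
      have h2 : w (y - n) = w y := by simpa using hwp.sub_int_mul_eq (x := y) n
      rw [h1, h2]
      ring_nf
    have hglob : ∀ x y : ℝ, Φ x y ≤ Φ x₀ y₀ := by
      intro x y
      have hx1 : (0:ℝ) ≤ x - ⌊x⌋ := by linarith [Int.floor_le x]
      have hx2 : x - (⌊x⌋:ℝ) ≤ 1 := by linarith [Int.lt_floor_add_one x]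
      have heq : Φ (x - ⌊x⌋) (y - ⌊x⌋) = Φ x y := hper x y ⌊x⌋
      rcases le_or_gt R |x - y| with hc | hc
      · have ht := htail (x - ⌊x⌋) (y - ⌊x⌋) (by
          have : (x - (⌊x⌋:ℝ)) - (y - (⌊x⌋:ℝ)) = x - y := by ring
          rw [this]; exact hc)
        have h00 : Φ 0 0 ≤ Φ x₀ y₀ := hKmax ((0:ℝ),(0:ℝ)) hmem00
        linarith [heq ▸ ht]
      · obtain ⟨hca, hcb⟩ := abs_le.mp hc.le
        have hy' : y - (⌊x⌋:ℝ) ∈ Icc (-R) (1+R) := ⟨by linarith, by linarith⟩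
        calc Φ x y = Φ (x - ⌊x⌋) (y - ⌊x⌋) := heq.symm
          _ ≤ Φ x₀ y₀ := hKmax (x - (⌊x⌋:ℝ), y - (⌊x⌋:ℝ)) ⟨⟨hx1, hx2⟩, hy'⟩
    set pα : ℝ := 2*α*(x₀ - y₀) with hpα_def
    clear_value pα
    have hsub1 : ε * u ε x₀ + ((P + pα)^2 - 1)^2 - V x₀ ≤ 0 := by
      have hφ : ContDiff ℝ 1 (fun x : ℝ => w y₀ + α * (x - y₀)^2) :=
        contDiff_const.add (contDiff_const.mul ((contDiff_id.sub contDiff_const).pow 2))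
      have hder : HasDerivAt (fun x : ℝ => w y₀ + α * (x - y₀)^2) pα x₀ := by
        have h1 : HasDerivAt (fun x : ℝ => (x - y₀)^2) (2*(x₀ - y₀)) x₀ := by
          exact (((hasDerivAt_id x₀).sub_const y₀).pow 2).congr_deriv (by simp only [id]; ring)
        have h2 := (h1.const_mul α).const_add (w y₀)
        rw [show pα = α * (2 * (x₀ - y₀)) by rw [hpα_def]; ring]
        exact h2
      have hd : deriv (fun x : ℝ => w y₀ + α * (x - y₀)^2) x₀ = pα := hder.deriv
      have hmax : IsLocalMax (u ε - fun x : ℝ => w y₀ + α * (x - y₀)^2) x₀ := by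
        apply Filter.Eventually.of_forall
        intro x
        have h := hglob x y₀
        simp only [hΦ] at h
        simp only [Pi.sub_apply]
        linarith
      have h := usub _ hφ x₀ hmax
      rw [hd] at h
      simpa using h
    have hsup1 : 0 ≤ ((P + pα)^2 - 1)^2 - V y₀ - Hbar := by
      have hψ : ContDiff ℝ 1 (fun y : ℝ => u ε x₀ - α * (x₀ - y)^2) :=
        contDiff_const.sub (contDiff_const.mul ((contDiff_const.sub contDiff_id).pow 2))
      have hder : HasDerivAt (fun y : ℝ => u ε x₀ - α * (x₀ - y)^2) pα y₀ := by
        have h1 : HasDerivAt (fun y : ℝ => (x₀ - y)^2) (2*(x₀ - y₀)^1*(-1)) y₀ :=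
          ((hasDerivAt_id y₀).const_sub x₀).pow 2
        have h2 := (h1.const_mul α).const_sub (u ε x₀)
        rw [show pα = -(α * (2 * (x₀ - y₀) ^ 1 * -1)) by rw [hpα_def]; ring]
        exact h2
      have hd : deriv (fun y : ℝ => u ε x₀ - α * (x₀ - y)^2) y₀ = pα := hder.deriv
      have hmin : IsLocalMin (w - fun y : ℝ => u ε x₀ - α * (x₀ - y)^2) y₀ := by
        apply Filter.Eventually.of_forall
        intro y
        have h := hglob x₀ y
        simp only [hΦ] at h
        simp only [Pi.sub_apply]
        linarith
      have h := hwsup _ hψ y₀ hmin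
      rw [hd] at h
      simpa using h
    have hpen : α * (x₀ - y₀)^2 ≤ osc := by
      have h := hglob x₀ x₀
      simp only [hΦ] at h
      have h1 := (hwB x₀).2
      have h2 := (hwB y₀).1
      have h0 : α * (x₀ - x₀)^2 = 0 := by ring
      simp only [hosc_def]
      linarith
    have hxy : |x₀ - y₀| ≤ r := by
      have h1 : (x₀-y₀)^2 ≤ osc/α := by
        rw [le_div_iff₀ hα0]; linarith
      have h2 : (x₀-y₀)^2 < r^2 := lt_of_le_of_lt h1 hosclt
      have h3 := Real.sqrt_le_sqrt h2.le
      rwa [Real.sqrt_sq_eq_abs, Real.sqrt_sq hr0.le] at h3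
    have hVd : V x₀ - V y₀ ≤ Hbar/4 := hrV x₀ y₀ hxy
    have hx₀val : ε * u ε x₀ ≤ -(3/4) * Hbar := by linarith
    intro x
    have hux : u ε x ≤ u ε x₀ + osc := by
      have h := hglob x x
      simp only [hΦ] at h
      have h1 := (hwB x).2
      have h2 := (hwB y₀).1
      have h0 : α * (x - x)^2 = 0 := by ring
      have h3 : 0 ≤ α * (x₀ - y₀)^2 := mul_nonneg hα0.le (sq_nonneg _)
      simp only [hosc_def]
      linarith
    have hεosc : ε * osc ≤ Hbar/4 := by
      have h1 : ε * (4 * (osc + 1)) < Hbar := by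
        rw [← lt_div_iff₀ (by positivity)]; exact hεs
      have h2 : ε * (4 * (osc + 1)) = 4 * (ε * osc) + 4 * ε := by ring
      linarith
    have := mul_le_mul_of_nonneg_left hux hε.le
    linarith
  -- STEP B
  set ρ : ℝ := min (min 1 (Real.sqrt Hbar / 6)) (|P| - 1) with hρ_def
  clear_value ρ
  have hρ0 : 0 < ρ := by
    rw [hρ_def]; exact lt_min (lt_min one_pos (by positivity)) (by linarith)
  have hρ1 : ρ ≤ 1 := by
    rw [hρ_def]; exact le_trans (min_le_left _ _) (min_le_left _ _)
  have hρs : ρ ≤ Real.sqrt Hbar / 6 := by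
    rw [hρ_def]; exact le_trans (min_le_left _ _) (min_le_right _ _)
  have hρP : ρ ≤ |P| - 1 := by rw [hρ_def]; exact min_le_right _ _
  have hsqrt : Real.sqrt Hbar ^ 2 = Hbar := Real.sq_sqrt hHpos.le
  have hforb : ∀ q : ℝ, (|q - 1| ≤ ρ ∨ |q + 1| ≤ ρ) → (q^2 - 1)^2 < Hbar/2 := by
    intro q hq
    have hρsq : ρ^2 ≤ Hbar/36 := by
      have h := mul_le_mul hρs hρs hρ0.le (by positivity)
      have h2 : (Real.sqrt Hbar/6)*(Real.sqrt Hbar/6) = Hbar/36 := by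
        rw [show (Real.sqrt Hbar/6)*(Real.sqrt Hbar/6) = Real.sqrt Hbar^2/36 by ring, hsqrt]
      have h3 : ρ^2 = ρ*ρ := by ring
      linarith
    have main : ∀ a b : ℝ, a^2 ≤ ρ^2 → b^2 ≤ 9 → (a*b)^2 < Hbar/2 := by
      intro a b h1 h2
      have e4 : a^2 * b^2 ≤ ρ^2 * 9 := mul_le_mul h1 h2 (sq_nonneg _) (sq_nonneg _)
      have e3 : (a*b)^2 = a^2*b^2 := by ring
      have e5 : ρ^2*9 ≤ Hbar/4 := by linarith
      rw [e3]; linarith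
    rcases hq with h | h
    · obtain ⟨h1, h2⟩ := abs_le.mp h
      have hq1 : (q-1)^2 ≤ ρ^2 := sq_le_sq' h1 h2
      have hq2 : (q+1)^2 ≤ 9 := by
        have h3 : (q+1)^2 ≤ 3^2 := sq_le_sq' (by linarith) (by linarith)
        norm_num at h3; linarith
      have hm := main (q-1) (q+1) hq1 hq2
      calc (q^2-1)^2 = ((q-1)*(q+1))^2 := by ring
        _ < Hbar/2 := hm
    · obtain ⟨h1, h2⟩ := abs_le.mp h
      have hq1 : (q+1)^2 ≤ ρ^2 := sq_le_sq' h1 h2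
      have hq2 : (q-1)^2 ≤ 9 := by
        have h3 : (q-1)^2 ≤ 3^2 := sq_le_sq' (by linarith) (by linarith)
        norm_num at h3; linarith
      have hm := main (q+1) (q-1) hq1 hq2
      calc (q^2-1)^2 = ((q+1)*(q-1))^2 := by ring
        _ < Hbar/2 := hm
  have hnomin : ∀ p : ℝ, ((P + p)^2 - 1)^2 < Hbar/2 →
      ∀ t₀ : ℝ, ¬ IsLocalMin (fun t => u ε t - p * t) t₀ := by
    intro p hp t₀ hmin
    have hφ : ContDiff ℝ 1 (fun t : ℝ => p * t) := contDiff_const.mul contDiff_id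
    have hd : deriv (fun t : ℝ => p * t) t₀ = p := by
      simpa using ((hasDerivAt_id t₀).const_mul p).deriv
    have hmin' : IsLocalMin (u ε - fun t : ℝ => p * t) t₀ := hmin
    have h := usup _ hφ t₀ hmin'
    rw [hd] at h
    have h' : 0 ≤ ε * u ε t₀ + ((P + p)^2 - 1)^2 - V t₀ := h
    have h1 := keyA t₀
    have h2 := hV0 t₀
    linarith
  constructor
  · -- P > 1
    intro hP1
    have hPabs : |P| = P := abs_of_pos (by linarith)
    set p : ℝ := 1 - P + ρ/2 with hp_def
    clear_value p
    have hρP' : ρ ≤ P - 1 := by rw [hPabs] at hρP; exact hρP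
    have hpneg : p < 0 := by rw [hp_def]; linarith
    have hforbp : ((P + p)^2 - 1)^2 < Hbar/2 := by
      apply hforb
      left
      rw [show P + p - 1 = ρ/2 by rw [hp_def]; ring]
      rw [abs_of_pos (by linarith)]
      linarith
    have hg : Monotone (fun t : ℝ => u ε t - p * t) := by
      refine mono_aux ?_ ?_ ?_
      · exact uc.sub (continuous_const.mul continuous_id)
      · intro C
        refine ⟨(C - mu)/(-p), fun t ht => ?_⟩
        have h1 : mu ≤ u ε t := (huB t).1
        rw [div_le_iff₀ (by linarith : (0:ℝ) < -p)] at ht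
        have h2 : t * (-p) = -(p*t) := by ring
        linarith
      · exact hnomin p hforbp
    intro a b hab
    have h1 : u ε a - p * a ≤ u ε b - p * b := hg hab
    have h2 : (ρ/2) * a ≤ (ρ/2) * b := mul_le_mul_of_nonneg_left hab (by linarith)
    have e : ∀ x : ℝ, u ε x + (P - 1) * x = (u ε x - p * x) + (ρ/2) * x := by
      intro x; rw [hp_def]; ring
    show u ε a + (P - 1) * a ≤ u ε b + (P - 1) * b
    rw [e a, e b]
    exact add_le_add h1 h2
  · -- P < -1
    intro hP1
    have hPabs : |P| = -P := abs_of_neg (by linarith)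
    set p : ℝ := -1 - P - ρ/2 with hp_def
    clear_value p
    have hρP' : ρ ≤ -P - 1 := by rw [hPabs] at hρP; linarith
    have hppos : 0 < p := by rw [hp_def]; linarith
    have hforbp : ((P + p)^2 - 1)^2 < Hbar/2 := by
      apply hforb
      right
      rw [show P + p + 1 = -(ρ/2) by rw [hp_def]; ring, abs_neg]
      rw [abs_of_pos (by linarith)]
      linarith
    have hg : Monotone (fun t : ℝ => u ε (-t) + p * t) := by
      refine mono_aux ?_ ?_ ?_
      · exact (uc.comp continuous_neg).add (continuous_const.mul continuous_id)
      · intro C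
        refine ⟨(C - mu)/p, fun t ht => ?_⟩
        have h1 : mu ≤ u ε (-t) := (huB (-t)).1
        rw [div_le_iff₀ hppos] at ht
        linarith
      · intro t₀ hmin
        refine hnomin p hforbp (-t₀) ?_
        have hten : Filter.Tendsto (fun s : ℝ => -s) (𝓝 (-t₀)) (𝓝 t₀) := by
          simpa using (continuous_neg.tendsto (-t₀))
        have hev := hten.eventually hmin
        filter_upwards [hev] with s hs
        simp only [neg_neg] at hs
        show u ε (-t₀) - p * (-t₀) ≤ u ε s - p * s
        linarith [hs]
    intro a b hab
    have h1 : u ε b + p * (-b) ≤ u ε a + p * (-a) := by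
      simpa using hg (neg_le_neg hab)
    have h2 : (-(ρ/2)) * b ≤ (-(ρ/2)) * a :=
      mul_le_mul_of_nonpos_left hab (by linarith)
    have e : ∀ x : ℝ, u ε x + (P + 1) * x = (u ε x + p * (-x)) + (-(ρ/2)) * x := by
      intro x; rw [hp_def]; ring
    show u ε b + (P + 1) * b ≤ u ε a + (P + 1) * a
    rw [e a, e b]
    exact add_le_add h1 h2
end
end

section
/- Fix P ∈ ℝ with P ≠ 0 and let V : ℝ → ℝ be continuous, 1-periodic, with min V = 0 and max V < 1. Suppose the equation (|P + u'(x)|² − 1)² − V(x) = 0 on 𝕋 admits a continuous 1-periodic viscosity solution (i.e., H̄(P) = 0). For each ε > 0 let u^ε be the continuous 1-periodic viscosity solution of ε u^ε(x) + (|P + (u^ε)'(x)|² − 1)² − V(x) = 0 on 𝕋. Then there exists ε₀ > 0 such that for every ε ∈ (0, ε₀): if P > 0, the function x ↦ u^ε(x) + P x is nondecreasing on ℝ (i.e., P + (u^ε)' ≥ 0 in the viscosity sense), and if P < 0, the function x ↦ u^ε(x) + P x is nonincreasing on ℝ (i.e., P + (u^ε)' ≤ 0 in the viscosity sense). -/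
open Filter Set
open scoped Topology

noncomputable section

lemma periodic_exists_max (f : ℝ → ℝ) (hf : Continuous f) (hp : Function.Periodic f 1) :
    ∃ a, ∀ x, f x ≤ f a := by
  obtain ⟨a, _, ha⟩ := (isCompact_Icc (a := (0:ℝ)) (b := 1)).exists_isMaxOn
    ⟨0, by norm_num⟩ hf.continuousOn
  refine ⟨a, fun x => ?_⟩
  have h1 : f (x - (⌊x⌋ : ℤ) * 1) = f x := hp.sub_int_mul_eq ⌊x⌋
  have h2 : x - (⌊x⌋ : ℝ) ∈ Icc (0:ℝ) 1 :=
    ⟨by linarith [Int.floor_le x], by linarith [Int.lt_floor_add_one x]⟩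
  have h3 := (isMaxOn_iff.mp ha) _ h2
  simp only [Int.cast_one, mul_one] at h1
  linarith [h1 ▸ h3]

lemma periodic_exists_min (f : ℝ → ℝ) (hf : Continuous f) (hp : Function.Periodic f 1) :
    ∃ a, ∀ x, f a ≤ f x := by
  obtain ⟨a, ha⟩ := periodic_exists_max (fun x => -f x) hf.neg (by intro x; simp [hp x])
  exact ⟨a, fun x => by have := ha x; simpa using this⟩

set_option maxHeartbeats 1000000 in
/-- Key lower bound via comparison (doubling of variables) with the ergodic solution `w`:
`ε u^ε ≥ -θ` for `ε` small. -/
lemma key_lower (P : ℝ) (V : ℝ → ℝ) (hVcont : Continuous V)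
    (w : ℝ → ℝ) (hwc : Continuous w) (hwp : Function.Periodic w 1)
    (hwsub : ViscSub1 (fun x _ p => ((P + p) ^ 2 - 1) ^ 2 - V x) w)
    (θ : ℝ) (hθ : 0 < θ) :
    ∃ ε₀ : ℝ, 0 < ε₀ ∧ ∀ ε : ℝ, 0 < ε → ε < ε₀ →
      ∀ u : ℝ → ℝ, Continuous u → Function.Periodic u 1 →
      ViscSuper1 (fun x r p => ε * r + ((P + p) ^ 2 - 1) ^ 2 - V x) u →
      ∀ x₀ : ℝ, -θ < ε * u x₀ := by
  obtain ⟨aw, haw⟩ := periodic_exists_max w hwc hwp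
  obtain ⟨bw, hbw⟩ := periodic_exists_min w hwc hwp
  set O : ℝ := w aw - w bw with hOdef
  have hO : 0 ≤ O := by have := haw bw; simp only [hOdef]; linarith
  clear_value O
  have hVuc : UniformContinuousOn V (Icc (-1:ℝ) 2) :=
    (isCompact_Icc).uniformContinuousOn_of_continuous hVcont.continuousOn
  obtain ⟨δ₁, hδ₁, hVmod⟩ := Metric.uniformContinuousOn_iff.mp hVuc (θ/2) (by linarith)
  set m : ℝ := min δ₁ 1 with hmdef
  have hm : 0 < m := lt_min hδ₁ one_pos
  set δ : ℝ := m^2 / (2*(O+1)) with hδdef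
  have hδpos : 0 < δ := by positivity
  have h2δ : 2*δ*(O+1) = m^2 := by
    rw [hδdef]; field_simp
  have hδ' : δ ≠ 0 := ne_of_gt hδpos
  have hm1 : m ≤ 1 := hmdef ▸ min_le_right δ₁ 1
  have hm2 : m ≤ δ₁ := hmdef ▸ min_le_left δ₁ 1
  clear_value m δ
  refine ⟨θ / (2*(O+1)), by positivity, fun ε hε hεlt u huc hup hsuper x₀ => ?_⟩
  obtain ⟨au, hau⟩ := periodic_exists_max u huc hup
  obtain ⟨bu, hbu⟩ := periodic_exists_min u huc hup
  set D : ℝ := O + (u au - u bu) with hDdef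
  have hD : 0 ≤ D := by have := hau bu; simp only [hDdef]; linarith
  clear_value D
  set L : ℝ := Real.sqrt (2*δ*(D+1)) with hLdef
  have hL : 0 ≤ L := Real.sqrt_nonneg _
  have hL2 : L^2 = 2*δ*(D+1) := Real.sq_sqrt (by positivity)
  set G : ℝ → ℝ → ℝ := fun x y => w x - u y - (x-y)^2/(2*δ) with hGdef
  clear_value L
  have hGcont : Continuous (fun p : ℝ × ℝ => G p.1 p.2) := by
    rw [hGdef]
    apply Continuous.sub (Continuous.sub (hwc.comp continuous_fst) (huc.comp continuous_snd))
    exact ((continuous_fst.sub continuous_snd).pow 2).div_const _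
  clear_value G
  have hKne : ((0:ℝ),(0:ℝ)) ∈ Icc (0:ℝ) 1 ×ˢ Icc (-L) (1+L) := by
    constructor
    · exact ⟨le_refl _, by norm_num⟩
    · simp only [Set.mem_Icc]; constructor <;> linarith
  obtain ⟨⟨xb, yb⟩, hmem, hmax⟩ := (isCompact_Icc.prod isCompact_Icc).exists_isMaxOn
    ⟨_, hKne⟩ hGcont.continuousOn
  have hmax' : ∀ p ∈ Icc (0:ℝ) 1 ×ˢ Icc (-L) (1+L), G p.1 p.2 ≤ G xb yb := isMaxOn_iff.mp hmax
  have hglob : ∀ x y, G x y ≤ G xb yb := by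
    intro x y
    by_cases h : |x - y| ≤ L
    · have hx' : x - (⌊x⌋:ℝ) ∈ Icc (0:ℝ) 1 :=
        ⟨by linarith [Int.floor_le x], by linarith [Int.lt_floor_add_one x]⟩
      obtain ⟨h3, h4⟩ := hx'
      obtain ⟨h1, h2⟩ := abs_le.mp h
      have hy' : y - (⌊x⌋:ℝ) ∈ Icc (-L) (1+L) := ⟨by linarith, by linarith⟩
      have hw1 : w (x - (⌊x⌋:ℤ) * 1) = w x := hwp.sub_int_mul_eq ⌊x⌋
      have hu1 : u (y - (⌊x⌋:ℤ) * 1) = u y := hup.sub_int_mul_eq ⌊x⌋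
      simp only [Int.cast_one, mul_one] at hw1 hu1
      have heq : G (x - (⌊x⌋:ℝ)) (y - (⌊x⌋:ℝ)) = G x y := by
        simp only [hGdef]
        rw [hw1, hu1]
        ring_nf
      rw [← heq]
      exact hmax' (x - (⌊x⌋:ℝ), y - (⌊x⌋:ℝ)) ⟨⟨h3, h4⟩, hy'⟩
    · push_neg at h
      have hsq : L^2 < (x-y)^2 := by
        have h5 : L^2 < |x-y|^2 := by
          apply pow_lt_pow_left₀ h hL
          norm_num
        rwa [sq_abs] at h5
      have hdiv : D + 1 < (x-y)^2/(2*δ) := by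
        rw [lt_div_iff₀ (by positivity)]
        nlinarith [hL2]
      have h00 : G 0 0 ≤ G xb yb := hmax' (0,0) hKne
      have hGeq0 : G 0 0 = w 0 - u 0 := by simp [hGdef]
      have hGxy : G x y = w x - u y - (x-y)^2/(2*δ) := by rw [hGdef]
      have := haw x; have := hbu y; have := hbw 0; have := hau 0
      simp only [hDdef, hOdef] at hdiv
      linarith
  -- penalty bound
  have hpen2 : (xb - yb)^2 ≤ 2*δ*O := by
    have h1 := hglob yb yb
    have e1 : G yb yb = w yb - u yb := by simp [hGdef]
    have e2 : G xb yb = w xb - u yb - (xb-yb)^2/(2*δ) := by rw [hGdef]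
    have h2 : (xb-yb)^2/(2*δ) ≤ w xb - w yb := by rw [e1, e2] at h1; linarith
    have h3 : w xb - w yb ≤ O := by have := haw xb; have := hbw yb; simp only [hOdef]; linarith
    calc (xb-yb)^2 = ((xb-yb)^2/(2*δ))*(2*δ) := by field_simp
    _ ≤ O * (2*δ) := mul_le_mul_of_nonneg_right (by linarith) (by positivity)
    _ = 2*δ*O := by ring
  have hpenm : (xb - yb)^2 < m^2 := by nlinarith [h2δ, hδpos]
  have habs : |xb - yb| < m := by
    nlinarith [sq_abs (xb - yb), abs_nonneg (xb - yb), hm]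
  have hxb01 : xb ∈ Icc (0:ℝ) 1 := hmem.1
  have hxb12 : xb ∈ Icc (-1:ℝ) 2 := ⟨by linarith [hxb01.1], by linarith [hxb01.2]⟩
  have hyb12 : yb ∈ Icc (-1:ℝ) 2 := by
    have h1 := abs_lt.mp habs
    have hm1 : m ≤ 1 := hmdef ▸ min_le_right δ₁ 1
    exact ⟨by linarith [hxb01.1, h1.2], by linarith [hxb01.2, h1.1]⟩
  have hdist : dist xb yb < δ₁ := by
    rw [Real.dist_eq]
    have hm2 : m ≤ δ₁ := hmdef ▸ min_le_left δ₁ 1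
    linarith
  have hVd : |V xb - V yb| < θ/2 := by
    have := hVmod xb hxb12 yb hyb12 hdist
    rwa [Real.dist_eq] at this
  -- viscosity tests
  set q : ℝ := (xb - yb)/δ with hqdef
  set φ₁ : ℝ → ℝ := fun x => (x - yb)^2/(2*δ) with hφ₁
  have hφ₁c : ContDiff ℝ 1 φ₁ := ((contDiff_id.sub contDiff_const).pow 2).div_const _
  have hφ₁d : deriv φ₁ xb = q := by
    have h := (((hasDerivAt_id xb).sub_const yb).pow 2).div_const (2*δ)
    simp only [id_eq, Pi.pow_apply] at h
    rw [hqdef, (by rw [hφ₁] : φ₁ = fun x : ℝ => (x - yb)^2/(2*δ))]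
    rw [h.deriv]
    field_simp
    ring
  have hlm : IsLocalMax (w - φ₁) xb := by
    apply Filter.Eventually.of_forall
    intro x
    have h1 := hglob x yb
    simp only [hGdef] at h1
    simp only [Pi.sub_apply, hφ₁]
    linarith
  have hsub := hwsub φ₁ hφ₁c xb hlm
  rw [hφ₁d] at hsub
  set φ₂ : ℝ → ℝ := fun y => -((xb - y)^2/(2*δ)) with hφ₂
  have hφ₂c : ContDiff ℝ 1 φ₂ := (((contDiff_const.sub contDiff_id).pow 2).div_const _).neg
  have hφ₂d : deriv φ₂ yb = q := by
    have h := ((((hasDerivAt_const yb xb).sub (hasDerivAt_id yb)).pow 2).div_const (2*δ)).neg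
    simp only [id_eq, Pi.pow_apply, Pi.sub_apply, Pi.neg_def] at h
    rw [hqdef, (by rw [hφ₂] : φ₂ = fun y : ℝ => -((xb - y)^2/(2*δ)))]
    rw [h.deriv]
    field_simp
    ring
  have hlmin : IsLocalMin (u - φ₂) yb := by
    apply Filter.Eventually.of_forall
    intro y
    have h1 := hglob xb y
    simp only [hGdef] at h1
    simp only [Pi.sub_apply, hφ₂]
    linarith
  have hsup := hsuper φ₂ hφ₂c yb hlmin
  rw [hφ₂d] at hsup
  simp only [] at hsub hsup
  -- combine
  have habs' := abs_lt.mp hVd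
  have hεyb : -(θ/2) < ε * u yb := by linarith [habs'.1, habs'.2]
  have hx₀ : u yb - O ≤ u x₀ := by
    have h1 := hglob x₀ x₀
    simp only [hGdef] at h1
    have hp : (0:ℝ) ≤ (xb-yb)^2/(2*δ) := by positivity
    have hz : (x₀ - x₀)^2/(2*δ) = 0 := by simp
    rw [hz] at h1
    have := hbw x₀; have := haw xb
    simp only [hOdef]
    linarith
  have hεO : ε * O < θ/2 := by
    have h2 : ε * (O+1) < θ/(2*(O+1)) * (O+1) := mul_lt_mul_of_pos_right hεlt (by linarith)
    have h3 : θ/(2*(O+1)) * (O+1) = θ/2 := by field_simp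
    nlinarith
  have hmono : ε * (u yb - O) ≤ ε * u x₀ := mul_le_mul_of_nonneg_left hx₀ (le_of_lt hε)
  have hexp : ε * (u yb - O) = ε * u yb - ε * O := by ring
  linarith
set_option maxHeartbeats 1000000 in
theorem stmt8 (P : ℝ) (hP : P ≠ 0)
    (V : ℝ → ℝ) (hVcont : Continuous V) (hVper : Function.Periodic V 1)
    (hVmin : sInf (Set.range V) = 0) (hVmax : sSup (Set.range V) < 1)
    -- H̄(P) = 0: the ergodic equation with right-hand side 0 has a solution
    (hHbar : ∃ w : ℝ → ℝ, Continuous w ∧ Function.Periodic w 1 ∧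
      ViscSol1 (fun x _ p => ((P + p) ^ 2 - 1) ^ 2 - V x) w)
    (u : ℝ → ℝ → ℝ)
    (hu : ∀ ε : ℝ, 0 < ε → Continuous (u ε) ∧ Function.Periodic (u ε) 1 ∧
      ViscSol1 (fun x r p => ε * r + ((P + p) ^ 2 - 1) ^ 2 - V x) (u ε)) :
    ∃ ε₀ : ℝ, 0 < ε₀ ∧ ∀ ε : ℝ, 0 < ε → ε < ε₀ →
      (0 < P → Monotone (fun x : ℝ => u ε x + P * x)) ∧
      (P < 0 → Antitone (fun x : ℝ => u ε x + P * x)) := by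
  obtain ⟨w, hwc, hwp, hwsub, hwsup⟩ := hHbar
  obtain ⟨aV, haV⟩ := periodic_exists_max V hVcont hVper
  have hbdd : BddAbove (Set.range V) := ⟨V aV, by rintro _ ⟨x, rfl⟩; exact haV x⟩
  have hM : V aV < 1 := lt_of_le_of_lt (le_csSup hbdd (Set.mem_range_self aV)) hVmax
  set θ : ℝ := (1 - V aV)/2 with hθdef
  have hθ : 0 < θ := by rw [hθdef]; linarith
  obtain ⟨ε₀, hε₀, hkey⟩ := key_lower P V hVcont w hwc hwp hwsub θ hθ
  refine ⟨ε₀, hε₀, fun ε hε hεlt => ?_⟩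
  obtain ⟨huc, hup, husub, husup⟩ := hu ε hε
  have hlow : ∀ x, -θ < ε * u ε x := hkey ε hε hεlt (u ε) huc hup husup
  set v : ℝ → ℝ := fun x => u ε x + P * x with hv
  have hvc : Continuous v := by
    rw [hv]; exact huc.add (continuous_const.mul continuous_id)
  -- no local max of v
  have hnolocmax : ∀ x₀ : ℝ, ¬ IsLocalMax v x₀ := by
    intro x₀ hloc
    have hφc : ContDiff ℝ 1 (fun x : ℝ => -(P * x)) := (contDiff_const.mul contDiff_id).neg
    have hd : deriv (fun x : ℝ => -(P * x)) x₀ = -P := by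
      have h : HasDerivAt (fun x : ℝ => -(P * x)) (-(P * 1)) x₀ :=
        (((hasDerivAt_id x₀).const_mul P)).neg
      simp only [id_eq, mul_one] at h
      rw [h.deriv]
    have heq : (u ε - fun x => -(P * x)) = v := by
      funext x; simp only [Pi.sub_apply, hv]; ring
    have hineq := husub (fun x => -(P * x)) hφc x₀ (by rw [heq]; exact hloc)
    rw [hd] at hineq
    simp only [] at hineq
    have h1 : ((P + -P)^2 - (1:ℝ))^2 = 1 := by norm_num
    rw [h1] at hineq
    have h2 := hlow x₀
    have h3 := haV x₀
    rw [hθdef] at h2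
    linarith
  clear_value v
  constructor
  · -- P > 0 : monotone
    intro hP0 a b hab
    rcases eq_or_lt_of_le hab with rfl | hlt
    · exact le_refl _
    by_contra hcon
    push_neg at hcon
    obtain ⟨n, hn⟩ := exists_nat_gt ((v a - v b)/P)
    have hpos : 0 < (v a - v b)/P := div_pos (by linarith) hP0
    have hn0 : 0 < (n:ℝ) := lt_trans hpos hn
    have hvc' : v (a - n) = v a - P * n := by
      have hu1 : u ε (a - (n:ℝ) * 1) = u ε a := hup.sub_nat_mul_eq n
      simp only [mul_one] at hu1
      rw [hv]
      simp only []
      rw [hu1]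
      ring
    have hPn : v a - v b < P * n := by
      have := (div_lt_iff₀ hP0).mp hn
      linarith
    have hcb : a - (n:ℝ) < b := by linarith
    obtain ⟨x₀, hx₀mem, hx₀max⟩ := (isCompact_Icc).exists_isMaxOn
      (Set.nonempty_Icc.mpr (le_of_lt hcb)) hvc.continuousOn
    have hmax' := isMaxOn_iff.mp hx₀max
    have hva : v a ≤ v x₀ := hmax' a ⟨by linarith, le_of_lt hlt⟩
    have hne1 : x₀ ≠ a - (n:ℝ) := by
      intro h; rw [h] at hva; rw [hvc'] at hva; nlinarith
    have hne2 : x₀ ≠ b := by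
      intro h; rw [h] at hva; linarith
    have hx₀in : a - (n:ℝ) < x₀ ∧ x₀ < b :=
      ⟨lt_of_le_of_ne hx₀mem.1 (Ne.symm hne1), lt_of_le_of_ne hx₀mem.2 hne2⟩
    exact hnolocmax x₀ (Filter.eventually_of_mem (Icc_mem_nhds hx₀in.1 hx₀in.2) hmax')
  · -- P < 0 : antitone
    intro hP0 a b hab
    rcases eq_or_lt_of_le hab with rfl | hlt
    · exact le_refl _
    by_contra hcon
    push_neg at hcon
    obtain ⟨n, hn⟩ := exists_nat_gt ((v b - v a)/(-P))
    have hpos : 0 < (v b - v a)/(-P) := div_pos (by linarith) (by linarith)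
    have hn0 : 0 < (n:ℝ) := lt_trans hpos hn
    have hvc' : v (b + n) = v b + P * n := by
      have hu1 : u ε (b + (n:ℝ) * 1 - (n:ℝ) * 1) = u ε (b + (n:ℝ) * 1) :=
        hup.sub_nat_mul_eq n
      simp only [add_sub_cancel_right, mul_one] at hu1
      rw [hv]
      simp only []
      rw [← hu1]
      ring
    have hPn : P * n < v a - v b := by
      have := (div_lt_iff₀ (by linarith : (0:ℝ) < -P)).mp hn
      nlinarith
    have hcb : a < b + (n:ℝ) := by linarith
    obtain ⟨x₀, hx₀mem, hx₀max⟩ := (isCompact_Icc).exists_isMaxOn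
      (Set.nonempty_Icc.mpr (le_of_lt hcb)) hvc.continuousOn
    have hmax' := isMaxOn_iff.mp hx₀max
    have hvb : v b ≤ v x₀ := hmax' b ⟨le_of_lt hlt, by linarith⟩
    have hne1 : x₀ ≠ a := by
      intro h; rw [h] at hvb; linarith
    have hne2 : x₀ ≠ b + (n:ℝ) := by
      intro h; rw [h] at hvb; rw [hvc'] at hvb; linarith
    have hx₀in : a < x₀ ∧ x₀ < b + (n:ℝ) :=
      ⟨lt_of_le_of_ne hx₀mem.1 (Ne.symm hne1), lt_of_le_of_ne hx₀mem.2 hne2⟩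
    exact hnolocmax x₀ (Filter.eventually_of_mem (Icc_mem_nhds hx₀in.1 hx₀in.2) hmax')
end
end

section
/- Let 0 < s ≤ 1/5. Then the equation F(|3/2 + v'(x)|) − V(x) = 1 on 𝕋 admits a continuous 1-periodic Lipschitz viscosity solution; in other words, the ergodic constant of the Hamiltonian H(x,p) = F(|p|) − V(x) at P = 3/2 equals 1. -/
open Filter Set
open scoped Topology

noncomputable section

/-- The kinetic energy `F : F(p) = p` on `[0,1]`, `F(p) = 1` on `[1,2]`, `F(p) = p - 1` for `p ≥ 2`. -/
def Fk (p : ℝ) : ℝ := if p ≤ 1 then p else if p ≤ 2 then 1 else p - 1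

/-- The 1-periodic potential: `V(x) = x` on `[0,s]`, `V(x) = 2s - x` on `[s,2s]`, `V(x) = 0`
on `[2s,1]`. -/
def Vs (s x : ℝ) : ℝ :=
  if Int.fract x ≤ s then Int.fract x
  else if Int.fract x ≤ 2 * s then 2 * s - Int.fract x
  else 0

/-- ramp half-width -/
def ww (s : ℝ) : ℝ := (1 - 4*s - 2*s^2)/2

/-- the derivative profile on one period -/
def g0 (s y : ℝ) : ℝ :=
  if y ≤ 2 * s then 1/2 + (if y ≤ s then y else 2 * s - y)
  else if y ≤ 2 * s + ww s then 1/2 - (y - 2*s)/(ww s)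
  else if y ≤ 1 - ww s then -(1/2)
  else 1/2 - (1-y)/(ww s)

lemma ww_pos {s : ℝ} (hs : 0 < s) (hs' : s ≤ 1/5) : 0 < ww s := by
  unfold ww; nlinarith

lemma Fk_eq_one {q : ℝ} (h1 : 1 ≤ q) (h2 : q ≤ 2) : Fk q = 1 := by
  unfold Fk; split_ifs <;> linarith

lemma Fk_eq_sub {q : ℝ} (h : 2 ≤ q) : Fk q = q - 1 := by
  unfold Fk; split_ifs <;> linarith

lemma g0_cont {s : ℝ} (hs : 0 < s) (hs' : s ≤ 1/5) : Continuous (g0 s) := by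
  have hw : 0 < ww s := ww_pos hs hs'
  have hw' : ww s ≠ 0 := hw.ne'
  have c_inner : Continuous fun y : ℝ => if y ≤ s then y else 2 * s - y := by
    refine Continuous.if_le continuous_id (by fun_prop) continuous_id continuous_const ?_
    intro x hx; rw [hx]; ring
  have c1 : Continuous fun y : ℝ => 1/2 + (if y ≤ s then y else 2 * s - y) :=
    continuous_const.add c_inner
  have c2 : Continuous fun y : ℝ => 1/2 - (y - 2*s)/(ww s) :=
    continuous_const.sub ((continuous_id.sub continuous_const).div_const _)
  have c4 : Continuous fun y : ℝ => 1/2 - (1-y)/(ww s) :=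
    continuous_const.sub ((continuous_const.sub continuous_id).div_const _)
  have c34 : Continuous fun y : ℝ =>
      if y ≤ 1 - ww s then -(1/2 : ℝ) else 1/2 - (1-y)/(ww s) := by
    refine Continuous.if_le continuous_const c4 continuous_id continuous_const ?_
    intro x hx; rw [hx]; field_simp; norm_num; ring
  have c234 : Continuous fun y : ℝ =>
      if y ≤ 2 * s + ww s then 1/2 - (y - 2*s)/(ww s)
      else if y ≤ 1 - ww s then -(1/2 : ℝ) else 1/2 - (1-y)/(ww s) := by
    refine Continuous.if_le c2 c34 continuous_id continuous_const ?_
    intro x hx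
    have h2 : 2 * s + ww s ≤ 1 - ww s := by unfold ww; nlinarith
    rw [hx, if_pos h2]
    field_simp; norm_num; ring
  refine Continuous.if_le c1 c234 continuous_id continuous_const ?_
  intro x hx
  rw [hx, if_neg (by intro h; linarith), if_pos (by linarith)]
  norm_num

lemma gg_cont {s : ℝ} (hs : 0 < s) (hs' : s ≤ 1/5) :
    Continuous fun x : ℝ => g0 s (Int.fract x) := by
  have hw : 0 < ww s := ww_pos hs hs'
  have h01 : g0 s 0 = g0 s 1 := by
    unfold g0
    rw [if_pos (by linarith), if_pos hs.le, if_neg (by intro h; linarith),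
      if_neg (by intro h; unfold ww at h; nlinarith), if_neg (by intro h; linarith)]
    norm_num
  exact ContinuousOn.comp_fract'' (g0_cont hs hs').continuousOn h01

lemma main_cases {s : ℝ} (hs : 0 < s) (hs' : s ≤ 1/5) (x : ℝ) :
    (2 ≤ 3/2 + g0 s (Int.fract x) ∧ 3/2 + g0 s (Int.fract x) ≤ 2 + s ∧
      3/2 + g0 s (Int.fract x) = 2 + Vs s x) ∨
    (1 ≤ 3/2 + g0 s (Int.fract x) ∧ 3/2 + g0 s (Int.fract x) ≤ 2 ∧ Vs s x = 0) := by
  have hw : 0 < ww s := ww_pos hs hs'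
  have hy0 : 0 ≤ Int.fract x := Int.fract_nonneg x
  have hy1 : Int.fract x < 1 := Int.fract_lt_one x
  set y := Int.fract x with hy
  simp only [g0, Vs, ← hy]
  rcases le_or_gt y (2*s) with c1 | c1
  · rw [if_pos c1]
    rcases le_or_gt y s with c2 | c2
    · rw [if_pos c2, if_pos c2]
      exact Or.inl ⟨by linarith, by linarith, by ring⟩
    · rw [if_neg (not_le.2 c2), if_neg (not_le.2 c2), if_pos c1]
      exact Or.inl ⟨by linarith, by linarith, by ring⟩
  · have hys : ¬ y ≤ s := not_le.2 (by linarith)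
    rw [if_neg (not_le.2 c1), if_neg hys, if_neg (not_le.2 c1)]
    rcases le_or_gt y (2*s + ww s) with c3 | c3
    · rw [if_pos c3]
      have hr1 : (y - 2*s)/(ww s) ≤ 1 := (div_le_one hw).2 (by linarith)
      have hr0 : 0 ≤ (y - 2*s)/(ww s) := div_nonneg (by linarith) hw.le
      exact Or.inr ⟨by linarith, by linarith, rfl⟩
    · rw [if_neg (not_le.2 c3)]
      rcases le_or_gt y (1 - ww s) with c4 | c4
      · rw [if_pos c4]
        exact Or.inr ⟨by norm_num, by norm_num, rfl⟩
      · rw [if_neg (not_le.2 c4)]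
        have hr1 : (1 - y)/(ww s) ≤ 1 := (div_le_one hw).2 (by linarith)
        have hr0 : 0 ≤ (1 - y)/(ww s) := div_nonneg (by linarith) hw.le
        exact Or.inr ⟨by linarith, by linarith, rfl⟩

lemma key_eq {s : ℝ} (hs : 0 < s) (hs' : s ≤ 1/5) (x : ℝ) :
    Fk |3/2 + g0 s (Int.fract x)| - Vs s x - 1 = 0 := by
  rcases main_cases hs hs' x with ⟨h1, h2, h3⟩ | ⟨h1, h2, h3⟩
  · rw [abs_of_nonneg (by linarith), Fk_eq_sub h1]
    linarith
  · rw [abs_of_nonneg (by linarith), Fk_eq_one h1 h2, h3]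
    norm_num

lemma gg_bound {s : ℝ} (hs : 0 < s) (hs' : s ≤ 1/5) (x : ℝ) :
    |g0 s (Int.fract x)| ≤ 1 := by
  rcases main_cases hs hs' x with ⟨h1, h2, _⟩ | ⟨h1, h2, _⟩ <;>
    exact abs_le.2 ⟨by linarith, by linarith⟩

lemma integral_affine (α β a b : ℝ) :
    ∫ t in a..b, (α + β * t) = α*(b-a) + β*(b^2-a^2)/2 := by
  have h : ∀ t ∈ Set.uIcc a b, HasDerivAt (fun u => α*u + β*(u^2)/2) (α + β*t) t := by
    intro t _
    have h1 : HasDerivAt (fun u : ℝ => u^2) (2*t) t := by simpa using hasDerivAt_pow 2 t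
    have := ((hasDerivAt_id t).const_mul α).add ((h1.const_mul β).div_const 2)
    exact this.congr_deriv (by ring)
  rw [intervalIntegral.integral_eq_sub_of_hasDerivAt h
    ((by fun_prop : Continuous fun t : ℝ => α + β * t).intervalIntegrable a b)]
  ring

lemma integral_zero {s : ℝ} (hs : 0 < s) (hs' : s ≤ 1/5) :
    ∫ t in (0:ℝ)..1, g0 s (Int.fract t) = 0 := by
  have hw : 0 < ww s := ww_pos hs hs'
  have hwv : ww s = (1 - 4*s - 2*s^2)/2 := rfl
  have hcb : 2*s + ww s < 1 - ww s := by rw [hwv]; nlinarith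
  have hs1 : 2*s + ww s < 1 := by linarith
  have hGc : Continuous fun t : ℝ => g0 s (Int.fract t) := gg_cont hs hs'
  have hInt : ∀ a b : ℝ, IntervalIntegrable (fun t : ℝ => g0 s (Int.fract t))
      MeasureTheory.volume a b := fun a b => hGc.intervalIntegrable a b
  have hfr : ∀ t : ℝ, 0 ≤ t → t < 1 → Int.fract t = t := fun t h0 h1 =>
    Int.fract_eq_self.2 ⟨h0, h1⟩
  have eq1 : EqOn (fun t : ℝ => g0 s (Int.fract t)) (fun t => 1/2 + 1*t) (uIcc 0 s) := by
    rw [uIcc_of_le hs.le]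
    intro t ht
    show g0 s (Int.fract t) = _
    rw [hfr t ht.1 (by linarith [ht.2] : t < 1)]
    unfold g0
    rw [if_pos (by linarith [ht.2]), if_pos ht.2]
    ring
  have eq2 : EqOn (fun t : ℝ => g0 s (Int.fract t)) (fun t => (1/2 + 2*s) + (-1)*t)
      (uIcc s (2*s)) := by
    rw [uIcc_of_le (by linarith)]
    intro t ht
    show g0 s (Int.fract t) = _
    rw [hfr t (by linarith [ht.1]) (by linarith [ht.2] : t < 1)]
    unfold g0
    rw [if_pos ht.2]
    rcases le_or_gt t s with c | c
    · rw [if_pos c]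
      have : t = s := le_antisymm c ht.1
      rw [this]; ring
    · rw [if_neg (not_le.2 c)]; ring
  have eq3 : EqOn (fun t : ℝ => g0 s (Int.fract t))
      (fun t => (1/2 + 2*s/(ww s)) + (-(1/(ww s)))*t) (uIcc (2*s) (2*s + ww s)) := by
    rw [uIcc_of_le (by linarith)]
    intro t ht
    show g0 s (Int.fract t) = _
    rw [hfr t (by linarith [ht.1]) (by linarith [ht.2] : t < 1)]
    unfold g0
    rcases le_or_gt t (2*s) with c | c
    · have htv : t = 2*s := le_antisymm c ht.1
      rw [if_pos c, if_neg (by push_neg; linarith), htv]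
      field_simp
      try ring
    · rw [if_neg (not_le.2 c), if_pos ht.2]
      field_simp; ring
  have eq4 : EqOn (fun t : ℝ => g0 s (Int.fract t)) (fun t => -(1/2) + 0*t)
      (uIcc (2*s + ww s) (1 - ww s)) := by
    rw [uIcc_of_le hcb.le]
    intro t ht
    show g0 s (Int.fract t) = _
    rw [hfr t (by linarith [ht.1]) (by linarith [ht.2, hw] : t < 1)]
    unfold g0
    rw [if_neg (by push_neg; linarith [ht.1])]
    rcases le_or_gt t (2*s + ww s) with c | c
    · have htv : t = 2*s + ww s := le_antisymm c ht.1
      rw [if_pos c, htv]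
      field_simp
      try ring
    · rw [if_neg (not_le.2 c), if_pos ht.2]
      ring
  have eq5 : EqOn (fun t : ℝ => g0 s (Int.fract t))
      (fun t => (1/2 - 1/(ww s)) + (1/(ww s))*t) (uIcc (1 - ww s) 1) := by
    rw [uIcc_of_le (by linarith)]
    intro t ht
    show g0 s (Int.fract t) = _
    rcases eq_or_lt_of_le ht.2 with h1 | h1
    · rw [h1, Int.fract_one]
      unfold g0
      rw [if_pos (by linarith), if_pos hs.le]
      field_simp
      try ring
    · rw [hfr t (by linarith [ht.1]) h1]
      unfold g0
      rw [if_neg (by push_neg; linarith [ht.1]), if_neg (by push_neg; linarith [ht.1])]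
      rcases le_or_gt t (1 - ww s) with c | c
      · have htv : t = 1 - ww s := le_antisymm c ht.1
        rw [if_pos c, htv]
        field_simp; ring
      · rw [if_neg (not_le.2 c)]
        field_simp; ring
  have S : ∫ t in (0:ℝ)..1, g0 s (Int.fract t) =
      (∫ t in (0:ℝ)..s, g0 s (Int.fract t)) + (∫ t in s..(2*s), g0 s (Int.fract t)) +
      (∫ t in (2*s)..(2*s + ww s), g0 s (Int.fract t)) +
      (∫ t in (2*s + ww s)..(1 - ww s), g0 s (Int.fract t)) +
      (∫ t in (1 - ww s)..(1:ℝ), g0 s (Int.fract t)) := by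
    rw [← intervalIntegral.integral_add_adjacent_intervals (hInt 0 s) (hInt s 1),
      ← intervalIntegral.integral_add_adjacent_intervals (hInt s (2*s)) (hInt (2*s) 1),
      ← intervalIntegral.integral_add_adjacent_intervals (hInt (2*s) (2*s + ww s))
        (hInt (2*s + ww s) 1),
      ← intervalIntegral.integral_add_adjacent_intervals (hInt (2*s + ww s) (1 - ww s)) (hInt (1 - ww s) 1)]
    ring
  rw [S, intervalIntegral.integral_congr eq1, intervalIntegral.integral_congr eq2,
    intervalIntegral.integral_congr eq3, intervalIntegral.integral_congr eq4,
    intervalIntegral.integral_congr eq5, integral_affine, integral_affine, integral_affine,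
    integral_affine, integral_affine, hwv]
  have hnz : (1 - 4*s - 2*s^2) ≠ 0 := by nlinarith
  field_simp
  have hnz2 : (1 - s * 4 - 2 * s ^ 2) ≠ 0 := by nlinarith
  field_simp
  ring

theorem stmt9 (s : ℝ) (hs : 0 < s) (hs' : s ≤ 1 / 5) :
    ∃ v : ℝ → ℝ, Continuous v ∧ Function.Periodic v 1 ∧ (∃ K : NNReal, LipschitzWith K v) ∧
      ViscSol1 (fun x _ p => Fk |3 / 2 + p| - Vs s x - 1) v := by
  have hs5 : s ≤ 1/5 := by linarith
  have hGc : Continuous fun t : ℝ => g0 s (Int.fract t) := gg_cont hs hs5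
  set G : ℝ → ℝ := fun t => g0 s (Int.fract t) with hG
  set v : ℝ → ℝ := fun x => ∫ t in (0:ℝ)..x, G t with hv
  have hInt : ∀ a b : ℝ, IntervalIntegrable G MeasureTheory.volume a b := fun a b =>
    hGc.intervalIntegrable a b
  have hder : ∀ x, HasDerivAt v (G x) x := fun x =>
    intervalIntegral.integral_hasDerivAt_right (hInt 0 x)
      (hGc.stronglyMeasurableAtFilter _ _) hGc.continuousAt
  have hGper : Function.Periodic G 1 := fun x => by
    simp only [hG]; rw [Int.fract_add_one]
  have hper : Function.Periodic v 1 := by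
    intro x
    have h1 : v x + ∫ t in x..(x+1), G t = v (x+1) :=
      intervalIntegral.integral_add_adjacent_intervals (hInt 0 x) (hInt x (x+1))
    have h2 : (∫ t in x..(x+1), G t) = ∫ t in (0:ℝ)..(0+1), G t :=
      hGper.intervalIntegral_add_eq x 0
    have h3 : (∫ t in (0:ℝ)..(0+1), G t) = 0 := by
      rw [zero_add]; exact integral_zero hs hs5
    rw [h2, h3, add_zero] at h1
    exact h1.symm
  have hdiff : Differentiable ℝ v := fun x => (hder x).differentiableAt
  have hlip : LipschitzWith 1 v := by
    refine lipschitzWith_of_nnnorm_deriv_le hdiff fun x => ?_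
    have hb : ‖deriv v x‖ ≤ 1 := by
      rw [(hder x).deriv, Real.norm_eq_abs]
      exact gg_bound hs hs5 x
    rw [← NNReal.coe_le_coe, coe_nnnorm, NNReal.coe_one]
    exact hb
  refine ⟨v, hdiff.continuous, hper, ⟨1, hlip⟩, ?_, ?_⟩
  · intro φ hφ x₀ hmax
    have hφd : HasDerivAt φ (deriv φ x₀) x₀ := (hφ.differentiable one_ne_zero x₀).hasDerivAt
    have hd : HasDerivAt (v - φ) (G x₀ - deriv φ x₀) x₀ := (hder x₀).sub hφd
    have h0 : G x₀ - deriv φ x₀ = 0 := hmax.hasDerivAt_eq_zero hd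
    have hp : deriv φ x₀ = G x₀ := by linarith
    show Fk |3/2 + deriv φ x₀| - Vs s x₀ - 1 ≤ 0
    rw [hp]
    have := key_eq hs hs5 x₀
    linarith [this]
  · intro φ hφ x₀ hmin
    have hφd : HasDerivAt φ (deriv φ x₀) x₀ := (hφ.differentiable one_ne_zero x₀).hasDerivAt
    have hd : HasDerivAt (v - φ) (G x₀ - deriv φ x₀) x₀ := (hder x₀).sub hφd
    have h0 : G x₀ - deriv φ x₀ = 0 := hmin.hasDerivAt_eq_zero hd
    have hp : deriv φ x₀ = G x₀ := by linarith
    show 0 ≤ Fk |3/2 + deriv φ x₀| - Vs s x₀ - 1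
    rw [hp]
    have := key_eq hs hs5 x₀
    linarith [this]
end
end

section
/- Let 0 < s ≤ 1/5 and, for y ∈ ℝ, define the maximal subsolution S(x,y) = sup{ w(x) − w(y) : w is a continuous 1-periodic viscosity subsolution of F(|3/2 + w'(x)|) − V(x) = 1 on ℝ }. Then for every y ∈ ℝ, the function x ↦ S(x,y) is NOT a viscosity solution of F(|3/2 + u'(x)|) − V(x) = 1 on 𝕋; more precisely, it fails the viscosity supersolution property at the point x = y. -/
open Filter Set
open scoped Topology

noncomputable section

/-- The maximal subsolution with vertex `y`:
`S(x,y) = sup { w(x) - w(y) : w is a 1-periodic continuous viscosity subsolution }`. -/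
def maxSub (s y x : ℝ) : ℝ :=
  sSup {t : ℝ | ∃ w : ℝ → ℝ, Continuous w ∧ Function.Periodic w 1 ∧
    ViscSub1 (fun x' _ p => Fk |3 / 2 + p| - Vs s x' - 1) w ∧ t = w x - w y}

/- ## Auxiliary material -/

namespace Stmt10Aux

/-- One-sided derivative comparison (right). -/
lemma deriv_ge_right (φ : ℝ → ℝ) (x₀ p c : ℝ) (hp : HasDerivAt φ p x₀)
    (h : ∀ᶠ x in 𝓝 x₀, x₀ < x → c * (x - x₀) ≤ φ x - φ x₀) : c ≤ p := by
  have ht : Tendsto (slope φ x₀) (𝓝[>] x₀) (𝓝 p) :=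
    (hasDerivAt_iff_tendsto_slope.1 hp).mono_left
      (nhdsWithin_mono _ fun z hz => ne_of_gt hz)
  refine ge_of_tendsto ht ?_
  filter_upwards [eventually_nhdsWithin_of_eventually_nhds h, self_mem_nhdsWithin]
    with x hx hx2
  have hgt : x₀ < x := hx2
  rw [slope_def_field, le_div_iff₀ (by linarith)]
  linarith [hx hgt]

/-- One-sided derivative comparison (left). -/
lemma deriv_le_left (φ : ℝ → ℝ) (x₀ p c : ℝ) (hp : HasDerivAt φ p x₀)
    (h : ∀ᶠ x in 𝓝 x₀, x < x₀ → c * (x - x₀) ≤ φ x - φ x₀) : p ≤ c := by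
  have ht : Tendsto (slope φ x₀) (𝓝[<] x₀) (𝓝 p) :=
    (hasDerivAt_iff_tendsto_slope.1 hp).mono_left
      (nhdsWithin_mono _ fun z hz => ne_of_lt hz)
  refine le_of_tendsto ht ?_
  filter_upwards [eventually_nhdsWithin_of_eventually_nhds h, self_mem_nhdsWithin]
    with x hx hx2
  have hlt : x < x₀ := hx2
  rw [slope_def_field, div_le_iff_of_neg (by linarith)]
  linarith [hx hlt]

lemma Vs_nonneg {s : ℝ} (hs : 0 ≤ s) (x : ℝ) : 0 ≤ Vs s x := by
  have h1 := Int.fract_nonneg x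
  unfold Vs
  split_ifs with h2 h3 <;> linarith

lemma Vs_le {s : ℝ} (hs : 0 ≤ s) (x : ℝ) : Vs s x ≤ s := by
  unfold Vs
  split_ifs with h2 h3 <;> linarith

/-- The explicit zigzag subsolution with vertex `y`. -/
def W (y x : ℝ) : ℝ := min (Int.fract (x - y) / 2) (1 - Int.fract (x - y))

lemma W_eq (y x : ℝ) : W y x = min (Int.fract (x - y) / 2) (1 - Int.fract (x - y)) := rfl

lemma W_nonneg (y x : ℝ) : 0 ≤ W y x := by
  have h1 := Int.fract_nonneg (x - y)
  have h2 := Int.fract_lt_one (x - y)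
  rw [W_eq]
  exact le_min (by linarith) (by linarith)

lemma W_le (y x : ℝ) : W y x ≤ 1 / 3 := by
  have h1 := Int.fract_nonneg (x - y)
  rw [W_eq]
  rcases le_or_gt (Int.fract (x - y)) (2 / 3) with h | h
  · exact le_trans (min_le_left _ _) (by linarith)
  · exact le_trans (min_le_right _ _) (by linarith)

lemma W_self (y : ℝ) : W y y = 0 := by
  rw [W_eq, sub_self, Int.fract_zero]
  norm_num

/-- Slopes of `W` are ≥ -1 : `W y x - (z - x) ≤ W y z` for `x ≤ z`. -/
lemma W_L1 {y x z : ℝ} (h : x ≤ z) : W y x - (z - x) ≤ W y z := by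
  rcases le_or_gt (1 / 3) (z - x) with hd | hd
  · have h1 := W_le y x
    have h2 := W_nonneg y z
    linarith
  · have ht0 := Int.fract_nonneg (x - y)
    have ht1 := Int.fract_lt_one (x - y)
    rcases lt_or_ge (Int.fract (x - y) + (z - x)) 1 with hw | hw
    · have hz : Int.fract (z - y) = Int.fract (x - y) + (z - x) := by
        have hzy : z - y = ((⌊x - y⌋ : ℤ) : ℝ) + (Int.fract (x - y) + (z - x)) := by
          have := Int.floor_add_fract (x - y)
          push_cast
          linarith
        rw [hzy, Int.fract_intCast_add, Int.fract_eq_self.2 ⟨by linarith, hw⟩]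
      rw [W_eq, W_eq, hz]
      have a1 : min (Int.fract (x - y) / 2) (1 - Int.fract (x - y)) ≤ Int.fract (x - y) / 2 :=
        min_le_left _ _
      have a2 : min (Int.fract (x - y) / 2) (1 - Int.fract (x - y)) ≤ 1 - Int.fract (x - y) :=
        min_le_right _ _
      exact le_min (by linarith) (by linarith)
    · have h1 : W y x ≤ 1 - Int.fract (x - y) := min_le_right _ _
      have h2 := W_nonneg y z
      linarith

/-- Slopes of `W` are ≤ 1/2 : `W y x - (x - z) / 2 ≤ W y z` for `z ≤ x`. -/
lemma W_L2 {y x z : ℝ} (h : z ≤ x) : W y x - (x - z) / 2 ≤ W y z := by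
  rcases le_or_gt (2 / 3) (x - z) with hd | hd
  · have h1 := W_le y x
    have h2 := W_nonneg y z
    linarith
  · have ht0 := Int.fract_nonneg (x - y)
    have ht1 := Int.fract_lt_one (x - y)
    rcases le_or_gt 0 (Int.fract (x - y) - (x - z)) with hw | hw
    · have hz : Int.fract (z - y) = Int.fract (x - y) - (x - z) := by
        have hzy : z - y = ((⌊x - y⌋ : ℤ) : ℝ) + (Int.fract (x - y) - (x - z)) := by
          have := Int.floor_add_fract (x - y)
          push_cast
          linarith
        rw [hzy, Int.fract_intCast_add, Int.fract_eq_self.2 ⟨hw, by linarith⟩]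
      rw [W_eq, W_eq, hz]
      have a1 : min (Int.fract (x - y) / 2) (1 - Int.fract (x - y)) ≤ Int.fract (x - y) / 2 :=
        min_le_left _ _
      have a2 : min (Int.fract (x - y) / 2) (1 - Int.fract (x - y)) ≤ 1 - Int.fract (x - y) :=
        min_le_right _ _
      exact le_min (by linarith) (by linarith)
    · have h1 : W y x ≤ Int.fract (x - y) / 2 := min_le_left _ _
      have h2 := W_nonneg y z
      linarith

lemma W_continuous (y : ℝ) : Continuous (W y) := by
  have : LipschitzWith 1 (W y) := by
    rw [lipschitzWith_iff_dist_le_mul]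
    intro a b
    rw [Real.dist_eq, Real.dist_eq, NNReal.coe_one, one_mul]
    rcases le_total a b with h | h
    · have h1 := W_L1 (y := y) h
      have h2 := W_L2 (y := y) (x := b) (z := a) h
      have hab : |a - b| = b - a := by rw [abs_sub_comm, abs_of_nonneg (by linarith)]
      rw [hab, abs_le]
      constructor <;> linarith
    · have h1 := W_L1 (y := y) h
      have h2 := W_L2 (y := y) (x := a) (z := b) h
      have hab : |a - b| = a - b := abs_of_nonneg (by linarith)
      rw [hab, abs_le]
      constructor <;> linarith
  exact this.continuous

lemma W_periodic (y : ℝ) : Function.Periodic (W y) 1 := by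
  intro x
  rw [W_eq, W_eq]
  have : x + 1 - y = (x - y) + ((1 : ℤ) : ℝ) := by push_cast; ring
  rw [this, Int.fract_add_intCast]

lemma W_viscSub {s : ℝ} (hs : 0 ≤ s) (y : ℝ) :
    ViscSub1 (fun x' _ p => Fk |3 / 2 + p| - Vs s x' - 1) (W y) := by
  intro φ hφ x₀ hmax
  have hd : HasDerivAt φ (deriv φ x₀) x₀ :=
    ((hφ.differentiable one_ne_zero) x₀).hasDerivAt
  have hev : ∀ᶠ x in 𝓝 x₀, W y x - W y x₀ ≤ φ x - φ x₀ := by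
    filter_upwards [hmax] with x hx
    simp only [Pi.sub_apply] at hx
    linarith
  have hge : -1 ≤ deriv φ x₀ := by
    apply deriv_ge_right φ x₀ _ _ hd
    filter_upwards [hev] with x hx hlt
    have := W_L1 (y := y) (x := x₀) (z := x) hlt.le
    nlinarith
  have hle : deriv φ x₀ ≤ 1 / 2 := by
    apply deriv_le_left φ x₀ _ _ hd
    filter_upwards [hev] with x hx hlt
    have := W_L2 (y := y) (x := x₀) (z := x) hlt.le
    nlinarith
  have hF : Fk |3 / 2 + deriv φ x₀| ≤ 1 := by
    rw [abs_of_nonneg (by linarith)]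
    unfold Fk
    split_ifs <;> linarith
  have hV := Vs_nonneg hs x₀
  simp only
  linarith

/-- Any continuous periodic viscosity subsolution grows at most linearly: bound 1. -/
lemma sub_bound {s : ℝ} (hs : 0 ≤ s) (hs' : s ≤ 1 / 5) (y : ℝ) {v : ℝ → ℝ}
    (hc : Continuous v) (hp : Function.Periodic v 1)
    (hv : ViscSub1 (fun x' _ p => Fk |3 / 2 + p| - Vs s x' - 1) v)
    (x : ℝ) : v x - v y ≤ 1 := by
  have key : ∀ b ∈ Icc y (y + 1), v b ≤ v y + (b - y) := by
    intro b hb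
    by_contra hcon
    push_neg at hcon
    have hgc : ContinuousOn (v - fun z => z - y) (Icc y (y + 1)) :=
      (hc.sub (continuous_id.sub continuous_const)).continuousOn
    obtain ⟨x₀, hx₀m, hx₀⟩ :=
      isCompact_Icc.exists_isMaxOn (nonempty_Icc.2 (by linarith)) hgc
    have hgb : (v - fun z => z - y) b ≤ (v - fun z => z - y) x₀ := hx₀ hb
    simp only [Pi.sub_apply] at hgb
    have hgy : v y < v x₀ - (x₀ - y) := by linarith
    have hvy1 : v (y + 1) = v y := hp y
    have h1 : y < x₀ := by
      rcases eq_or_lt_of_le hx₀m.1 with h | h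
      · exfalso; rw [← h] at hgy; linarith
      · exact h
    have h2 : x₀ < y + 1 := by
      rcases lt_or_eq_of_le hx₀m.2 with h | h
      · exact h
      · exfalso; rw [h] at hgy; rw [hvy1] at hgy; linarith
    have hloc : IsLocalMax (v - fun z => z - y) x₀ := by
      filter_upwards [Icc_mem_nhds h1 h2] with z hz
      exact hx₀ hz
    have hφ : ContDiff ℝ 1 (fun z : ℝ => z - y) := contDiff_id.sub contDiff_const
    have hsub := hv _ hφ x₀ hloc
    have hder : deriv (fun z : ℝ => z - y) x₀ = 1 := by
      simp [deriv_sub_const]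
    rw [hder] at hsub
    simp only at hsub
    have hF : Fk |3 / 2 + 1| = 3 / 2 := by
      rw [abs_of_nonneg (by norm_num)]
      unfold Fk
      norm_num
    rw [hF] at hsub
    have := Vs_le hs x₀
    linarith
  have hfr0 := Int.fract_nonneg (x - y)
  have hfr1 := Int.fract_lt_one (x - y)
  have hb : v x = v (y + Int.fract (x - y)) := by
    have hper := (hp.int_mul ⌊x - y⌋) (y + Int.fract (x - y))
    have hx : (y + Int.fract (x - y)) + (⌊x - y⌋ : ℤ) * 1 = x := by
      have := Int.floor_add_fract (x - y)
      push_cast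
      linarith
    rw [hx] at hper
    exact hper
  have := key (y + Int.fract (x - y)) ⟨by linarith, by linarith⟩
  rw [hb]
  linarith

lemma maxSub_bdd (s y x : ℝ) (hs : 0 ≤ s) (hs' : s ≤ 1 / 5) :
    BddAbove {t : ℝ | ∃ w : ℝ → ℝ, Continuous w ∧ Function.Periodic w 1 ∧
      ViscSub1 (fun x' _ p => Fk |3 / 2 + p| - Vs s x' - 1) w ∧ t = w x - w y} := by
  refine ⟨1, fun t ht => ?_⟩
  obtain ⟨v, hc, hp, hv, rfl⟩ := ht
  exact sub_bound hs hs' y hc hp hv x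

lemma W_mem (s y x : ℝ) (hs : 0 ≤ s) :
    W y x - W y y ∈ {t : ℝ | ∃ w : ℝ → ℝ, Continuous w ∧ Function.Periodic w 1 ∧
      ViscSub1 (fun x' _ p => Fk |3 / 2 + p| - Vs s x' - 1) w ∧ t = w x - w y} :=
  ⟨W y, W_continuous y, W_periodic y, W_viscSub hs y, rfl⟩

lemma maxSub_lower (s y x : ℝ) (hs : 0 ≤ s) (hs' : s ≤ 1 / 5) :
    W y x ≤ maxSub s y x := by
  have h := le_csSup (maxSub_bdd s y x hs hs') (W_mem s y x hs)
  rw [W_self y, sub_zero] at h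
  exact h

lemma maxSub_self (s y : ℝ) (hs : 0 ≤ s) : maxSub s y y = 0 := by
  unfold maxSub
  have hset : {t : ℝ | ∃ w : ℝ → ℝ, Continuous w ∧ Function.Periodic w 1 ∧
      ViscSub1 (fun x' _ p => Fk |3 / 2 + p| - Vs s x' - 1) w ∧ t = w y - w y} = {0} := by
    ext t
    simp only [mem_setOf_eq, mem_singleton_iff]
    constructor
    · rintro ⟨w, _, _, _, rfl⟩; ring
    · rintro rfl
      exact ⟨W y, W_continuous y, W_periodic y, W_viscSub hs y, by ring⟩
  rw [hset, csSup_singleton]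

end Stmt10Aux

open Stmt10Aux
theorem stmt10 (s : ℝ) (hs : 0 < s) (hs' : s ≤ 1 / 5) (y : ℝ) :
    ¬ ViscSuper1 (fun x _ p => Fk |3 / 2 + p| - Vs s x - 1) (fun x => maxSub s y x) ∧
    ∃ φ : ℝ → ℝ, ContDiff ℝ 1 φ ∧ IsLocalMin ((fun x => maxSub s y x) - φ) y ∧
      Fk |3 / 2 + deriv φ y| - Vs s y - 1 < 0 := by
  have hs0 : (0 : ℝ) ≤ s := hs.le
  set φ : ℝ → ℝ := fun x => y - x with hφdef
  have hφ : ContDiff ℝ 1 φ := contDiff_const.sub contDiff_id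
  have hder : deriv φ y = -1 := by
    have : HasDerivAt φ (-1) y := by
      simpa using (hasDerivAt_id y).const_sub y
    exact this.deriv
  have hmin : IsLocalMin ((fun x => maxSub s y x) - φ) y := by
    have hne : Ioi (y - 1 / 3) ∈ 𝓝 y := Ioi_mem_nhds (by linarith)
    filter_upwards [hne] with x hx
    have hx' : y - 1 / 3 < x := hx
    simp only [Pi.sub_apply, hφdef]
    rw [maxSub_self s y hs0]
    have hlow := maxSub_lower s y x hs0 hs'
    have hWx : y - x ≤ W y x := by
      rcases le_or_gt y x with h | h
      · have := W_nonneg y x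
        linarith
      · have hf : Int.fract (x - y) = x - y + 1 := by
          have h1 : x - y = (x - y + 1) + ((-1 : ℤ) : ℝ) := by push_cast; ring
          conv_lhs => rw [h1]
          rw [Int.fract_add_intCast, Int.fract_eq_self.2 ⟨by linarith, by linarith⟩]
        rw [W_eq, hf]
        exact le_min (by linarith) (by linarith)
    linarith
  have hF : Fk |3 / 2 + deriv φ y| = 1 / 2 := by
    rw [hder]
    rw [show |(3 : ℝ) / 2 + -1| = 1 / 2 by rw [abs_of_nonneg] <;> norm_num]
    unfold Fk
    norm_num
  have hV := Vs_nonneg hs0 y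
  constructor
  · intro h
    have := h φ hφ y hmin
    simp only at this
    rw [hF] at this
    linarith
  · exact ⟨φ, hφ, hmin, by rw [hF]; linarith⟩
end
end
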